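/- arXiv:math/9706221 — 4 statements merged into one kernel-verified Lean document; each statement's English description precedes it below -/
import Mathlib

section
/- Let 1 ≤ p < q ≤ ∞ and let K be a bounded linear operator from L^p(ℝ) to L^q(ℝ) given by integration against a bounded measurable kernel k(λ,x) on compactly supported bounded functions, i.e. (Kf)(λ) = ∫₀^∞ k(λ,x) f(x) dx. Then the maximal operator M_K f(λ) = sup_{N>0} |∫₀^N k(λ,x) f(x) dx| is also bounded from L^p to L^q: there is a constant C_q such that ‖M_K f‖_q ≤ C_q ‖f‖_p for every f ∈ L^p. -/
open MeasureTheory Set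
open scoped ENNReal NNReal

private lemma ck_restrict_eq {E : Type*} [NormedAddCommGroup E] [NormedSpace ℝ E]
    (F : ℝ → E) {s t : Set ℝ} (hs : MeasurableSet s) (hst : s ⊆ t) :
    ∫ x in s, F x ∂((volume : Measure ℝ).restrict t) = ∫ x in s, F x := by
  rw [Measure.restrict_restrict hs, inter_eq_self_of_subset_left hst]

private lemma ck_iSup_rpow {r : ℝ} (hr : 0 < r) (x : ℕ → ℝ≥0∞) :
    (⨆ n, x n) ^ r = ⨆ n, x n ^ r := by
  have h := (ENNReal.orderIsoRpow r hr).map_iSup x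
  simp only [ENNReal.orderIsoRpow_apply] at h
  exact h

private lemma ck_minkowski_tsum {α : Type*} [MeasurableSpace α] {μ : Measure α}
    {g : ℕ → α → ℝ≥0∞} (hg : ∀ j, Measurable (g j)) {r : ℝ} (hr : 1 ≤ r) :
    (∫⁻ a, (∑' j, g j a) ^ r ∂μ) ^ (1/r) ≤ ∑' j, (∫⁻ a, g j a ^ r ∂μ) ^ (1/r) := by
  have hr0 : 0 < r := lt_of_lt_of_le one_pos hr
  have hr0' : 0 < 1/r := by positivity
  -- partial sums
  have hfin : ∀ n : ℕ, (∫⁻ a, (∑ j ∈ Finset.range n, g j a) ^ r ∂μ) ^ (1/r)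
      ≤ ∑ j ∈ Finset.range n, (∫⁻ a, g j a ^ r ∂μ) ^ (1/r) := by
    intro n
    induction n with
    | zero =>
      have h0 : (∫⁻ a, (∑ j ∈ Finset.range 0, g j a) ^ r ∂μ) = 0 := by
        simp only [Finset.range_zero, Finset.sum_empty]
        simp [ENNReal.zero_rpow_of_pos hr0]
      rw [h0, ENNReal.zero_rpow_of_pos hr0', Finset.range_zero, Finset.sum_empty]
    | succ n ih =>
      have h1 : (∫⁻ a, (∑ j ∈ Finset.range (n+1), g j a) ^ r ∂μ) ^ (1/r)
          = (∫⁻ a, (((fun a => ∑ j ∈ Finset.range n, g j a) + g n) a) ^ r ∂μ) ^ (1/r) := by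
        congr 1
        apply lintegral_congr
        intro a
        simp [Finset.sum_range_succ]
      rw [h1]
      refine le_trans (ENNReal.lintegral_Lp_add_le ?_ ?_ hr) ?_
      · exact (Finset.measurable_sum _ fun j _ => hg j).aemeasurable
      · exact (hg n).aemeasurable
      · rw [Finset.sum_range_succ]
        exact add_le_add ih le_rfl
  have hmono : Monotone (fun n : ℕ => fun a => ∑ j ∈ Finset.range n, g j a) := by
    intro a b hab
    intro x
    exact Finset.sum_le_sum_of_subset (Finset.range_subset_range.2 hab)
  calc (∫⁻ a, (∑' j, g j a) ^ r ∂μ) ^ (1/r)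
      = (∫⁻ a, (⨆ n, ∑ j ∈ Finset.range n, g j a) ^ r ∂μ) ^ (1/r) := by
        congr 1; apply lintegral_congr; intro a; rw [ENNReal.tsum_eq_iSup_nat]
    _ = (∫⁻ a, ⨆ n, (∑ j ∈ Finset.range n, g j a) ^ r ∂μ) ^ (1/r) := by
        congr 1; apply lintegral_congr; intro a; exact ck_iSup_rpow hr0 _
    _ = (⨆ n, ∫⁻ a, (∑ j ∈ Finset.range n, g j a) ^ r ∂μ) ^ (1/r) := by
        congr 1
        apply lintegral_iSup
        · intro n; fun_prop (disch := skip)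
        · intro a b hab x
          exact ENNReal.rpow_le_rpow (hmono hab x) hr0.le
    _ = ⨆ n, (∫⁻ a, (∑ j ∈ Finset.range n, g j a) ^ r ∂μ) ^ (1/r) := ck_iSup_rpow hr0' _
    _ ≤ ⨆ n, ∑ j ∈ Finset.range n, (∫⁻ a, g j a ^ r ∂μ) ^ (1/r) := iSup_mono hfin
    _ ≤ ∑' j, (∫⁻ a, g j a ^ r ∂μ) ^ (1/r) := iSup_le fun n => ENNReal.sum_le_tsum _

private lemma ck_essSup_tsum_le {α : Type*} [MeasurableSpace α] {μ : Measure α}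
    (g : ℕ → α → ℝ≥0∞) :
    essSup (fun x => ∑' j, g j x) μ ≤ ∑' j, essSup (g j) μ := by
  have h : ∀ᵐ x ∂μ, ∀ j, g j x ≤ essSup (g j) μ :=
    (ae_all_iff).2 fun j => ENNReal.ae_le_essSup (g j)
  refine essSup_le_of_ae_le _ (h.mono fun x hx => ?_)
  exact ENNReal.tsum_le_tsum fun j => hx j

private lemma ck_essSup_iSup_le {α : Type*} [MeasurableSpace α] {μ : Measure α}
    {ι : Type*} [Countable ι] (g : ι → α → ℝ≥0∞) :
    essSup (fun x => ⨆ i, g i x) μ ≤ ⨆ i, essSup (g i) μ := by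
  have h : ∀ᵐ x ∂μ, ∀ i, g i x ≤ essSup (g i) μ :=
    (ae_all_iff).2 fun i => ENNReal.ae_le_essSup (g i)
  refine essSup_le_of_ae_le _ (h.mono fun x hx => ?_)
  exact iSup_mono fun i => hx i

set_option maxHeartbeats 2000000 in
/-- If `K f (λ) = ∫₀^∞ k(λ,x) f(x) dx` is a bounded operator from
`L^p` to `L^q`, `1 ≤ p < q ≤ ∞`, with bounded measurable kernel, then the maximal
operator `M_K f (λ) = sup_N |∫₀^N k(λ,x) f(x) dx|` is also bounded `L^p → L^q`. -/
theorem stmt0 (p q : ℝ≥0∞) (hp : 1 ≤ p) (hpq : p < q)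
    (k : ℝ → ℝ → ℂ) (hk : Measurable (Function.uncurry k))
    (B : ℝ) (hkB : ∀ l x, ‖k l x‖ ≤ B)
    (C : ℝ≥0∞) (hC : C < ⊤)
    (hK : ∀ f : ℝ → ℂ, MemLp f p (volume.restrict (Ioi 0)) →
      eLpNorm (fun l => ∫ x in Ioi (0:ℝ), k l x * f x) q volume
        ≤ C * eLpNorm f p (volume.restrict (Ioi 0))) :
    ∃ Cq : ℝ≥0∞, Cq < ⊤ ∧ ∀ f : ℝ → ℂ, MemLp f p (volume.restrict (Ioi 0)) →
      eLpNorm (fun l => ⨆ N : ℝ, ‖∫ x in Ioc (0:ℝ) N, k l x * f x‖) q volume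
        ≤ Cq * eLpNorm f p (volume.restrict (Ioi 0)) := by
  classical
  -- exponent bookkeeping
  have hp0 : p ≠ 0 := (lt_of_lt_of_le zero_lt_one hp).ne'
  have hptop : p ≠ ⊤ := hpq.ne_top
  have hq0 : q ≠ 0 := (lt_of_lt_of_le zero_lt_one (hp.trans hpq.le)).ne'
  set pr : ℝ := p.toReal with hprdef
  have hpr1 : (1:ℝ) ≤ pr := by
    have := ENNReal.toReal_mono hptop hp
    simpa using this
  have hpr0 : (0:ℝ) < pr := lt_of_lt_of_le zero_lt_one hpr1
  set qr : ℝ := q.toReal with hqrdef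
  set δ : ℝ := 1/pr - 1/qr with hδdef
  have hδ : 0 < δ := by
    rcases eq_or_ne q ⊤ with hq | hq
    · rw [hδdef, hqrdef, hq]
      simp [ENNReal.toReal_top]
      positivity
    · have h1 : pr < qr := ENNReal.toReal_strict_mono hq hpq
      have h2 : (0:ℝ) < qr := lt_trans hpr0 h1
      rw [hδdef]
      have := one_div_lt_one_div_of_lt hpr0 h1
      linarith
  set r : ℝ≥0∞ := (2:ℝ≥0∞) ^ (-δ) with hrdef
  have hr1 : r < 1 := ENNReal.rpow_lt_one_of_one_lt_of_neg (by norm_num) (neg_neg_iff_pos.2 hδ)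
  set S : ℝ≥0∞ := ∑' j : ℕ, r ^ j with hSdef
  have hStop : S < ⊤ := by
    rw [hSdef, ENNReal.tsum_geometric]
    exact ENNReal.inv_lt_top.2 (tsub_pos_iff_lt.2 hr1)
  have h2ne0 : (2:ℝ≥0∞) ≠ 0 := by norm_num
  have h2netop : (2:ℝ≥0∞) ≠ ⊤ := by norm_num
  refine ⟨C * S, ENNReal.mul_lt_top hC hStop, ?_⟩
  intro f hf
  -- replace f by a strongly measurable representative g
  obtain ⟨g, hgm, hfg⟩ : ∃ g : ℝ → ℂ, StronglyMeasurable g ∧ f =ᵐ[volume.restrict (Ioi 0)] g :=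
    ⟨hf.aestronglyMeasurable.mk f, hf.aestronglyMeasurable.stronglyMeasurable_mk,
      hf.aestronglyMeasurable.ae_eq_mk⟩
  have hgmem : MemLp g p (volume.restrict (Ioi 0)) := hf.ae_eq hfg
  have hinteq : ∀ (l N : ℝ), ∫ x in Ioc (0:ℝ) N, k l x * f x = ∫ x in Ioc (0:ℝ) N, k l x * g x := by
    intro l N
    rw [← ck_restrict_eq (fun x => k l x * f x) measurableSet_Ioc Ioc_subset_Ioi_self,
        ← ck_restrict_eq (fun x => k l x * g x) measurableSet_Ioc Ioc_subset_Ioi_self]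
    apply integral_congr_ae
    have : f =ᵐ[(volume.restrict (Ioi (0:ℝ))).restrict (Ioc 0 N)] g := ae_restrict_of_ae hfg
    filter_upwards [this] with x hx
    rw [hx]
  rw [eLpNorm_congr_ae hfg,
    show (fun l => ⨆ N : ℝ, ‖∫ x in Ioc (0:ℝ) N, k l x * f x‖)
        = fun l => ⨆ N : ℝ, ‖∫ x in Ioc (0:ℝ) N, k l x * g x‖ from
      funext fun l => by simp_rw [hinteq l]]
  clear hinteq hfg hf f
  -- mass distribution setup
  set μ0 : Measure ℝ := volume.restrict (Ioi 0) with hμ0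
  set G : ℝ → ℝ := fun x => ‖g x‖ ^ pr with hGdef
  have hGnn : ∀ x, 0 ≤ G x := fun x => Real.rpow_nonneg (norm_nonneg _) _
  have hGint : Integrable G μ0 := hgmem.integrable_norm_rpow hp0 hptop
  have hGint' : IntegrableOn G (Ioi 0) volume := hGint
  set T : ℝ := ∫ x in Ioi (0:ℝ), G x with hTdef
  have hT0 : 0 ≤ T := setIntegral_nonneg measurableSet_Ioi (fun x _ => hGnn x)
  set H : ℝ → ℝ := fun t => ∫ x in Ioc (0:ℝ) t, G x with hHdef
  have hHint : ∀ t, IntegrableOn G (Ioc 0 t) volume :=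
    fun t => hGint'.mono_set Ioc_subset_Ioi_self
  have hHnn : ∀ t, 0 ≤ H t := fun t => setIntegral_nonneg measurableSet_Ioc fun x _ => hGnn x
  have hHmono : Monotone H := by
    intro a b hab
    exact setIntegral_mono_set (hHint b) (Filter.Eventually.of_forall hGnn)
      (HasSubset.Subset.eventuallyLE (Ioc_subset_Ioc_right hab))
  have hHleT : ∀ t, H t ≤ T := fun t =>
    setIntegral_mono_set hGint' (Filter.Eventually.of_forall hGnn)
      (HasSubset.Subset.eventuallyLE Ioc_subset_Ioi_self)
  have hHcont : Continuous H := by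
    have heq : H = fun t => ∫ x in (0:ℝ)..t, G x ∂μ0 := by
      funext t
      rcases le_or_gt 0 t with h | h
      · rw [intervalIntegral.integral_of_le h,
          ck_restrict_eq G measurableSet_Ioc Ioc_subset_Ioi_self]
      · rw [intervalIntegral.integral_of_ge h.le]
        have h1 : Ioc (0:ℝ) t = ∅ := Ioc_eq_empty (by exact fun hc => absurd hc (not_lt.2 h.le))
        have h2 : ∫ x in Ioc t (0:ℝ), G x ∂μ0 = 0 := by
          rw [hμ0, Measure.restrict_restrict measurableSet_Ioc]
          have : Ioc t (0:ℝ) ∩ Ioi 0 = ∅ := by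
            ext x
            simp only [mem_inter_iff, mem_Ioc, mem_Ioi, mem_empty_iff_false, iff_false]
            rintro ⟨⟨_, h2⟩, h3⟩
            linarith
          rw [this]
          simp
        rw [h2, hHdef]
        simp only
        rw [h1]
        simp
    rw [heq]
    exact intervalIntegral.continuous_primitive (fun a b => hGint.intervalIntegrable) 0
  have hHadd : ∀ {u v : ℝ}, 0 ≤ u → u ≤ v → H v = H u + ∫ x in Ioc u v, G x := by
    intro u v hu huv
    have hsub : Ioc u v ⊆ Ioi (0:ℝ) := fun x hx => lt_of_le_of_lt hu hx.1
    rw [hHdef]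
    simp only
    rw [← Ioc_union_Ioc_eq_Ioc hu huv,
      setIntegral_union (Ioc_disjoint_Ioc_of_le le_rfl) measurableSet_Ioc (hHint u) (hGint'.mono_set hsub)]
  have hHtendT : Filter.Tendsto (fun n : ℕ => H n) Filter.atTop (nhds T) := by
    have hU : ⋃ n : ℕ, Ioc (0:ℝ) n = Ioi 0 := by
      ext x
      simp only [mem_iUnion, mem_Ioc, mem_Ioi]
      constructor
      · rintro ⟨n, h1, _⟩; exact h1
      · intro hx
        obtain ⟨n, hn⟩ := exists_nat_gt x
        exact ⟨n, hx, hn.le⟩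
    have := tendsto_setIntegral_of_monotone (fun n : ℕ => measurableSet_Ioc)
      (fun a b hab => Ioc_subset_Ioc_right (Nat.cast_le.2 hab)) (hU ▸ hGint')
    rwa [hU] at this
  -- mass bound for preimages of intervals
  have massbd : ∀ a b : ℝ, a ≤ b → ∫ x in Ioi 0 ∩ H ⁻¹' Ico a b, G x ∂μ0 ≤ b - a := by
    intro a b hab
    set Sab := Ioi (0:ℝ) ∩ H ⁻¹' Ico a b with hSab
    rcases eq_empty_or_nonempty Sab with hS | hS
    · rw [hS]
      simp only [Measure.restrict_empty, integral_zero_measure]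
      linarith
    have hSsub : Sab ⊆ Ioi 0 := inter_subset_left
    have hbb : BddBelow Sab := ⟨0, fun x hx => le_of_lt (hSsub hx)⟩
    have hu0 : 0 ≤ sInf Sab := le_csInf hS fun x hx => le_of_lt (hSsub hx)
    have hHua : a ≤ H (sInf Sab) := by
      have h1 : sInf Sab ∈ closure Sab := csInf_mem_closure hS hbb
      have h2 : closure Sab ⊆ H ⁻¹' Ici a :=
        closure_minimal (fun x hx => hx.2.1) ((isClosed_Ici).preimage hHcont)
      exact h2 h1
    by_cases hba : BddAbove Sab
    · have hHvb : H (sSup Sab) ≤ b := by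
        have h1 : sSup Sab ∈ closure Sab := csSup_mem_closure hS hba
        have h2 : closure Sab ⊆ H ⁻¹' Iic b :=
          closure_minimal (fun x hx => le_of_lt hx.2.2) ((isClosed_Iic).preimage hHcont)
        exact h2 h1
      have hsub : Sab ⊆ Icc (sInf Sab) (sSup Sab) := fun x hx => ⟨csInf_le hbb hx, le_csSup hba hx⟩
      have huv : sInf Sab ≤ sSup Sab := csInf_le_csSup hS hbb hba
      have hIocsub : Ioc (sInf Sab) (sSup Sab) ⊆ Ioi (0:ℝ) := fun x hx => lt_of_le_of_lt hu0 hx.1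
      calc ∫ x in Sab, G x ∂μ0 ≤ ∫ x in Icc (sInf Sab) (sSup Sab), G x ∂μ0 :=
            setIntegral_mono_set hGint.integrableOn (Filter.Eventually.of_forall hGnn)
              (HasSubset.Subset.eventuallyLE hsub)
        _ = ∫ x in Ioc (sInf Sab) (sSup Sab), G x ∂μ0 := integral_Icc_eq_integral_Ioc
        _ = ∫ x in Ioc (sInf Sab) (sSup Sab), G x := ck_restrict_eq G measurableSet_Ioc hIocsub
        _ = H (sSup Sab) - H (sInf Sab) := by
            have := hHadd hu0 huv
            linarith
        _ ≤ b - a := by linarith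
    · -- S unbounded above: then T ≤ b
      have hTb : T ≤ b := by
        refine le_of_tendsto hHtendT (Filter.Eventually.of_forall fun n => ?_)
        obtain ⟨x, hxS, hxn⟩ := not_bddAbove_iff.1 hba (n : ℝ)
        exact le_of_lt (lt_of_le_of_lt (hHmono hxn.le) hxS.2.2)
      have hcompl : ∫ x in Iic (sInf Sab), G x ∂μ0 + ∫ x in Ioi (sInf Sab), G x ∂μ0
          = ∫ x, G x ∂μ0 := by
        have := integral_add_compl (measurableSet_Iic (a := sInf Sab)) hGint
        rwa [compl_Iic] at this
      have hIic : ∫ x in Iic (sInf Sab), G x ∂μ0 = H (sInf Sab) := by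
        rw [hμ0, Measure.restrict_restrict measurableSet_Iic]
        have : Iic (sInf Sab) ∩ Ioi 0 = Ioc 0 (sInf Sab) := by
          ext x
          simp only [mem_inter_iff, mem_Iic, mem_Ioi, mem_Ioc]
          tauto
        rw [this, hHdef]
      have htot : ∫ x, G x ∂μ0 = T := by
        rw [hTdef, hμ0]
      calc ∫ x in Sab, G x ∂μ0 ≤ ∫ x in Ici (sInf Sab), G x ∂μ0 :=
            setIntegral_mono_set hGint.integrableOn (Filter.Eventually.of_forall hGnn)
              (HasSubset.Subset.eventuallyLE (fun x hx => csInf_le hbb hx))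
        _ = ∫ x in Ioi (sInf Sab), G x ∂μ0 := integral_Ici_eq_integral_Ioi
        _ = T - H (sInf Sab) := by
            rw [← htot, ← hcompl, hIic]
            ring
        _ ≤ b - a := by linarith
  -- degenerate case: T = 0
  rcases eq_or_lt_of_le hT0 with hTz | hTpos
  · have hG0 : G =ᵐ[μ0] 0 := by
      have htot' : ∫ x, G x ∂μ0 = T := by rw [hTdef, hμ0]
      have h1 : ∫ x, G x ∂μ0 = 0 := by rw [htot', ← hTz]
      exact (integral_eq_zero_iff_of_nonneg (fun x => hGnn x) hGint).1 h1
    have hg0 : g =ᵐ[μ0] 0 := by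
      filter_upwards [hG0] with x hx
      have hx' : ‖g x‖ ^ pr = 0 := hx
      have : ‖g x‖ = 0 := by
        by_contra hc
        have h2 : 0 < ‖g x‖ := lt_of_le_of_ne (norm_nonneg _) (Ne.symm hc)
        exact absurd hx' (ne_of_gt (Real.rpow_pos_of_pos h2 pr))
      simpa using this
    have hzero : ∀ (l N : ℝ), ∫ x in Ioc (0:ℝ) N, k l x * g x = 0 := by
      intro l N
      rw [← ck_restrict_eq (fun x => k l x * g x) measurableSet_Ioc Ioc_subset_Ioi_self]
      apply integral_eq_zero_of_ae
      filter_upwards [ae_restrict_of_ae hg0] with x hx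
      have hx' : g x = 0 := hx
      simp [hx']
    have : (fun l => ⨆ N : ℝ, ‖∫ x in Ioc (0:ℝ) N, k l x * g x‖) = fun _ => (0:ℝ) := by
      funext l
      simp_rw [hzero l]
      simp
    rw [this]
    simp
  -- main case: T > 0
  -- dyadic pieces
  set D : ℕ → ℕ → Set ℝ :=
    fun j i => Ioi 0 ∩ H ⁻¹' Ico (T * i / 2 ^ j) (T * (i + 1) / 2 ^ j) with hDdef
  have hDmeas : ∀ j i, MeasurableSet (D j i) :=
    fun j i => measurableSet_Ioi.inter (hHcont.measurable measurableSet_Ico)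
  have hDsub : ∀ j i, D j i ⊆ Ioi 0 := fun j i => inter_subset_left
  set e : ℕ → ℕ → ℝ → ℝ≥0∞ := fun j i l => (‖∫ x in D j i, k l x * g x‖₊ : ℝ≥0∞) with hedef
  set Gj : ℕ → ℝ → ℝ≥0∞ := fun j l => ⨆ i : Fin (2 ^ j), e j i l with hGjdef
  have hemeas : ∀ j i, Measurable (e j i) := by
    intro j i
    have h1 : StronglyMeasurable (fun l => ∫ x in D j i, k l x * g x) := by
      apply StronglyMeasurable.integral_prod_right'
        (f := fun z : ℝ × ℝ => k z.1 z.2 * g z.2) (ν := volume.restrict (D j i))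
      apply Measurable.stronglyMeasurable
      exact hk.mul (hgm.measurable.comp measurable_snd)
    exact h1.measurable.enorm
  have hGjmeas : ∀ j, Measurable (Gj j) := fun j => Measurable.iSup (fun i => hemeas j i)
  -- L^p norm of g
  set Ef : ℝ≥0∞ := eLpNorm g p μ0 with hEfdef
  have hEfeq : Ef = ENNReal.ofReal T ^ (1 / pr) := by
    rw [hEfdef, eLpNorm_eq_lintegral_rpow_enorm_toReal hp0 hptop]
    congr 1
    rw [hTdef, show ∫ x in Ioi (0:ℝ), G x = ∫ x, G x ∂μ0 from by rw [hμ0],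
      ofReal_integral_eq_lintegral_ofReal hGint (Filter.Eventually.of_forall hGnn)]
    apply lintegral_congr
    intro x
    rw [hGdef]
    simp only
    rw [← ENNReal.ofReal_rpow_of_nonneg (norm_nonneg _) hpr0.le, ofReal_norm]
  -- bound for each dyadic piece
  have hpiece : ∀ j i : ℕ, eLpNorm (fun l => ∫ x in D j i, k l x * g x) q volume
      ≤ C * Ef * (2:ℝ≥0∞) ^ (-(j:ℝ)/pr) := by
    intro j i
    have hmem : MemLp ((D j i).indicator g) p μ0 := hgmem.indicator (hDmeas j i)
    have h1 := hK _ hmem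
    have h2 : (fun l => ∫ x in Ioi (0:ℝ), k l x * (D j i).indicator g x)
        = fun l => ∫ x in D j i, k l x * g x := by
      funext l
      have hind : (fun x => k l x * (D j i).indicator g x)
          = (D j i).indicator (fun x => k l x * g x) := by
        funext x
        by_cases hx : x ∈ D j i <;>
          simp [Set.indicator_of_mem, Set.indicator_of_notMem, hx]
      rw [hind, integral_indicator (hDmeas j i)]
      exact ck_restrict_eq _ (hDmeas j i) (hDsub j i)
    rw [h2] at h1
    have h3 : eLpNorm ((D j i).indicator g) p μ0 ≤ Ef * (2:ℝ≥0∞) ^ (-(j:ℝ)/pr) := by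
      rw [eLpNorm_eq_lintegral_rpow_enorm_toReal hp0 hptop]
      have h4 : ∫⁻ x, (‖(D j i).indicator g x‖₊ : ℝ≥0∞) ^ pr ∂μ0
          = ∫⁻ x in D j i, (‖g x‖₊ : ℝ≥0∞) ^ pr ∂μ0 := by
        rw [← lintegral_indicator (hDmeas j i)]
        apply lintegral_congr
        intro x
        by_cases hx : x ∈ D j i <;>
          simp [hx, ENNReal.zero_rpow_of_pos hpr0]
      have h5 : ∫⁻ x in D j i, (‖g x‖₊ : ℝ≥0∞) ^ pr ∂μ0
          = ENNReal.ofReal (∫ x in D j i, G x ∂μ0) := by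
        rw [ofReal_integral_eq_lintegral_ofReal hGint.integrableOn
          (Filter.Eventually.of_forall hGnn)]
        apply lintegral_congr
        intro x
        rw [hGdef]
        simp only
        rw [← ENNReal.ofReal_rpow_of_nonneg (norm_nonneg _) hpr0.le, ofReal_norm, enorm_eq_nnnorm]
      have h6 : ∫ x in D j i, G x ∂μ0 ≤ T / 2 ^ j := by
        have hab : T * i / 2 ^ j ≤ T * (i + 1) / 2 ^ j := by
          apply div_le_div_of_nonneg_right ?_ (by positivity)
          push_cast
          nlinarith [hT0]
        have := massbd (T * i / 2 ^ j) (T * (i + 1) / 2 ^ j) hab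
        rw [hDdef]
        refine le_trans this (le_of_eq ?_)
        ring
      calc (∫⁻ x, (‖(D j i).indicator g x‖₊ : ℝ≥0∞) ^ pr ∂μ0) ^ (1/pr)
          = ENNReal.ofReal (∫ x in D j i, G x ∂μ0) ^ (1/pr) := by rw [h4, h5]
        _ ≤ ENNReal.ofReal (T / 2 ^ j) ^ (1/pr) :=
            ENNReal.rpow_le_rpow (ENNReal.ofReal_le_ofReal h6) (by positivity)
        _ = Ef * (2:ℝ≥0∞) ^ (-(j:ℝ)/pr) := by
            rw [hEfeq, div_eq_mul_inv, ENNReal.ofReal_mul hT0,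
              ENNReal.mul_rpow_of_nonneg _ _ (by positivity : (0:ℝ) ≤ 1/pr)]
            congr 1
            rw [ENNReal.ofReal_inv_of_pos (by positivity), ENNReal.ofReal_pow (by norm_num)]
            have h7 : ENNReal.ofReal 2 = (2:ℝ≥0∞) := by
              norm_num
            rw [h7, ← ENNReal.rpow_natCast 2 j, ← ENNReal.rpow_neg, ← ENNReal.rpow_mul]
            congr 1
            ring
    calc eLpNorm (fun l => ∫ x in D j i, k l x * g x) q volume
        ≤ C * eLpNorm ((D j i).indicator g) p μ0 := h1
      _ ≤ C * (Ef * (2:ℝ≥0∞) ^ (-(j:ℝ)/pr)) := mul_le_mul_right h3 C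
      _ = C * Ef * (2:ℝ≥0∞) ^ (-(j:ℝ)/pr) := (mul_assoc _ _ _).symm
  -- pointwise bound for truncated integrals
  have hpoint : ∀ l N : ℝ, (‖∫ x in Ioc (0:ℝ) N, k l x * g x‖₊ : ℝ≥0∞) ≤ ∑' j, Gj j l := by
    intro l N
    rcases le_or_gt N 0 with hN | hN
    · have : Ioc (0:ℝ) N = ∅ := Ioc_eq_empty (fun hc => absurd hc (not_lt.2 hN))
      rw [this]
      simp
    set s := H N with hsdef
    have hs0 : 0 ≤ s := hHnn N
    have hsT : s ≤ T := hHleT N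
    set m : ℕ → ℕ := fun j => ⌊2 ^ j * s / T⌋₊ with hmdef
    set c : ℕ → ℝ := fun j => Nat.casesOn j 0 (fun j' => T * m j' / 2 ^ j') with hcdef
    have hc0 : c 0 = 0 := rfl
    have hcsucc : ∀ j, c (j + 1) = T * m j / 2 ^ j := fun j => rfl
    have hmle : ∀ j, (m j : ℝ) ≤ 2 ^ j * s / T := fun j => Nat.floor_le (by positivity)
    have hcle : ∀ j, c j ≤ s := by
      intro j
      cases j with
      | zero => exact hs0
      | succ j' =>
        rw [hcsucc]
        calc T * m j' / 2 ^ j' ≤ T * (2 ^ j' * s / T) / 2 ^ j' := by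
              have := hmle j'
              gcongr
          _ = s := by field_simp
    have h2m : ∀ j, 2 * m j ≤ m (j + 1) := by
      intro j
      apply Nat.le_floor
      push_cast
      rw [pow_succ]
      calc (2:ℝ) * m j ≤ 2 * (2 ^ j * s / T) := by
            have := hmle j
            linarith
        _ = 2 ^ j * 2 * s / T := by ring
    have hcmono' : ∀ j, c j ≤ c (j + 1) := by
      intro j
      cases j with
      | zero =>
        rw [hc0, hcsucc]
        positivity
      | succ j' =>
        rw [hcsucc, hcsucc]
        have h1 := h2m j'
        calc T * m j' / 2 ^ j' = T * (2 * m j') / 2 ^ (j' + 1) := by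
              rw [pow_succ]; ring
          _ ≤ T * m (j' + 1) / 2 ^ (j' + 1) := by
              gcongr
              exact_mod_cast h1
    have hcmono : Monotone c := monotone_nat_of_le_succ hcmono'
    have hclose : ∀ x : ℝ, H x < s → ∃ j, H x < c j := by
      intro x hxs
      obtain ⟨j, hj⟩ : ∃ j : ℕ, T / 2 ^ j < s - H x := by
        obtain ⟨j, hj⟩ := pow_unbounded_of_one_lt (T / (s - H x)) (by norm_num : (1:ℝ) < 2)
        refine ⟨j, ?_⟩
        rw [div_lt_iff₀ (by positivity)]
        rw [div_lt_iff₀ (by linarith : (0:ℝ) < s - H x)] at hj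
        linarith [hj]
      refine ⟨j + 1, ?_⟩
      rw [hcsucc]
      have h1 : 2 ^ j * s / T - 1 < (m j : ℝ) := Nat.sub_one_lt_floor _
      have h2 : (0:ℝ) < 2 ^ j := by positivity
      calc H x < s - T / 2 ^ j := by linarith
        _ ≤ T * m j / 2 ^ j := by
            rw [le_div_iff₀ h2]
            have h4 : T * (2 ^ j * s / T - 1) < T * (m j : ℝ) := (mul_lt_mul_iff_right₀ hTpos).2 h1
            have h5 : T * (2 ^ j * s / T - 1) = 2 ^ j * s - T := by field_simp
            have h6 : (s - T / 2 ^ j) * 2 ^ j = 2 ^ j * s - T := by field_simp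
            rw [h6]
            linarith
    set A : ℕ → Set ℝ := fun j => Ioi 0 ∩ H ⁻¹' Ico (c j) (c (j + 1)) with hAdef
    have hAmeas : ∀ j, MeasurableSet (A j) :=
      fun j => measurableSet_Ioi.inter (hHcont.measurable measurableSet_Ico)
    have hAcover : ⋃ j, A j = Ioi 0 ∩ H ⁻¹' Iio s := by
      ext x
      simp only [hAdef, mem_iUnion, mem_inter_iff, mem_preimage, mem_Ico, mem_Iio, mem_Ioi]
      constructor
      · rintro ⟨j', hx0, _, h2⟩
        exact ⟨hx0, lt_of_lt_of_le h2 (hcle (j' + 1))⟩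
      · rintro ⟨hx0, hxs⟩
        have hex : ∃ j, H x < c j := hclose x hxs
        have hj0 : H x < c (Nat.find hex) := Nat.find_spec hex
        have hj0ne : Nat.find hex ≠ 0 := by
          intro hcontra
          rw [hcontra, hc0] at hj0
          exact absurd hj0 (not_lt.2 (hHnn x))
        obtain ⟨j1, hj1⟩ := Nat.exists_eq_succ_of_ne_zero hj0ne
        refine ⟨j1, hx0, ?_, ?_⟩
        · by_contra hcon
          push_neg at hcon
          exact Nat.find_min hex (by omega) hcon
        · have : c (Nat.find hex) = c (j1 + 1) := by rw [hj1]
          rw [← this]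
          exact hj0
    have hAdisj : Pairwise (Function.onFun Disjoint A) := by
      have key : ∀ {a b : ℕ}, a < b → Disjoint (A a) (A b) := by
        intro a b hab
        rw [Set.disjoint_left]
        rintro x ⟨_, _, h2⟩ ⟨_, h3, _⟩
        exact absurd (lt_of_lt_of_le h2 (hcmono (by omega : a + 1 ≤ b))) (not_lt.2 h3)
      intro a b hab
      rcases hab.lt_or_gt with h | h
      · exact key h
      · exact (key h).symm
    have hint : IntegrableOn (fun x => k l x * g x) (Ioc 0 N) volume := by
      haveI : IsFiniteMeasure (volume.restrict (Ioc (0:ℝ) N)) :=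
        ⟨by rw [Measure.restrict_apply_univ]; exact measure_Ioc_lt_top⟩
      have hgN : MemLp g p (volume.restrict (Ioc (0:ℝ) N)) :=
        hgmem.mono_measure (Measure.restrict_mono Ioc_subset_Ioi_self le_rfl)
      exact Integrable.bdd_mul (hgN.integrable hp)
        (Measurable.of_uncurry_left hk).aestronglyMeasurable (c := B) (Filter.Eventually.of_forall fun x => hkB l x)
    have hAsub : (Ioi 0 ∩ H ⁻¹' Iio s) ⊆ Ioc 0 N := by
      rintro x ⟨hx0, hxs⟩
      refine ⟨hx0, ?_⟩
      by_contra hcon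
      push_neg at hcon
      exact absurd (hHmono hcon.le) (not_le.2 hxs)
    have hintA : IntegrableOn (fun x => k l x * g x) (Ioi 0 ∩ H ⁻¹' Iio s) volume :=
      hint.mono_set hAsub
    -- step 1: the truncated integral localizes to {H < s}
    have hstep1 : ∫ x in Ioc (0:ℝ) N, k l x * g x
        = ∫ x in Ioi 0 ∩ H ⁻¹' Iio s, k l x * g x := by
      set A' := Ioi (0:ℝ) ∩ H ⁻¹' Iio s with hA'def
      set W := Ioc (0:ℝ) N \ A' with hWdef
      have hA'meas : MeasurableSet A' := measurableSet_Ioi.inter (hHcont.measurable measurableSet_Iio)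
      have hWmeas : MeasurableSet W := measurableSet_Ioc.diff hA'meas
      have hWsub : W ⊆ Ioi (0:ℝ) := fun x hx => hx.1.1
      have hsplit : ∫ x in Ioc (0:ℝ) N, k l x * g x
          = (∫ x in A', k l x * g x) + ∫ x in W, k l x * g x := by
        rw [← setIntegral_union disjoint_sdiff_self_right hWmeas (hint.mono_set hAsub)
          (hint.mono_set diff_subset), union_diff_cancel hAsub]
      have hWzeroG : ∫ x in W, G x ∂μ0 = 0 := by
        have hWsub2 : ∀ b', s < b' → W ⊆ Ioi 0 ∩ H ⁻¹' Ico s b' := by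
          intro b' hb' x hx
          obtain ⟨⟨hx1, hx2⟩, hx3⟩ := hx
          refine ⟨hx1, ?_, ?_⟩
          · by_contra hcon
            push_neg at hcon
            exact hx3 ⟨hx1, hcon⟩
          · exact lt_of_le_of_lt (hHmono hx2) hb'
        have hle : ∀ b', s < b' → ∫ x in W, G x ∂μ0 ≤ b' - s := by
          intro b' hb'
          refine le_trans (setIntegral_mono_set hGint.integrableOn
            (Filter.Eventually.of_forall hGnn)
            (HasSubset.Subset.eventuallyLE (hWsub2 b' hb'))) (massbd s b' hb'.le)
        have hge : 0 ≤ ∫ x in W, G x ∂μ0 := setIntegral_nonneg hWmeas (fun x _ => hGnn x)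
        by_contra hne
        have hpos : 0 < ∫ x in W, G x ∂μ0 := lt_of_le_of_ne hge (Ne.symm hne)
        have := hle (s + (∫ x in W, G x ∂μ0) / 2) (by linarith)
        linarith
      have hWg0 : ∀ᵐ x ∂(volume.restrict W), g x = 0 := by
        have h1 := (integral_eq_zero_iff_of_nonneg (fun x => hGnn x)
          ((hGint.integrableOn : IntegrableOn G W μ0))).1 hWzeroG
        rw [hμ0, Measure.restrict_restrict hWmeas, inter_eq_self_of_subset_left hWsub] at h1
        filter_upwards [h1] with x hx
        have hx' : ‖g x‖ ^ pr = 0 := hx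
        have : ‖g x‖ = 0 := by
          by_contra hc
          have h2 : 0 < ‖g x‖ := lt_of_le_of_ne (norm_nonneg _) (Ne.symm hc)
          exact absurd hx' (ne_of_gt (Real.rpow_pos_of_pos h2 pr))
        simpa using this
      have hWzero : ∫ x in W, k l x * g x = 0 := by
        apply integral_eq_zero_of_ae
        filter_upwards [hWg0] with x hx
        simp [hx]
      rw [hsplit, hWzero, add_zero]
    rw [hstep1]
    -- step 2: decompose into dyadic pieces
    have hsum : HasSum (fun j => ∫ x in A j, k l x * g x)
        (∫ x in Ioi 0 ∩ H ⁻¹' Iio s, k l x * g x) := by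
      have h1 := hasSum_integral_iUnion hAmeas hAdisj (hAcover ▸ hintA)
      rwa [hAcover] at h1
    have hsumnorm : Summable (fun j => ‖∫ x in A j, k l x * g x‖) := by
      have h1 : Summable (fun j => ∫ x in A j, ‖k l x * g x‖) :=
        (hasSum_integral_iUnion hAmeas hAdisj (hAcover ▸ hintA.norm)).summable
      apply Summable.of_nonneg_of_le (fun j => norm_nonneg _) (fun j => ?_) h1
      exact norm_integral_le_integral_norm _
    have henorm : (‖∫ x in Ioi 0 ∩ H ⁻¹' Iio s, k l x * g x‖₊ : ℝ≥0∞)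
        ≤ ∑' j, (‖∫ x in A j, k l x * g x‖₊ : ℝ≥0∞) := by
      rw [← hsum.tsum_eq]
      calc (‖∑' j, ∫ x in A j, k l x * g x‖₊ : ℝ≥0∞)
          = ENNReal.ofReal ‖∑' j, ∫ x in A j, k l x * g x‖ := (ofReal_norm _).symm
        _ ≤ ENNReal.ofReal (∑' j, ‖∫ x in A j, k l x * g x‖) :=
            ENNReal.ofReal_le_ofReal (norm_tsum_le_tsum_norm hsumnorm)
        _ = ∑' j, ENNReal.ofReal ‖∫ x in A j, k l x * g x‖ :=
            ENNReal.ofReal_tsum_of_nonneg (fun j => norm_nonneg _) hsumnorm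
        _ = ∑' j, (‖∫ x in A j, k l x * g x‖₊ : ℝ≥0∞) := by
            apply tsum_congr
            intro j
            rw [ofReal_norm, enorm_eq_nnnorm]
    refine le_trans henorm (ENNReal.tsum_le_tsum fun j => ?_)
    -- each piece is one of the dyadic sets (or empty)
    have hpieceid : A j = ∅ ∨ ∃ i, i < 2 ^ j ∧ A j = D j i := by
      cases j with
      | zero =>
        have hm0le : m 0 ≤ 1 := by
          have h1 : (2:ℝ) ^ 0 * s / T ≤ 1 := by
            rw [pow_zero, one_mul, div_le_one hTpos]
            exact hsT
          calc m 0 = ⌊2 ^ 0 * s / T⌋₊ := rfl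
            _ ≤ ⌊(1:ℝ)⌋₊ := Nat.floor_le_floor h1
            _ = 1 := Nat.floor_one
        rcases Nat.le_one_iff_eq_zero_or_eq_one.1 hm0le with hm0 | hm0
        · left
          have hc1 : c (0 + 1) = 0 := by rw [hcsucc, hm0]; norm_num
          show Ioi 0 ∩ H ⁻¹' Ico (c 0) (c (0 + 1)) = ∅
          rw [hc0, hc1, Ico_self]
          simp
        · right
          refine ⟨0, by norm_num, ?_⟩
          have e1 : c 0 = T * ((0:ℕ):ℝ) / 2 ^ 0 := by rw [hc0]; norm_num
          have e2 : c (0 + 1) = T * (((0:ℕ):ℝ) + 1) / 2 ^ 0 := by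
            rw [hcsucc, hm0]; norm_num
          show Ioi 0 ∩ H ⁻¹' Ico (c 0) (c (0 + 1))
              = Ioi 0 ∩ H ⁻¹' Ico (T * ((0:ℕ):ℝ) / 2 ^ 0) (T * (((0:ℕ):ℝ) + 1) / 2 ^ 0)
          rw [e1, e2]
      | succ j' =>
        have h2a := h2m j'
        have h2b : m (j' + 1) ≤ 2 * m j' + 1 := by
          have h1 : (2:ℝ) ^ (j' + 1) * s / T < 2 * m j' + 2 := by
            have h2 := Nat.lt_floor_add_one (2 ^ j' * s / T)
            rw [pow_succ]
            have h3 : (2:ℝ) ^ j' * 2 * s / T = 2 * (2 ^ j' * s / T) := by ring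
            rw [h3]
            push_cast
            linarith
          have h4 : m (j' + 1) < 2 * m j' + 2 := by
            rw [hmdef]
            simp only
            rw [Nat.floor_lt (by positivity)]
            push_cast
            linarith
          omega
        rcases eq_or_lt_of_le h2a with heq | hlt
        · left
          have hceq : c (j' + 1) = c (j' + 1 + 1) := by
            rw [hcsucc, hcsucc, ← heq]
            push_cast
            rw [pow_succ]
            ring
          show Ioi 0 ∩ H ⁻¹' Ico (c (j' + 1)) (c (j' + 1 + 1)) = ∅
          rw [hceq, Ico_self]
          simp
        · right
          have hb : m (j' + 1) = 2 * m j' + 1 := by omega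
          have hmub : m (j' + 1) ≤ 2 ^ (j' + 1) := by
            have h1 : (2:ℝ) ^ (j' + 1) * s / T ≤ ((2 ^ (j' + 1) : ℕ) : ℝ) := by
              push_cast
              calc (2:ℝ) ^ (j' + 1) * s / T ≤ 2 ^ (j' + 1) * T / T := by gcongr
                _ = 2 ^ (j' + 1) := by field_simp
            calc m (j' + 1) = ⌊(2:ℝ) ^ (j' + 1) * s / T⌋₊ := rfl
              _ ≤ ⌊((2 ^ (j' + 1) : ℕ) : ℝ)⌋₊ := Nat.floor_le_floor h1
              _ = 2 ^ (j' + 1) := Nat.floor_natCast _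
          refine ⟨2 * m j', by omega, ?_⟩
          have e1 : c (j' + 1) = T * ((2 * m j' : ℕ) : ℝ) / 2 ^ (j' + 1) := by
            rw [hcsucc]
            push_cast
            rw [pow_succ]
            ring
          have e2 : c (j' + 1 + 1) = T * (((2 * m j' : ℕ) : ℝ) + 1) / 2 ^ (j' + 1) := by
            rw [hcsucc, hb]
            push_cast
            ring
          show Ioi 0 ∩ H ⁻¹' Ico (c (j' + 1)) (c (j' + 1 + 1))
              = Ioi 0 ∩ H ⁻¹' Ico (T * ((2 * m j' : ℕ) : ℝ) / 2 ^ (j' + 1))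
                  (T * (((2 * m j' : ℕ) : ℝ) + 1) / 2 ^ (j' + 1))
          rw [e1, e2]
    rcases hpieceid with hempty | ⟨i, hilt, heq⟩
    · rw [hempty]
      simp
    · rw [heq]
      haveI : NeZero (2 ^ j) := ⟨pow_ne_zero j (by norm_num)⟩
      exact le_iSup (fun i : Fin (2 ^ j) => e j i l) ⟨i, hilt⟩
  -- maximal function bound
  have hMbd : ∀ l : ℝ, (‖(⨆ N : ℝ, ‖∫ x in Ioc (0:ℝ) N, k l x * g x‖)‖₊ : ℝ≥0∞)
      ≤ ∑' j, Gj j l := by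
    intro l
    rcases eq_or_ne (∑' j, Gj j l) ⊤ with hR | hR
    · rw [hR]; exact le_top
    have hbd : ∀ N : ℝ, ‖∫ x in Ioc (0:ℝ) N, k l x * g x‖ ≤ (∑' j, Gj j l).toReal := by
      intro N
      have h2 := ENNReal.toReal_mono hR (hpoint l N)
      simpa using h2
    have hsup : (⨆ N : ℝ, ‖∫ x in Ioc (0:ℝ) N, k l x * g x‖) ≤ (∑' j, Gj j l).toReal :=
      Real.iSup_le hbd ENNReal.toReal_nonneg
    have hsup0 : 0 ≤ ⨆ N : ℝ, ‖∫ x in Ioc (0:ℝ) N, k l x * g x‖ :=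
      Real.iSup_nonneg fun N => norm_nonneg _
    calc (‖(⨆ N : ℝ, ‖∫ x in Ioc (0:ℝ) N, k l x * g x‖)‖₊ : ℝ≥0∞)
        = ENNReal.ofReal (⨆ N : ℝ, ‖∫ x in Ioc (0:ℝ) N, k l x * g x‖) := by
          rw [← enorm_eq_nnnorm, ← ofReal_norm, Real.norm_of_nonneg hsup0]
      _ ≤ ENNReal.ofReal (∑' j, Gj j l).toReal := ENNReal.ofReal_le_ofReal hsup
      _ = ∑' j, Gj j l := ENNReal.ofReal_toReal hR
  -- geometric identity
  have hrj : ∀ j : ℕ, r ^ j = (2:ℝ≥0∞) ^ (-δ * (j:ℝ)) := by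
    intro j
    rw [hrdef, ← ENNReal.rpow_natCast ((2:ℝ≥0∞) ^ (-δ)) j, ← ENNReal.rpow_mul]
  have hkey : eLpNorm (fun l => ⨆ N : ℝ, ‖∫ x in Ioc (0:ℝ) N, k l x * g x‖) q volume
      ≤ ∑' j : ℕ, C * Ef * r ^ j := by
    rcases eq_or_ne q ⊤ with hqtop | hqtop
    · -- q = ∞
      have hqr00 : qr = 0 := by rw [hqrdef, hqtop]; simp
      rw [hqtop, eLpNorm_exponent_top]
      have h1 : eLpNormEssSup (fun l => ⨆ N : ℝ, ‖∫ x in Ioc (0:ℝ) N, k l x * g x‖) volume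
          = essSup (fun l => (‖(⨆ N : ℝ, ‖∫ x in Ioc (0:ℝ) N, k l x * g x‖)‖₊ : ℝ≥0∞)) volume :=
        rfl
      rw [h1]
      calc essSup (fun l => (‖(⨆ N : ℝ, ‖∫ x in Ioc (0:ℝ) N, k l x * g x‖)‖₊ : ℝ≥0∞)) volume
          ≤ essSup (fun l => ∑' j, Gj j l) volume :=
            essSup_mono_ae (Filter.Eventually.of_forall hMbd)
        _ ≤ ∑' j, essSup (Gj j) volume := ck_essSup_tsum_le _
        _ ≤ ∑' j : ℕ, C * Ef * r ^ j := by
            refine ENNReal.tsum_le_tsum fun j => ?_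
            have h2 : essSup (Gj j) volume ≤ ⨆ i : Fin (2 ^ j), essSup (fun l => e j (i:ℕ) l) volume :=
              ck_essSup_iSup_le _
            have h4 : (⨆ i : Fin (2 ^ j), essSup (fun l => e j (i:ℕ) l) volume)
                ≤ C * Ef * (2:ℝ≥0∞) ^ (-(j:ℝ)/pr) := by
              refine iSup_le fun i => ?_
              have h3 : essSup (fun l => e j (i:ℕ) l) volume
                  = eLpNorm (fun l => ∫ x in D j (i:ℕ), k l x * g x) ⊤ volume := by
                rw [eLpNorm_exponent_top]
                rfl
              rw [h3, ← hqtop]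
              exact hpiece j (i:ℕ)
            have h5 : C * Ef * (2:ℝ≥0∞) ^ (-(j:ℝ)/pr) = C * Ef * r ^ j := by
              rw [hrj j]
              congr 1
              rw [hδdef, hqr00]
              rw [div_zero]
              congr 1
              ring
            exact le_trans h2 (le_trans h4 (le_of_eq h5))
    · -- q < ∞
      have hqr1 : (1:ℝ) ≤ qr := by
        have h1 : (1:ℝ≥0∞).toReal ≤ q.toReal := ENNReal.toReal_mono hqtop (hp.trans hpq.le)
        simpa using h1
      have hqr0 : (0:ℝ) < qr := lt_of_lt_of_le zero_lt_one hqr1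
      rw [eLpNorm_eq_lintegral_rpow_enorm_toReal hq0 hqtop]
      rw [← hqrdef]
      calc (∫⁻ l, (‖(⨆ N : ℝ, ‖∫ x in Ioc (0:ℝ) N, k l x * g x‖)‖₊ : ℝ≥0∞) ^ qr ∂volume) ^ (1/qr)
          ≤ (∫⁻ l, (∑' j, Gj j l) ^ qr ∂volume) ^ (1/qr) := by
            apply ENNReal.rpow_le_rpow _ (by positivity)
            apply lintegral_mono
            intro l
            exact ENNReal.rpow_le_rpow (hMbd l) hqr0.le
        _ ≤ ∑' j, (∫⁻ l, Gj j l ^ qr ∂volume) ^ (1/qr) := ck_minkowski_tsum hGjmeas hqr1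
        _ ≤ ∑' j : ℕ, C * Ef * r ^ j := by
            refine ENNReal.tsum_le_tsum fun j => ?_
            haveI : NeZero (2 ^ j : ℕ) := ⟨pow_ne_zero j (by norm_num)⟩
            have hsum2 : ∫⁻ l, Gj j l ^ qr ∂volume
                ≤ (2 ^ j : ℝ≥0∞) * (C * Ef * (2:ℝ≥0∞) ^ (-(j:ℝ)/pr)) ^ qr := by
              have hGle : ∀ l, Gj j l ^ qr ≤ ∑ i : Fin (2 ^ j), e j (i:ℕ) l ^ qr := by
                intro l
                obtain ⟨i0, hi0⟩ := exists_eq_ciSup_of_finite (f := fun i : Fin (2 ^ j) => e j (i:ℕ) l)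
                have h4 : Gj j l = e j (i0:ℕ) l := by rw [hGjdef]; exact hi0.symm
                rw [h4]
                exact Finset.single_le_sum (f := fun i : Fin (2 ^ j) => e j (i:ℕ) l ^ qr)
                  (fun i _ => zero_le) (Finset.mem_univ i0)
              calc ∫⁻ l, Gj j l ^ qr ∂volume
                  ≤ ∫⁻ l, ∑ i : Fin (2 ^ j), e j (i:ℕ) l ^ qr ∂volume := lintegral_mono hGle
                _ = ∑ i : Fin (2 ^ j), ∫⁻ l, e j (i:ℕ) l ^ qr ∂volume := by
                    apply lintegral_finset_sum
                    intro i _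
                    have := hemeas j (i:ℕ)
                    fun_prop
                _ ≤ ∑ _i : Fin (2 ^ j), (C * Ef * (2:ℝ≥0∞) ^ (-(j:ℝ)/pr)) ^ qr := by
                    refine Finset.sum_le_sum fun i _ => ?_
                    have h2 : ∫⁻ l, e j (i:ℕ) l ^ qr ∂volume
                        = eLpNorm (fun l => ∫ x in D j (i:ℕ), k l x * g x) q volume ^ qr := by
                      rw [eLpNorm_eq_lintegral_rpow_enorm_toReal hq0 hqtop, ← ENNReal.rpow_mul,
                        one_div, inv_mul_cancel₀ (ne_of_gt hqr0), ENNReal.rpow_one]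
                      rfl
                    rw [h2]
                    exact ENNReal.rpow_le_rpow (hpiece j (i:ℕ)) hqr0.le
                _ = (2 ^ j : ℝ≥0∞) * (C * Ef * (2:ℝ≥0∞) ^ (-(j:ℝ)/pr)) ^ qr := by
                    rw [Finset.sum_const, Finset.card_univ, Fintype.card_fin, nsmul_eq_mul]
                    congr 1
                    push_cast
                    ring
            calc (∫⁻ l, Gj j l ^ qr ∂volume) ^ (1/qr)
                ≤ ((2 ^ j : ℝ≥0∞) * (C * Ef * (2:ℝ≥0∞) ^ (-(j:ℝ)/pr)) ^ qr) ^ (1/qr) :=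
                  ENNReal.rpow_le_rpow hsum2 (by positivity)
              _ = (2:ℝ≥0∞) ^ ((j:ℝ) / qr) * (C * Ef * (2:ℝ≥0∞) ^ (-(j:ℝ)/pr)) := by
                  rw [ENNReal.mul_rpow_of_nonneg _ _ (by positivity : (0:ℝ) ≤ 1/qr),
                    ← ENNReal.rpow_natCast (2:ℝ≥0∞) j, ← ENNReal.rpow_mul,
                    ← ENNReal.rpow_mul (C * Ef * (2:ℝ≥0∞) ^ (-(j:ℝ)/pr)) qr (1/qr),
                    mul_one_div, mul_one_div qr qr, div_self (ne_of_gt hqr0), ENNReal.rpow_one]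
              _ = C * Ef * r ^ j := by
                  rw [hrj j, mul_comm, mul_assoc]
                  congr 1
                  rw [← ENNReal.rpow_add _ _ h2ne0 h2netop]
                  congr 1
                  rw [hδdef]
                  ring
  refine le_trans hkey (le_of_eq ?_)
  rw [show (fun j : ℕ => C * Ef * r ^ j) = fun j : ℕ => (C * Ef) * r ^ j from rfl,
    ENNReal.tsum_mul_left, ← hSdef, mul_assoc, mul_comm Ef S, ← mul_assoc]
end

section
/- Let 1 ≤ p < q ≤ ∞ and let K be a bounded integral operator from L^p(ℝ) to L^q(ℝ) with bounded measurable kernel k(λ,x). Then for every f ∈ L^p(ℝ⁺), the truncated integrals ∫₀^N k(λ,x) f(x) dx converge to a finite limit as N → ∞ for almost every λ ∈ ℝ. -/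
open MeasureTheory Set Filter
open scoped ENNReal NNReal Topology

namespace Stmt1

noncomputable def S (k : ℝ → ℝ → ℂ) (f : ℝ → ℂ) (t : ℝ) (l : ℝ) : ℂ :=
  ∫ x in Set.Ioc (0:ℝ) t, k l x * f x

noncomputable def nu (f : ℝ → ℂ) (pr : ℝ) : Measure ℝ :=
  (volume.restrict (Ioi 0)).withDensity fun x => (‖f x‖₊ : ℝ≥0∞) ^ pr

noncomputable def mu1 (f : ℝ → ℂ) : Measure ℝ :=
  (volume.restrict (Ioi 0)).withDensity fun x => (‖f x‖₊ : ℝ≥0∞)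

variable {p q : ℝ≥0∞} {k : ℝ → ℝ → ℂ} {B : ℝ} {C : ℝ≥0∞} {f : ℝ → ℂ}

lemma restrict_Ioc {a b : ℝ} (ha : 0 ≤ a) :
    (volume.restrict (Ioi (0:ℝ))).restrict (Ioc a b) = volume.restrict (Ioc a b) := by
  rw [Measure.restrict_restrict measurableSet_Ioc,
    inter_eq_left.mpr (Ioc_subset_Ioi_self.trans (Ioi_subset_Ioi ha))]

lemma kmul_measurable (hk : Measurable (Function.uncurry k)) (hfm : StronglyMeasurable f)
    (l : ℝ) : StronglyMeasurable (fun x => k l x * f x) :=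
  ((hk.comp (measurable_const.prodMk measurable_id)).stronglyMeasurable).mul hfm

instance fin_restrict (a b : ℝ) : IsFiniteMeasure (volume.restrict (Ioc a b)) :=
  ⟨by rw [Measure.restrict_apply_univ]; exact measure_Ioc_lt_top⟩

lemma memLp_on (hp : 1 ≤ p) (hfp : MemLp f p (volume.restrict (Ioi (0:ℝ))))
    {a b : ℝ} (ha : 0 ≤ a) : MemLp f p (volume.restrict (Ioc a b)) := by
  rw [← restrict_Ioc ha]; exact hfp.restrict _

lemma integrableOn_kmul (hk : Measurable (Function.uncurry k)) (hkB : ∀ l x, ‖k l x‖ ≤ B)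
    (hp : 1 ≤ p) (hfm : StronglyMeasurable f)
    (hfp : MemLp f p (volume.restrict (Ioi (0:ℝ)))) {a b : ℝ} (ha : 0 ≤ a) (l : ℝ) :
    IntegrableOn (fun x => k l x * f x) (Ioc a b) volume := by
  have h1 : MemLp (fun x => k l x * f x) p (volume.restrict (Ioc a b)) := by
    refine MemLp.of_le_mul (c := B) (memLp_on hp hfp ha) (kmul_measurable hk hfm l).aestronglyMeasurable
      (Filter.Eventually.of_forall fun x => ?_)
    rw [norm_mul]
    exact mul_le_mul_of_nonneg_right (hkB l x) (norm_nonneg _)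
  exact memLp_one_iff_integrable.mp (h1.mono_exponent hp)

lemma S_sub (hk : Measurable (Function.uncurry k)) (hkB : ∀ l x, ‖k l x‖ ≤ B)
    (hp : 1 ≤ p) (hfm : StronglyMeasurable f)
    (hfp : MemLp f p (volume.restrict (Ioi (0:ℝ)))) {a b : ℝ} (ha : 0 ≤ a) (hab : a ≤ b)
    (l : ℝ) : S k f b l - S k f a l = ∫ x in Ioc a b, k l x * f x := by
  have := setIntegral_union (μ := volume) (f := fun x => k l x * f x)
    (s := Ioc 0 a) (t := Ioc a b) (Ioc_disjoint_Ioc_of_le le_rfl) measurableSet_Ioc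
    (integrableOn_kmul hk hkB hp hfm hfp le_rfl l)
    (integrableOn_kmul hk hkB hp hfm hfp ha l)
  rw [Ioc_union_Ioc_eq_Ioc ha hab] at this
  rw [S, S, this]; ring


lemma nu_apply {pr : ℝ} {s : Set ℝ} (hs : MeasurableSet s) (hsub : s ⊆ Ioi 0) :
    nu f pr s = ∫⁻ x in s, (‖f x‖₊ : ℝ≥0∞) ^ pr := by
  rw [nu, withDensity_apply _ hs]
  congr 1
  rw [Measure.restrict_restrict hs, inter_eq_left.mpr hsub]

lemma mu1_apply {s : Set ℝ} (hs : MeasurableSet s) (hsub : s ⊆ Ioi 0) :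
    mu1 f s = ∫⁻ x in s, (‖f x‖₊ : ℝ≥0∞) := by
  rw [mu1, withDensity_apply _ hs]
  congr 1
  rw [Measure.restrict_restrict hs, inter_eq_left.mpr hsub]

lemma Ioc_sub_Ioi {a b : ℝ} (ha : 0 ≤ a) : Ioc a b ⊆ Ioi (0:ℝ) :=
  Ioc_subset_Ioi_self.trans (Ioi_subset_Ioi ha)

lemma nu_fin (hp : 1 ≤ p) (hptop : p ≠ ∞) (hfp : MemLp f p (volume.restrict (Ioi (0:ℝ)))) :
    IsFiniteMeasure (nu f p.toReal) := by
  constructor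
  rw [nu, withDensity_apply _ MeasurableSet.univ, Measure.restrict_univ]
  exact lintegral_rpow_enorm_lt_top_of_eLpNorm_lt_top
    (fun h => by simp [h] at hp) hptop hfp.eLpNorm_lt_top

lemma mu1_Ioc_ne_top (hp : 1 ≤ p) (hfp : MemLp f p (volume.restrict (Ioi (0:ℝ))))
    {a b : ℝ} (ha : 0 ≤ a) : mu1 f (Ioc a b) ≠ ∞ := by
  rw [mu1_apply measurableSet_Ioc (Ioc_sub_Ioi ha)]
  have h1 : MemLp f 1 (volume.restrict (Ioc a b)) :=
    (memLp_on hp hfp ha).mono_exponent hp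
  exact (memLp_one_iff_integrable.mp h1).hasFiniteIntegral.ne

lemma eLpNorm_S_sub_le (hk : Measurable (Function.uncurry k)) (hkB : ∀ l x, ‖k l x‖ ≤ B)
    (hp : 1 ≤ p) (hptop : p ≠ ∞) (hfm : StronglyMeasurable f)
    (hfp : MemLp f p (volume.restrict (Ioi (0:ℝ))))
    (hK : ∀ g : ℝ → ℂ, MemLp g p (volume.restrict (Ioi 0)) →
      eLpNorm (fun l => ∫ x in Ioi (0:ℝ), k l x * g x) q volume
        ≤ C * eLpNorm g p (volume.restrict (Ioi 0)))
    {a b : ℝ} (ha : 0 ≤ a) (hab : a ≤ b) :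
    eLpNorm (fun l => S k f b l - S k f a l) q volume
      ≤ C * (nu f p.toReal (Ioc a b)) ^ (1 / p.toReal) := by
  have hp0 : p ≠ 0 := fun h => by simp [h] at hp
  have hg : MemLp ((Ioc a b).indicator f) p (volume.restrict (Ioi (0:ℝ))) :=
    hfp.indicator measurableSet_Ioc
  have hKg := hK _ hg
  have hL : (fun l => ∫ x in Ioi (0:ℝ), k l x * (Ioc a b).indicator f x)
      = fun l => S k f b l - S k f a l := by
    funext l
    have hind : ∀ x, k l x * (Ioc a b).indicator f x
        = (Ioc a b).indicator (fun x => k l x * f x) x := by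
      intro x
      by_cases hx : x ∈ Ioc a b <;> simp [Set.indicator_apply, hx]
    rw [S_sub hk hkB hp hfm hfp ha hab l]
    simp_rw [hind]
    rw [integral_indicator measurableSet_Ioc, restrict_Ioc ha]
  have hR : eLpNorm ((Ioc a b).indicator f) p (volume.restrict (Ioi (0:ℝ)))
      = (nu f p.toReal (Ioc a b)) ^ (1 / p.toReal) := by
    rw [eLpNorm_indicator_eq_eLpNorm_restrict measurableSet_Ioc, restrict_Ioc ha,
      eLpNorm_eq_lintegral_rpow_enorm_toReal hp0 hptop,
      nu_apply measurableSet_Ioc (Ioc_sub_Ioi ha)]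
    rfl
  rw [hL, hR] at hKg
  exact hKg

lemma enorm_S_sub_le (hk : Measurable (Function.uncurry k)) (hkB : ∀ l x, ‖k l x‖ ≤ B)
    (hp : 1 ≤ p) (hfm : StronglyMeasurable f)
    (hfp : MemLp f p (volume.restrict (Ioi (0:ℝ))))
    {a b : ℝ} (ha : 0 ≤ a) (hab : a ≤ b) (l : ℝ) :
    (‖S k f b l - S k f a l‖₊ : ℝ≥0∞) ≤ ENNReal.ofReal B * mu1 f (Ioc a b) := by
  rw [S_sub hk hkB hp hfm hfp ha hab l]
  refine le_trans (enorm_integral_le_lintegral_enorm _) ?_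
  rw [mu1_apply measurableSet_Ioc (Ioc_sub_Ioi ha)]
  have : ∀ x, (‖k l x * f x‖₊ : ℝ≥0∞) ≤ ENNReal.ofReal B * (‖f x‖₊ : ℝ≥0∞) := by
    intro x
    rw [nnnorm_mul, ENNReal.coe_mul]
    refine mul_le_mul_left ?_ _
    rw [← enorm_eq_nnnorm, ← ofReal_norm]
    exact ENNReal.ofReal_le_ofReal (hkB l x)
  refine le_trans (lintegral_mono this) ?_
  rw [lintegral_const_mul _ hfm.measurable.nnnorm.coe_nnreal_ennreal]


def TS (f : ℝ → ℂ) (pr m : ℝ) (c : ℝ≥0∞) : Set ℝ :=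
  {u : ℝ | m ≤ u ∧ c ≤ nu f pr (Ioc m u)}

noncomputable def Tst (f : ℝ → ℂ) (pr m : ℝ) (c : ℝ≥0∞) : ℝ :=
  sInf (TS f pr m c)

variable {pr m : ℝ} {c : ℝ≥0∞}

lemma TS_bddBelow : BddBelow (TS f pr m c) := ⟨m, fun _ hu => hu.1⟩

lemma le_Tst (hne : (TS f pr m c).Nonempty) : m ≤ Tst f pr m c :=
  le_csInf hne fun _ hu => hu.1

lemma Tst_le {u : ℝ} (hu : m ≤ u) (hc : c ≤ nu f pr (Ioc m u)) : Tst f pr m c ≤ u :=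
  csInf_le TS_bddBelow ⟨hu, hc⟩

lemma nu_lt_of_lt_Tst {u : ℝ} (hu : m ≤ u) (hut : u < Tst f pr m c) :
    nu f pr (Ioc m u) < c := by
  by_contra h
  exact absurd (Tst_le hu (not_lt.mp h)) (not_le.mpr hut)

lemma Tst_mono {c' : ℝ≥0∞} (hcc : c ≤ c') (hne : (TS f pr m c').Nonempty) :
    Tst f pr m c ≤ Tst f pr m c' :=
  csInf_le_csInf TS_bddBelow hne fun u hu => ⟨hu.1, le_trans hcc hu.2⟩

lemma Tst_nonempty (hc : c = 0 ∨ c < nu f pr (Ioi m)) : (TS f pr m c).Nonempty := by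
  rcases hc with hc | hc
  · exact ⟨m, le_rfl, by simp [hc]⟩
  · have hmon : Monotone (fun n : ℕ => Ioc m (m + n)) := fun i j hij =>
      Ioc_subset_Ioc_right (by linarith [(Nat.cast_le (α := ℝ)).mpr hij])
    have hU : (⋃ n : ℕ, Ioc m (m + n)) = Ioi m := by
      ext x
      simp only [mem_iUnion, mem_Ioc, mem_Ioi]
      constructor
      · rintro ⟨n, h1, _⟩; exact h1
      · intro hx
        obtain ⟨n, hn⟩ := exists_nat_ge (x - m)
        exact ⟨n, hx, by linarith⟩
    have htd := tendsto_measure_iUnion_atTop (μ := nu f pr) hmon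
    rw [hU] at htd
    obtain ⟨n, hn⟩ := (htd.eventually_const_lt hc).exists
    exact ⟨m + n, by linarith [Nat.cast_nonneg (α := ℝ) n], hn.le⟩

lemma nu_singleton (x : ℝ) : nu f pr {x} = 0 := by
  rw [nu, withDensity_apply _ (measurableSet_singleton x), Measure.restrict_eq_zero.mpr,
    lintegral_zero_measure]
  rw [Measure.restrict_apply (measurableSet_singleton x)]
  exact measure_mono_null inter_subset_left Real.volume_singleton

lemma le_nu_Tst (hfin : ∀ s : Set ℝ, nu f pr s ≠ ∞) (hne : (TS f pr m c).Nonempty) :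
    c ≤ nu f pr (Ioc m (Tst f pr m c)) := by
  set T := Tst f pr m c with hT
  have hstep : ∀ n : ℕ, c ≤ nu f pr (Ioc m (T + ((n:ℝ) + 1)⁻¹)) := by
    intro n
    have hlt : sInf (TS f pr m c) < T + ((n:ℝ)+1)⁻¹ := by
      have h5 : sInf (TS f pr m c) = T := by rw [hT, Tst]
      have : (0:ℝ) < ((n:ℝ)+1)⁻¹ := by positivity
      linarith
    obtain ⟨u, hu, hult⟩ := (csInf_lt_iff TS_bddBelow hne).mp hlt
    exact le_trans hu.2 (measure_mono (Ioc_subset_Ioc_right hult.le))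
  have hanti : Antitone (fun n : ℕ => Ioc m (T + ((n:ℝ) + 1)⁻¹)) := by
    intro i j hij
    refine Ioc_subset_Ioc_right ?_
    have : ((j:ℝ)+1)⁻¹ ≤ ((i:ℝ)+1)⁻¹ := by
      apply inv_anti₀ (by positivity)
      exact_mod_cast by linarith [(Nat.cast_le (α := ℝ)).mpr hij]
    linarith
  have hI : (⋂ n : ℕ, Ioc m (T + ((n:ℝ) + 1)⁻¹)) = Ioc m T := by
    ext x
    simp only [mem_iInter, mem_Ioc]
    constructor
    · rintro h
      refine ⟨(h 0).1, ?_⟩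
      by_contra hx
      push_neg at hx
      obtain ⟨n, hn⟩ := exists_nat_one_div_lt (sub_pos.mpr hx)
      rw [one_div] at hn
      linarith [(h n).2]
    · rintro ⟨h1, h2⟩ n
      have : (0:ℝ) < ((n:ℝ)+1)⁻¹ := by positivity
      exact ⟨h1, by linarith⟩
  have htd := tendsto_measure_iInter_atTop (μ := nu f pr)
    (fun n => measurableSet_Ioc.nullMeasurableSet) hanti ⟨0, hfin _⟩
  rw [hI] at htd
  exact ge_of_tendsto htd (Filter.Eventually.of_forall hstep)

lemma nu_Tst_le (hne : (TS f pr m c).Nonempty) :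
    nu f pr (Ioc m (Tst f pr m c)) ≤ c := by
  set T := Tst f pr m c with hT
  rcases le_or_gt T m with hTm | hmT
  · rw [Ioc_eq_empty (not_lt.mpr hTm)]; simp
  · have hstep : ∀ n : ℕ, nu f pr (Ioc m (T - (T - m)/((n:ℝ)+1))) ≤ c := by
      intro n
      have h1 : (0:ℝ) < (T - m)/((n:ℝ)+1) := div_pos (sub_pos.mpr hmT) (by positivity)
      have h2 : (T - m)/((n:ℝ)+1) ≤ T - m := by
        apply div_le_self (by linarith) (by linarith [Nat.cast_nonneg (α := ℝ) n])
      exact (nu_lt_of_lt_Tst (by linarith) (by rw [← hT]; linarith)).le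
    have hmon : Monotone (fun n : ℕ => Ioc m (T - (T - m)/((n:ℝ)+1))) := by
      intro i j hij
      refine Ioc_subset_Ioc_right ?_
      have h3 : (T - m)/((j:ℝ)+1) ≤ (T - m)/((i:ℝ)+1) := by
        apply div_le_div_of_nonneg_left (by linarith) (by positivity)
        exact_mod_cast by linarith [(Nat.cast_le (α := ℝ)).mpr hij]
      linarith
    have hU : (⋃ n : ℕ, Ioc m (T - (T - m)/((n:ℝ)+1))) = Ioo m T := by
      ext x
      simp only [mem_iUnion, mem_Ioc, mem_Ioo]
      constructor
      · rintro ⟨n, h1, h2⟩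
        have : (0:ℝ) < (T - m)/((n:ℝ)+1) := div_pos (sub_pos.mpr hmT) (by positivity)
        exact ⟨h1, by linarith⟩
      · rintro ⟨h1, h2⟩
        obtain ⟨n, hn⟩ := exists_nat_one_div_lt (div_pos (sub_pos.mpr h2) (sub_pos.mpr hmT))
        refine ⟨n, h1, ?_⟩
        rw [one_div] at hn
        have h4 : (T - m) * ((n:ℝ)+1)⁻¹ < (T - m) * ((T - x)/(T - m)) :=
          mul_lt_mul_of_pos_left hn (by linarith)
        rw [mul_div_cancel₀ _ (by linarith : T - m ≠ 0)] at h4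
        have : (T - m)/((n:ℝ)+1) = (T - m) * ((n:ℝ)+1)⁻¹ := by ring
        linarith [this ▸ h4]
    have htd := tendsto_measure_iUnion_atTop (μ := nu f pr) hmon
    rw [hU] at htd
    have hOo : nu f pr (Ioo m T) ≤ c := le_of_tendsto htd (Filter.Eventually.of_forall hstep)
    have : Ioc m T ⊆ Ioo m T ∪ {T} := by
      intro x hx
      rcases lt_or_eq_of_le hx.2 with h | h
      · exact Or.inl ⟨hx.1, h⟩
      · exact Or.inr (by simp [h])
    calc nu f pr (Ioc m T) ≤ nu f pr (Ioo m T ∪ {T}) := measure_mono this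
      _ ≤ nu f pr (Ioo m T) + nu f pr {T} := measure_union_le _ _
      _ ≤ c + 0 := by rw [nu_singleton]; exact add_le_add_left hOo 0
      _ = c := by rw [add_zero]


noncomputable def cc (f : ℝ → ℂ) (pr m : ℝ) (j r : ℕ) : ℝ≥0∞ :=
  (r : ℝ≥0∞) * (nu f pr (Ioi m) * (2⁻¹ : ℝ≥0∞) ^ j)

noncomputable def Tj (f : ℝ → ℂ) (pr m : ℝ) (j r : ℕ) : ℝ := Tst f pr m (cc f pr m j r)

noncomputable def Mx (k : ℝ → ℝ → ℂ) (f : ℝ → ℂ) (pr m : ℝ) (j : ℕ) (l : ℝ) : ℝ≥0∞ :=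
  (Finset.range (2^j - 1)).sup fun s =>
    (‖S k f (Tj f pr m j (s+1)) l - S k f (Tj f pr m j s) l‖₊ : ℝ≥0∞)

lemma cc_zero {j : ℕ} : cc f pr m j 0 = 0 := by simp [cc]

lemma cc_succ {j r : ℕ} :
    cc f pr m j (r+1) = cc f pr m j r + nu f pr (Ioi m) * (2⁻¹:ℝ≥0∞)^j := by
  unfold cc; push_cast; ring

lemma cc_mono {j r r' : ℕ} (h : r ≤ r') : cc f pr m j r ≤ cc f pr m j r' :=
  mul_le_mul_left (by exact_mod_cast Nat.cast_le.mpr h) _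

lemma cc_double {j r : ℕ} : cc f pr m (j+1) (2*r) = cc f pr m j r := by
  unfold cc
  push_cast
  rw [pow_succ]
  calc (2 * (r:ℝ≥0∞)) * (nu f pr (Ioi m) * ((2⁻¹:ℝ≥0∞)^j * 2⁻¹))
      = (2 * 2⁻¹) * ((r:ℝ≥0∞) * (nu f pr (Ioi m) * (2⁻¹:ℝ≥0∞)^j)) := by ring
    _ = (r:ℝ≥0∞) * (nu f pr (Ioi m) * (2⁻¹:ℝ≥0∞)^j) := by
        rw [ENNReal.mul_inv_cancel two_ne_zero ENNReal.ofNat_ne_top, one_mul]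

lemma cc_top {j : ℕ} : cc f pr m j (2^j) = nu f pr (Ioi m) := by
  unfold cc
  push_cast
  calc ((2:ℝ≥0∞)^j) * (nu f pr (Ioi m) * (2⁻¹:ℝ≥0∞)^j)
      = ((2:ℝ≥0∞) * 2⁻¹)^j * nu f pr (Ioi m) := by rw [mul_pow]; ring
    _ = nu f pr (Ioi m) := by
        rw [ENNReal.mul_inv_cancel two_ne_zero ENNReal.ofNat_ne_top, one_pow, one_mul]

lemma cc_lt (hτ0 : nu f pr (Ioi m) ≠ 0) (hfin : nu f pr (Ioi m) ≠ ∞) {j r : ℕ}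
    (h : r < 2^j) : cc f pr m j r < nu f pr (Ioi m) := by
  have hd0 : nu f pr (Ioi m) * (2⁻¹:ℝ≥0∞)^j ≠ 0 := by
    apply mul_ne_zero hτ0
    exact pow_ne_zero _ (ENNReal.inv_ne_zero.mpr ENNReal.ofNat_ne_top)
  have hdt : nu f pr (Ioi m) * (2⁻¹:ℝ≥0∞)^j ≠ ∞ := by
    apply ENNReal.mul_ne_top hfin
    exact ENNReal.pow_ne_top (by simp)
  have hlt : ((r:ℝ≥0∞)) * (nu f pr (Ioi m) * (2⁻¹:ℝ≥0∞)^j)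
      < ((2^j : ℕ) : ℝ≥0∞) * (nu f pr (Ioi m) * (2⁻¹:ℝ≥0∞)^j) :=
    (ENNReal.mul_lt_mul_left hd0 hdt) (by exact_mod_cast Nat.cast_lt.mpr h)
  calc cc f pr m j r < ((2^j : ℕ) : ℝ≥0∞) * (nu f pr (Ioi m) * (2⁻¹:ℝ≥0∞)^j) := hlt
    _ = cc f pr m j (2^j) := rfl
    _ = nu f pr (Ioi m) := cc_top

lemma TSne (hτ0 : nu f pr (Ioi m) ≠ 0) (hfin : nu f pr (Ioi m) ≠ ∞) {j r : ℕ}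
    (h : r < 2^j) : (TS f pr m (cc f pr m j r)).Nonempty :=
  Tst_nonempty (Or.inr (cc_lt hτ0 hfin h))

lemma Tst_zero : Tst f pr m 0 = m := by
  have h : TS f pr m 0 = Ici m := by ext u; simp [TS]
  rw [Tst, h, csInf_Ici]

lemma chunk_mass (hfin : ∀ s : Set ℝ, nu f pr s ≠ ∞) {c c' d : ℝ≥0∞}
    (hne : (TS f pr m c).Nonempty) (hne' : (TS f pr m c').Nonempty)
    (hcc : c ≤ c') (hd : c' ≤ c + d) :
    nu f pr (Ioc (Tst f pr m c) (Tst f pr m c')) ≤ d := by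
  have hab : Tst f pr m c ≤ Tst f pr m c' := Tst_mono hcc hne'
  have hma : m ≤ Tst f pr m c := le_Tst hne
  have hsum : nu f pr (Ioc m (Tst f pr m c)) + nu f pr (Ioc (Tst f pr m c) (Tst f pr m c'))
      = nu f pr (Ioc m (Tst f pr m c')) := by
    rw [← measure_union (Ioc_disjoint_Ioc_of_le le_rfl) measurableSet_Ioc,
      Ioc_union_Ioc_eq_Ioc hma hab]
  have hkey : nu f pr (Ioc m (Tst f pr m c)) + nu f pr (Ioc (Tst f pr m c) (Tst f pr m c'))
      ≤ nu f pr (Ioc m (Tst f pr m c)) + d := by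
    rw [hsum]
    calc nu f pr (Ioc m (Tst f pr m c')) ≤ c' := nu_Tst_le hne'
      _ ≤ c + d := hd
      _ ≤ nu f pr (Ioc m (Tst f pr m c)) + d := add_le_add_left (le_nu_Tst hfin hne) d
  exact (ENNReal.add_le_add_iff_left (hfin _)).mp hkey


lemma eLpNorm_chunk (hk : Measurable (Function.uncurry k)) (hkB : ∀ l x, ‖k l x‖ ≤ B)
    (hp : 1 ≤ p) (hptop : p ≠ ∞) (hfm : StronglyMeasurable f)
    (hfp : MemLp f p (volume.restrict (Ioi (0:ℝ))))
    (hK : ∀ g : ℝ → ℂ, MemLp g p (volume.restrict (Ioi 0)) →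
      eLpNorm (fun l => ∫ x in Ioi (0:ℝ), k l x * g x) q volume
        ≤ C * eLpNorm g p (volume.restrict (Ioi 0)))
    (hm : 0 ≤ m) (hfin : ∀ s : Set ℝ, nu f p.toReal s ≠ ∞)
    (hτ0 : nu f p.toReal (Ioi m) ≠ 0)
    {j s : ℕ} (hs : s + 1 < 2^j) :
    eLpNorm (fun l =>
        S k f (Tj f p.toReal m j (s+1)) l - S k f (Tj f p.toReal m j s) l) q volume
      ≤ C * (nu f p.toReal (Ioi m) * (2⁻¹:ℝ≥0∞)^j) ^ (1/p.toReal) := by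
  have hne1 : (TS f p.toReal m (cc f p.toReal m j s)).Nonempty :=
    TSne hτ0 (hfin _) (lt_of_le_of_lt (Nat.le_succ s) hs)
  have hne2 : (TS f p.toReal m (cc f p.toReal m j (s+1))).Nonempty :=
    TSne hτ0 (hfin _) hs
  have hab : Tj f p.toReal m j s ≤ Tj f p.toReal m j (s+1) :=
    Tst_mono (cc_mono (Nat.le_succ s)) hne2
  have ha : (0:ℝ) ≤ Tj f p.toReal m j s := le_trans hm (le_Tst hne1)
  refine le_trans (eLpNorm_S_sub_le hk hkB hp hptop hfm hfp hK ha hab) ?_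
  refine mul_le_mul_right (ENNReal.rpow_le_rpow ?_ (by positivity)) C
  exact chunk_mass hfin hne1 hne2 (cc_mono (Nat.le_succ s)) (le_of_eq cc_succ)

lemma coe_nnnorm_triangle (a b c : ℂ) :
    (‖a - c‖₊ : ℝ≥0∞) ≤ (‖a - b‖₊ : ℝ≥0∞) + (‖b - c‖₊ : ℝ≥0∞) := by
  rw [← nndist_eq_nnnorm, ← nndist_eq_nnnorm, ← nndist_eq_nnnorm, ← ENNReal.coe_add]
  exact ENNReal.coe_le_coe.mpr (nndist_triangle a b c)

lemma chain (hk : Measurable (Function.uncurry k)) (hkB : ∀ l x, ‖k l x‖ ≤ B)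
    (hp : 1 ≤ p) (hfm : StronglyMeasurable f)
    (hfp : MemLp f p (volume.restrict (Ioi (0:ℝ))))
    (hm : 0 ≤ m) (hfin : ∀ s : Set ℝ, nu f p.toReal s ≠ ∞)
    (hpr0 : 0 < p.toReal)
    {t : ℝ} (hmt : m ≤ t) (l : ℝ) :
    (‖S k f t l - S k f m l‖₊ : ℝ≥0∞) ≤ ∑' j : ℕ, Mx k f p.toReal m (j+1) l := by
  classical
  set pr := p.toReal with hprdef
  set τ := nu f pr (Ioi m) with hτdef
  let P : ℕ → ℕ → Prop := fun j r => cc f pr m j r ≤ nu f pr (Ioc m t)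
  let R : ℕ → ℕ := fun j => Nat.findGreatest (P j) (2^j - 1)
  have hP0 : ∀ j, P j 0 := fun j => by simp [P, cc_zero]
  have hPR : ∀ j, P j (R j) := fun j => Nat.findGreatest_spec (Nat.zero_le _) (hP0 j)
  have hRle : ∀ j, R j ≤ 2^j - 1 := fun j => Nat.findGreatest_le _
  set tj : ℕ → ℝ := fun j => Tst f pr m (cc f pr m j (R j)) with htjdef
  have hne : ∀ j, (TS f pr m (cc f pr m j (R j))).Nonempty := fun j => ⟨t, hmt, hPR j⟩
  have htjm : ∀ j, m ≤ tj j := fun j => le_Tst (hne j)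
  have htjt : ∀ j, tj j ≤ t := fun j => Tst_le hmt (hPR j)
  have hR2 : ∀ j, 2 * R j ≤ R (j+1) := by
    intro j
    apply Nat.le_findGreatest
    · have h1 := hRle j
      have hps : 2^(j+1) = 2^j*2 := pow_succ 2 j
      have h2 : 1 ≤ 2^j := Nat.one_le_two_pow
      omega
    · show cc f pr m (j+1) (2 * R j) ≤ nu f pr (Ioc m t)
      rw [cc_double]; exact hPR j
  have hR3 : ∀ j, R (j+1) ≤ 2 * R j + 1 := by
    intro j
    by_contra hcon
    push_neg at hcon
    have h1 : P (j+1) (R (j+1)) := hPR (j+1)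
    have h2 : cc f pr m (j+1) (2*(R j + 1)) ≤ cc f pr m (j+1) (R (j+1)) :=
      cc_mono (by omega)
    have h3 : P j (R j + 1) := by
      show cc f pr m j (R j + 1) ≤ nu f pr (Ioc m t)
      rw [← cc_double]; exact h2.trans h1
    have h4 : R j + 1 ≤ 2^j - 1 := by
      have h5 := hRle (j+1)
      have hps : 2^(j+1) = 2^j*2 := pow_succ 2 j
      have h6 : 1 ≤ 2^j := Nat.one_le_two_pow
      omega
    exact Nat.findGreatest_is_greatest (Nat.lt_succ_self _) h4 h3
  have htj_succ : ∀ j, tj j ≤ tj (j+1) := by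
    intro j
    apply Tst_mono _ (hne (j+1))
    rw [← cc_double]
    exact cc_mono (hR2 j)
  have htj_mono : Monotone tj := monotone_nat_of_le_succ htj_succ
  have hstep : ∀ j, (‖S k f (tj (j+1)) l - S k f (tj j) l‖₊ : ℝ≥0∞) ≤ Mx k f pr m (j+1) l := by
    intro j
    have hcase : R (j+1) = 2*R j ∨ R (j+1) = 2*R j + 1 := by
      have := hR2 j; have := hR3 j; omega
    rcases hcase with h | h
    · have heq : tj (j+1) = tj j := by
        show Tst f pr m (cc f pr m (j+1) (R (j+1))) = Tst f pr m (cc f pr m j (R j))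
        rw [h, cc_double]
      rw [heq, sub_self]
      simp
    · have h1 : tj j = Tj f pr m (j+1) (2*R j) := by
        show Tst f pr m (cc f pr m j (R j)) = Tst f pr m (cc f pr m (j+1) (2*R j))
        rw [cc_double]
      have h2 : tj (j+1) = Tj f pr m (j+1) (2*R j + 1) := by
        show Tst f pr m (cc f pr m (j+1) (R (j+1))) = _
        rw [h]; rfl
      rw [h1, h2]
      have hmem : 2*R j ∈ Finset.range (2^(j+1) - 1) := by
        refine Finset.mem_range.mpr ?_
        have h5 := hRle j
        have hps : 2^(j+1) = 2^j*2 := pow_succ 2 j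
        have h6 : 1 ≤ 2^j := Nat.one_le_two_pow
        omega
      exact Finset.le_sup (f := fun s =>
        (‖S k f (Tj f pr m (j+1) (s+1)) l - S k f (Tj f pr m (j+1) s) l‖₊ : ℝ≥0∞)) hmem
  have htel : ∀ J, (‖S k f (tj J) l - S k f m l‖₊ : ℝ≥0∞)
      ≤ ∑ j ∈ Finset.range J, Mx k f pr m (j+1) l := by
    intro J
    induction J with
    | zero =>
        have hR0 : R 0 = 0 := by
          show Nat.findGreatest (P 0) (2^0 - 1) = 0
          norm_num
        have h0 : tj 0 = m := by
          show Tst f pr m (cc f pr m 0 (R 0)) = m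
          rw [hR0, cc_zero, Tst_zero]
        rw [h0, sub_self]
        simp
    | succ J ih =>
        calc (‖S k f (tj (J+1)) l - S k f m l‖₊ : ℝ≥0∞)
            ≤ (‖S k f (tj (J+1)) l - S k f (tj J) l‖₊ : ℝ≥0∞)
              + (‖S k f (tj J) l - S k f m l‖₊ : ℝ≥0∞) := coe_nnnorm_triangle _ _ _
          _ ≤ Mx k f pr m (J+1) l + ∑ j ∈ Finset.range J, Mx k f pr m (j+1) l :=
              add_le_add (hstep J) ih
          _ = ∑ j ∈ Finset.range (J+1), Mx k f pr m (j+1) l := by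
              rw [Finset.sum_range_succ]; ring
  have hcor : ∀ J, nu f pr (Ioc (tj J) t) ≤ τ * (2⁻¹:ℝ≥0∞)^J := by
    intro J
    have hup : nu f pr (Ioc m t) ≤ cc f pr m J (R J) + τ * (2⁻¹:ℝ≥0∞)^J := by
      rw [← cc_succ]
      rcases le_or_gt (R J + 1) (2^J - 1) with h | h
      · have hng : ¬ P J (R J + 1) :=
          Nat.findGreatest_is_greatest (Nat.lt_succ_self _) h
        exact (not_le.mp hng).le
      · have h6 : 1 ≤ 2^J := Nat.one_le_two_pow
        have hRJ : R J + 1 = 2^J := by have := hRle J; omega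
        rw [hRJ, cc_top]
        exact measure_mono Ioc_subset_Ioi_self
    have hlow : cc f pr m J (R J) ≤ nu f pr (Ioc m (tj J)) := le_nu_Tst hfin (hne J)
    have hsum : nu f pr (Ioc m (tj J)) + nu f pr (Ioc (tj J) t) = nu f pr (Ioc m t) := by
      rw [← measure_union (Ioc_disjoint_Ioc_of_le le_rfl) measurableSet_Ioc,
        Ioc_union_Ioc_eq_Ioc (htjm J) (htjt J)]
    have hkey : nu f pr (Ioc m (tj J)) + nu f pr (Ioc (tj J) t)
        ≤ nu f pr (Ioc m (tj J)) + τ * (2⁻¹:ℝ≥0∞)^J := by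
      rw [hsum]
      exact hup.trans (add_le_add_left hlow _)
    exact (ENNReal.add_le_add_iff_left (hfin _)).mp hkey
  set A := ⋂ J : ℕ, Ioc (tj J) t with hAdef
  have hAm : MeasurableSet A := MeasurableSet.iInter fun J => measurableSet_Ioc
  have hνA : nu f pr A = 0 := by
    have h1 : ∀ J : ℕ, nu f pr A ≤ τ * (2⁻¹:ℝ≥0∞)^J := fun J =>
      (measure_mono (iInter_subset _ J)).trans (hcor J)
    have h2 : Tendsto (fun J : ℕ => τ * (2⁻¹:ℝ≥0∞)^J) atTop (𝓝 0) := by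
      have h3 := ENNReal.tendsto_pow_atTop_nhds_zero_of_lt_one
        (by norm_num : (2⁻¹:ℝ≥0∞) < 1)
      have h4 := ENNReal.Tendsto.const_mul (a := τ) h3 (Or.inr (hfin _))
      simpa using h4
    exact le_antisymm (ge_of_tendsto h2 (Filter.Eventually.of_forall h1)) (zero_le')
  have hμ1A : mu1 f A = 0 := by
    rw [nu, withDensity_apply _ hAm] at hνA
    rw [mu1, withDensity_apply _ hAm]
    have hmeas : Measurable fun x => (‖f x‖₊ : ℝ≥0∞) ^ pr := hfm.measurable.nnnorm.coe_nnreal_ennreal.pow_const pr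
    have hae := (lintegral_eq_zero_iff hmeas).mp hνA
    rw [show (0:ℝ≥0∞) = ∫⁻ _ in A, (0:ℝ≥0∞) ∂(volume.restrict (Ioi (0:ℝ))) by
      simp]
    apply lintegral_congr_ae
    filter_upwards [hae] with x hx
    rcases ENNReal.rpow_eq_zero_iff.mp hx with ⟨h0, _⟩ | ⟨htop, _⟩
    · simpa using h0
    · exact absurd htop (by simp)
  have hμ1lim : Tendsto (fun J : ℕ => mu1 f (Ioc (tj J) t)) atTop (𝓝 0) := by
    have h5 := tendsto_measure_iInter_atTop (μ := mu1 f) (s := fun J => Ioc (tj J) t)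
      (fun J => measurableSet_Ioc.nullMeasurableSet)
      (fun i j hij => Ioc_subset_Ioc_left (htj_mono hij))
      ⟨0, mu1_Ioc_ne_top hp hfp (le_trans hm (htjm 0))⟩
    rw [show (⋂ n : ℕ, Ioc (tj n) t) = A from rfl, hμ1A] at h5
    exact h5
  have hlim : Tendsto (fun J : ℕ => ENNReal.ofReal B * mu1 f (Ioc (tj J) t)
      + ∑' j : ℕ, Mx k f pr m (j+1) l) atTop (𝓝 (∑' j : ℕ, Mx k f pr m (j+1) l)) := by
    have h6 := ENNReal.Tendsto.const_mul (a := ENNReal.ofReal B) hμ1lim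
      (Or.inr ENNReal.ofReal_ne_top)
    rw [mul_zero] at h6
    have h7 := h6.add (tendsto_const_nhds
      (x := ∑' j : ℕ, Mx k f pr m (j+1) l) (f := atTop))
    rwa [zero_add] at h7
  refine ge_of_tendsto hlim (Filter.Eventually.of_forall fun J => ?_)
  calc (‖S k f t l - S k f m l‖₊ : ℝ≥0∞)
      ≤ (‖S k f t l - S k f (tj J) l‖₊ : ℝ≥0∞)
        + (‖S k f (tj J) l - S k f m l‖₊ : ℝ≥0∞) := coe_nnnorm_triangle _ _ _
    _ ≤ ENNReal.ofReal B * mu1 f (Ioc (tj J) t) + ∑' j : ℕ, Mx k f pr m (j+1) l := by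
        refine add_le_add ?_ ((htel J).trans (ENNReal.sum_le_tsum _))
        exact enorm_S_sub_le hk hkB hp hfm hfp (le_trans hm (htjm J)) (htjt J) l


lemma S_congr_zero (hk : Measurable (Function.uncurry k)) (hkB : ∀ l x, ‖k l x‖ ≤ B)
    (hp : 1 ≤ p) (hfm : StronglyMeasurable f)
    (hfp : MemLp f p (volume.restrict (Ioi (0:ℝ)))) (hm : 0 ≤ m)
    (hτ0 : nu f p.toReal (Ioi m) = 0) {t : ℝ} (hmt : m ≤ t) (l : ℝ) :
    S k f t l = S k f m l := by
  have hz : nu f p.toReal (Ioc m t) = 0 := measure_mono_null Ioc_subset_Ioi_self hτ0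
  rw [nu_apply measurableSet_Ioc (Ioc_sub_Ioi hm)] at hz
  have hmeas : Measurable fun x => (‖f x‖₊ : ℝ≥0∞) ^ p.toReal := hfm.measurable.nnnorm.coe_nnreal_ennreal.pow_const _
  have hae := (lintegral_eq_zero_iff hmeas).mp hz
  have hzero : ∫ x in Ioc m t, k l x * f x = 0 := by
    apply integral_eq_zero_of_ae
    filter_upwards [hae] with x hx
    have hfx : (‖f x‖₊ : ℝ≥0∞) = 0 := by
      rcases ENNReal.rpow_eq_zero_iff.mp hx with ⟨h0, _⟩ | ⟨htop, _⟩
      · exact h0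
      · exact absurd htop (by simp)
    have : f x = 0 := by simpa using hfx
    simp [this]
  have hd := S_sub hk hkB hp hfm hfp hm hmt l
  rw [hzero] at hd
  exact sub_eq_zero.mp hd

lemma S_measurable (hk : Measurable (Function.uncurry k)) (hfm : StronglyMeasurable f)
    (t t' : ℝ) : StronglyMeasurable (fun l => S k f t l - S k f t' l) := by
  have h1 : ∀ u : ℝ, StronglyMeasurable (fun l => S k f u l) := by
    intro u
    apply MeasureTheory.StronglyMeasurable.integral_prod_right'
      (f := fun z : ℝ × ℝ => k z.1 z.2 * f z.2)
    exact hk.stronglyMeasurable.mul (hfm.comp_measurable measurable_snd)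
  exact (h1 t).sub (h1 t')

lemma tau_tendsto (hfin : ∀ s : Set ℝ, nu f pr s ≠ ∞) :
    Tendsto (fun m : ℕ => nu f pr (Ioi (m:ℝ))) atTop (𝓝 0) := by
  have h1 := tendsto_measure_iInter_atTop (μ := nu f pr) (s := fun m : ℕ => Ioi (m:ℝ))
    (fun m => measurableSet_Ioi.nullMeasurableSet)
    (fun i j hij => Ioi_subset_Ioi (by exact_mod_cast hij)) ⟨0, hfin _⟩
  have h2 : (⋂ m : ℕ, Ioi ((m:ℕ):ℝ)) = ∅ := by
    ext x
    simp only [mem_iInter, mem_Ioi, mem_empty_iff_false, iff_false, not_forall, not_lt]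
    obtain ⟨n, hn⟩ := exists_nat_ge x
    exact ⟨n, hn⟩
  rw [h2, measure_empty] at h1
  exact h1

lemma geom_tail {w : ℝ≥0∞} (hw : w ≤ 1) : ∑' j : ℕ, w^(j+1) ≤ (1 - w)⁻¹ := by
  refine le_trans (ENNReal.tsum_le_tsum fun j => ?_) (le_of_eq (ENNReal.tsum_geometric w))
  calc w^(j+1) = w^j * w := by rw [pow_succ]
    _ ≤ w^j * 1 := mul_le_mul_right hw _
    _ = w^j := mul_one _

lemma pow_rpow (x : ℝ≥0∞) (n : ℕ) (e : ℝ) : (x^n)^e = (x^e)^n := by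
  rw [← ENNReal.rpow_natCast x n, ← ENNReal.rpow_mul, mul_comm, ENNReal.rpow_mul,
    ENNReal.rpow_natCast]

lemma rpow_small {τ ε Θ : ℝ≥0∞} {e : ℝ} (he : 0 < e) (hΘ : Θ ≠ ∞) (hε : ε ≠ 0)
    (hτ : τ ≤ (ε/Θ) ^ (1/e)) : Θ * τ ^ e ≤ ε := by
  have h1 : τ ^ e ≤ ((ε/Θ) ^ (1/e)) ^ e := ENNReal.rpow_le_rpow hτ he.le
  rw [← ENNReal.rpow_mul, one_div, inv_mul_cancel₀ he.ne', ENNReal.rpow_one] at h1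
  calc Θ * τ ^ e ≤ Θ * (ε / Θ) := mul_le_mul_right h1 Θ
    _ ≤ ε := ENNReal.mul_div_le

lemma good_limit {g : ℝ → ℂ}
    (hg : ∀ K : ℕ, ∃ m : ℕ, ∀ t t' : ℝ, (m:ℝ) ≤ t → (m:ℝ) ≤ t' →
      ‖g t - g t'‖ ≤ 1/((K:ℝ)+1)) : ∃ L : ℂ, Tendsto g atTop (𝓝 L) := by
  have hcs : CauchySeq (fun n : ℕ => g n) := by
    rw [Metric.cauchySeq_iff]
    intro ε hε
    obtain ⟨K, hK⟩ := exists_nat_one_div_lt hε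
    obtain ⟨m, hm⟩ := hg K
    refine ⟨m, fun n1 hn1 n2 hn2 => ?_⟩
    have h1 := hm n1 n2 (by exact_mod_cast hn1) (by exact_mod_cast hn2)
    calc dist (g n1) (g n2) = ‖g n1 - g n2‖ := dist_eq_norm _ _
      _ ≤ 1/((K:ℝ)+1) := h1
      _ < ε := hK
  obtain ⟨L, hL⟩ := cauchySeq_tendsto_of_complete hcs
  refine ⟨L, Metric.tendsto_atTop.mpr fun ε hε => ?_⟩
  obtain ⟨K, hK⟩ := exists_nat_one_div_lt (half_pos hε)
  obtain ⟨m, hm⟩ := hg K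
  obtain ⟨n, hn1, hn2⟩ : ∃ n : ℕ, m ≤ n ∧ dist (g n) L < ε/2 := by
    obtain ⟨N, hN⟩ := Metric.tendsto_atTop.mp hL (ε/2) (half_pos hε)
    exact ⟨max m N, le_max_left _ _, hN _ (le_max_right _ _)⟩
  refine ⟨m, fun t ht => ?_⟩
  have h1 : ‖g t - g n‖ ≤ 1/((K:ℝ)+1) := hm t n ht (by exact_mod_cast hn1)
  calc dist (g t) L ≤ dist (g t) (g n) + dist (g n) L := dist_triangle _ _ _
    _ < 1/((K:ℝ)+1) + ε/2 := by
        rw [dist_eq_norm]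
        exact add_lt_add_of_le_of_lt h1 hn2
    _ < ε/2 + ε/2 := by linarith
    _ = ε := by ring


lemma norm_le_of_enorm {z : ℂ} {c : ℝ} (hc : 0 ≤ c)
    (h : (‖z‖₊ : ℝ≥0∞) ≤ ENNReal.ofReal c) : ‖z‖ ≤ c := by
  rw [← enorm_eq_nnnorm, ← ofReal_norm] at h
  exact (ENNReal.ofReal_le_ofReal_iff hc).mp h

lemma Mx_le {a : ℝ≥0∞} {j : ℕ} {l : ℝ}
    (h : ∀ s, s + 1 < 2^j →
      (‖S k f (Tj f pr m j (s+1)) l - S k f (Tj f pr m j s) l‖₊ : ℝ≥0∞) ≤ a) :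
    Mx k f pr m j l ≤ a := by
  apply Finset.sup_le
  intro s hs
  have h1 := Finset.mem_range.mp hs
  have h2 : 1 ≤ 2^j := Nat.one_le_two_pow
  exact h s (by omega)

lemma osc_le (hk : Measurable (Function.uncurry k)) (hkB : ∀ l x, ‖k l x‖ ≤ B)
    (hp : 1 ≤ p) (hfm : StronglyMeasurable f)
    (hfp : MemLp f p (volume.restrict (Ioi (0:ℝ)))) (hm0 : 0 ≤ m)
    (hfin : ∀ s : Set ℝ, nu f p.toReal s ≠ ∞) (hpr0 : 0 < p.toReal)
    {l t t' : ℝ} (ht : m ≤ t) (ht' : m ≤ t') :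
    (‖S k f t l - S k f t' l‖₊ : ℝ≥0∞) ≤ 2 * ∑' j : ℕ, Mx k f p.toReal m (j+1) l := by
  have h2 : (‖S k f t' l - S k f m l‖₊ : ℝ≥0∞) = ‖S k f m l - S k f t' l‖₊ := by
    rw [← neg_sub, nnnorm_neg]
  calc (‖S k f t l - S k f t' l‖₊ : ℝ≥0∞)
      ≤ (‖S k f t l - S k f m l‖₊ : ℝ≥0∞) + (‖S k f m l - S k f t' l‖₊ : ℝ≥0∞) :=
        coe_nnnorm_triangle _ _ _
    _ ≤ (∑' j : ℕ, Mx k f p.toReal m (j+1) l) + ∑' j : ℕ, Mx k f p.toReal m (j+1) l := by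
        refine add_le_add (chain hk hkB hp hfm hfp hm0 hfin hpr0 ht l) ?_
        rw [← h2]
        exact chain hk hkB hp hfm hfp hm0 hfin hpr0 ht' l
    _ = 2 * ∑' j : ℕ, Mx k f p.toReal m (j+1) l := (two_mul _).symm

lemma mass_rpow (τ : ℝ≥0∞) (n : ℕ) {e : ℝ} (he : 0 ≤ e) :
    (τ * (2⁻¹:ℝ≥0∞)^n) ^ e = τ^e * (((2⁻¹:ℝ≥0∞))^e)^n := by
  rw [ENNReal.mul_rpow_of_nonneg _ _ he, pow_rpow]

lemma rpow_ne_zero' {x : ℝ≥0∞} (hx : x ≠ 0) (hxt : x ≠ ∞) (e : ℝ) : x ^ e ≠ 0 := by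
  simp [ENNReal.rpow_eq_zero_iff, hx, hxt]

lemma rpow_ne_top' {x : ℝ≥0∞} (hx : x ≠ 0) (hxt : x ≠ ∞) (e : ℝ) : x ^ e ≠ ∞ := by
  simp [ENNReal.rpow_eq_top_iff, hx, hxt]

lemma cheb_alg {C' τ : ℝ≥0∞} (hC'0 : C' ≠ 0) (hC't : C' ≠ ∞) (hτ0 : τ ≠ 0) (hτt : τ ≠ ∞)
    {pr qr γ e1 : ℝ} (hpr0 : 0 < pr) (hqr0 : 0 ≤ qr) (he1 : e1 = 1/pr - γ) (n : ℕ) :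
    ((C' * τ^(1/(2*pr)) * (((2⁻¹:ℝ≥0∞))^e1)^n)⁻¹) ^ qr
        * (C' * (τ * (2⁻¹:ℝ≥0∞)^n)^(1/pr)) ^ qr
      = τ ^ (qr/(2*pr)) * (((2⁻¹:ℝ≥0∞))^(γ*qr))^n := by
  have hx0 : (2⁻¹:ℝ≥0∞) ≠ 0 := by norm_num
  have hxt : (2⁻¹:ℝ≥0∞) ≠ ∞ := by norm_num
  have hxe : ∀ e : ℝ, ((2⁻¹:ℝ≥0∞)^e)^n = (2⁻¹:ℝ≥0∞)^(e*(n:ℝ)) := fun e => by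
    rw [← ENNReal.rpow_natCast ((2⁻¹:ℝ≥0∞)^e) n, ← ENNReal.rpow_mul]
  rw [hxe e1, ← ENNReal.rpow_natCast (2⁻¹:ℝ≥0∞) n]
  rw [ENNReal.mul_inv (Or.inr (rpow_ne_top' hx0 hxt _)) (Or.inr (rpow_ne_zero' hx0 hxt _)),
      ENNReal.mul_inv (Or.inl hC'0) (Or.inl hC't)]
  rw [← ENNReal.rpow_neg τ, ← ENNReal.rpow_neg (2⁻¹:ℝ≥0∞)]
  rw [ENNReal.mul_rpow_of_nonneg τ _ (by positivity : (0:ℝ) ≤ 1/pr)]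
  rw [← ENNReal.rpow_mul (2⁻¹:ℝ≥0∞) (n:ℝ) (1/pr)]
  rw [← ENNReal.mul_rpow_of_nonneg _ _ hqr0]
  have hinner : (C'⁻¹ * τ^(-(1/(2*pr))) * (2⁻¹:ℝ≥0∞)^(-(e1*(n:ℝ))))
      * (C' * (τ^(1/pr) * (2⁻¹:ℝ≥0∞)^((n:ℝ)*(1/pr))))
      = τ^(1/(2*pr)) * (2⁻¹:ℝ≥0∞)^(γ*(n:ℝ)) := by
    calc (C'⁻¹ * τ^(-(1/(2*pr))) * (2⁻¹:ℝ≥0∞)^(-(e1*(n:ℝ))))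
        * (C' * (τ^(1/pr) * (2⁻¹:ℝ≥0∞)^((n:ℝ)*(1/pr))))
        = (C'⁻¹ * C') * ((τ^(-(1/(2*pr))) * τ^(1/pr))
          * ((2⁻¹:ℝ≥0∞)^(-(e1*(n:ℝ))) * (2⁻¹:ℝ≥0∞)^((n:ℝ)*(1/pr)))) := by ring
      _ = 1 * (τ^(-(1/(2*pr)) + 1/pr) * (2⁻¹:ℝ≥0∞)^(-(e1*(n:ℝ)) + (n:ℝ)*(1/pr))) := by
          rw [ENNReal.inv_mul_cancel hC'0 hC't, ← ENNReal.rpow_add _ _ hτ0 hτt,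
            ← ENNReal.rpow_add _ _ hx0 hxt]
      _ = τ^(1/(2*pr)) * (2⁻¹:ℝ≥0∞)^(γ*(n:ℝ)) := by
          rw [one_mul]
          congr 1
          · congr 1
            field_simp
            ring
          · congr 1
            rw [he1]
            ring
  rw [hinner, ENNReal.mul_rpow_of_nonneg _ _ hqr0, ← ENNReal.rpow_mul, ← ENNReal.rpow_mul,
    hxe (γ*qr)]
  congr 1
  · congr 1
    field_simp
    try ring
  · congr 1
    ring


lemma two_pow_mul (e : ℝ) (n : ℕ) :
    (2:ℝ≥0∞)^n * ((2⁻¹:ℝ≥0∞)^e)^n = ((2⁻¹:ℝ≥0∞)^(e - 1))^n := by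
  rw [← mul_pow]
  congr 1
  rw [sub_eq_add_neg, ENNReal.rpow_add _ _ (by norm_num) (by norm_num), ENNReal.rpow_neg_one,
    inv_inv]
  ring

lemma ae_good (hk : Measurable (Function.uncurry k)) (hkB : ∀ l x, ‖k l x‖ ≤ B)
    (hp : 1 ≤ p) (hpq : p < q) (hC : C < ⊤)
    (hfm : StronglyMeasurable f) (hfp : MemLp f p (volume.restrict (Ioi (0:ℝ))))
    (hK : ∀ g : ℝ → ℂ, MemLp g p (volume.restrict (Ioi 0)) →
      eLpNorm (fun l => ∫ x in Ioi (0:ℝ), k l x * g x) q volume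
        ≤ C * eLpNorm g p (volume.restrict (Ioi 0))) :
    ∀ᵐ l : ℝ, ∀ K : ℕ, ∃ m : ℕ, ∀ t t' : ℝ, (m:ℝ) ≤ t → (m:ℝ) ≤ t' →
      ‖S k f t l - S k f t' l‖ ≤ 1/((K:ℝ)+1) := by
  have hp0 : p ≠ 0 := fun h => by simp [h] at hp
  have hptop : p ≠ ∞ := (hpq.trans_le le_top).ne
  set pr := p.toReal with hprd
  have hpr0 : 0 < pr := ENNReal.toReal_pos hp0 hptop
  haveI := nu_fin hp hptop hfp
  have hfin : ∀ s : Set ℝ, nu f pr s ≠ ∞ := fun s => measure_ne_top _ s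
  have hKpos : ∀ K : ℕ, (0:ℝ) < 1/((K:ℝ)+1) := fun K => by positivity
  by_cases hex : ∃ m0 : ℕ, nu f pr (Ioi ((m0:ℕ):ℝ)) = 0
  · obtain ⟨m0, hm0⟩ := hex
    refine Filter.Eventually.of_forall fun l K => ⟨m0, fun t t' ht ht' => ?_⟩
    rw [S_congr_zero hk hkB hp hfm hfp (Nat.cast_nonneg m0) hm0 ht l,
      S_congr_zero hk hkB hp hfm hfp (Nat.cast_nonneg m0) hm0 ht' l, sub_self, norm_zero]
    exact (hKpos K).le
  push_neg at hex
  have htau := tau_tendsto (f := f) (pr := pr) hfin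
  set C' : ℝ≥0∞ := C + 1 with hC'd
  have hC'0 : C' ≠ 0 := by simp [hC'd]
  have hC't : C' ≠ ∞ := ENNReal.add_ne_top.mpr ⟨hC.ne, ENNReal.one_ne_top⟩
  have hchunk : ∀ (m j s : ℕ), s + 1 < 2^j →
      eLpNorm (fun l =>
          S k f (Tj f pr ((m:ℕ):ℝ) j (s+1)) l - S k f (Tj f pr ((m:ℕ):ℝ) j s) l) q volume
        ≤ C' * (nu f pr (Ioi ((m:ℕ):ℝ)) * (2⁻¹:ℝ≥0∞)^j) ^ (1/pr) := fun m j s hs =>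
    (eLpNorm_chunk hk hkB hp hptop hfm hfp hK (Nat.cast_nonneg m) hfin (hex m) hs).trans
      (mul_le_mul_left le_self_add _)
  by_cases hqt : q = ∞
  case pos =>
    have hw3lt : ((2⁻¹:ℝ≥0∞))^(1/pr) < 1 := ENNReal.rpow_lt_one (by norm_num) (by positivity)
    have hw30 : ((1:ℝ≥0∞) - (2⁻¹:ℝ≥0∞)^(1/pr)) ≠ 0 := by
      rw [Ne, tsub_eq_zero_iff_le]; exact not_le.mpr hw3lt
    have hΘ3 : ((1:ℝ≥0∞) - (2⁻¹:ℝ≥0∞)^(1/pr))⁻¹ ≠ ∞ := ENNReal.inv_ne_top.mpr hw30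
    have hae : ∀ᵐ l : ℝ, ∀ (m j s : ℕ), s + 1 < 2^(j+1) →
        (‖S k f (Tj f pr ((m:ℕ):ℝ) (j+1) (s+1)) l - S k f (Tj f pr ((m:ℕ):ℝ) (j+1) s) l‖₊ : ℝ≥0∞)
          ≤ C' * (nu f pr (Ioi ((m:ℕ):ℝ)) * (2⁻¹:ℝ≥0∞)^(j+1)) ^ (1/pr) := by
      rw [ae_all_iff]; intro m
      rw [ae_all_iff]; intro j
      rw [ae_all_iff]; intro s
      by_cases hs : s + 1 < 2^(j+1)
      · have h1 := hchunk m (j+1) s hs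
        rw [hqt, eLpNorm_exponent_top] at h1
        filter_upwards [enorm_ae_le_eLpNormEssSup (fun l =>
          S k f (Tj f pr ((m:ℕ):ℝ) (j+1) (s+1)) l - S k f (Tj f pr ((m:ℕ):ℝ) (j+1) s) l)
          volume] with l hl
        exact fun _ => hl.trans h1
      · exact Filter.Eventually.of_forall fun l hs' => absurd hs' hs
    filter_upwards [hae] with l hl K
    have hΘ : (2 * C' * ((1:ℝ≥0∞) - (2⁻¹:ℝ≥0∞)^(1/pr))⁻¹) ≠ ∞ :=
      ENNReal.mul_ne_top (ENNReal.mul_ne_top ENNReal.ofNat_ne_top hC't) hΘ3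
    have hΘne0 : (2 * C' * ((1:ℝ≥0∞) - (2⁻¹:ℝ≥0∞)^(1/pr))⁻¹) ≠ 0 :=
      mul_ne_zero (mul_ne_zero two_ne_zero hC'0)
        (ENNReal.inv_ne_zero.mpr (ne_top_of_le_ne_top ENNReal.one_ne_top tsub_le_self))
    have hε0 : ENNReal.ofReal (1/((K:ℝ)+1)) ≠ 0 := by
      rw [Ne, ENNReal.ofReal_eq_zero, not_le]; exact hKpos K
    have hδ0 : ((ENNReal.ofReal (1/((K:ℝ)+1)) / (2 * C' * ((1:ℝ≥0∞) - (2⁻¹:ℝ≥0∞)^(1/pr))⁻¹))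
        ^ (1/(1/pr))) ≠ 0 := by
      apply rpow_ne_zero'
      · rw [div_eq_mul_inv]
        exact mul_ne_zero hε0 (ENNReal.inv_ne_zero.mpr hΘ)
      · rw [div_eq_mul_inv]
        exact ENNReal.mul_ne_top ENNReal.ofReal_ne_top (ENNReal.inv_ne_top.mpr hΘne0)
    obtain ⟨m, hm⟩ := (htau.eventually_lt_const (pos_iff_ne_zero.mpr hδ0)).exists
    refine ⟨m, fun t t' ht ht' => ?_⟩
    have hMx : ∑' j : ℕ, Mx k f pr ((m:ℕ):ℝ) (j+1) l
        ≤ C' * (nu f pr (Ioi ((m:ℕ):ℝ)))^(1/pr) * ((1:ℝ≥0∞) - (2⁻¹:ℝ≥0∞)^(1/pr))⁻¹ := by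
      calc ∑' j : ℕ, Mx k f pr ((m:ℕ):ℝ) (j+1) l
          ≤ ∑' j : ℕ, (C' * (nu f pr (Ioi ((m:ℕ):ℝ)))^(1/pr)) * ((2⁻¹:ℝ≥0∞)^(1/pr))^(j+1) := by
            refine ENNReal.tsum_le_tsum fun j => ?_
            refine Mx_le fun s hs => ?_
            refine (hl m j s hs).trans (le_of_eq ?_)
            rw [mass_rpow _ _ (by positivity : (0:ℝ) ≤ 1/pr)]
            ring
        _ = (C' * (nu f pr (Ioi ((m:ℕ):ℝ)))^(1/pr)) * ∑' j : ℕ, ((2⁻¹:ℝ≥0∞)^(1/pr))^(j+1) :=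
            ENNReal.tsum_mul_left
        _ ≤ _ := mul_le_mul_right (geom_tail hw3lt.le) _
    have hosc := osc_le hk hkB hp hfm hfp (Nat.cast_nonneg m) hfin hpr0 ht ht' (l := l)
    have hbound : (‖S k f t l - S k f t' l‖₊ : ℝ≥0∞) ≤ ENNReal.ofReal (1/((K:ℝ)+1)) := by
      refine hosc.trans ?_
      calc 2 * ∑' j : ℕ, Mx k f pr ((m:ℕ):ℝ) (j+1) l
          ≤ 2 * (C' * (nu f pr (Ioi ((m:ℕ):ℝ)))^(1/pr)
              * ((1:ℝ≥0∞) - (2⁻¹:ℝ≥0∞)^(1/pr))⁻¹) := mul_le_mul_right hMx 2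
        _ = (2 * C' * ((1:ℝ≥0∞) - (2⁻¹:ℝ≥0∞)^(1/pr))⁻¹)
            * (nu f pr (Ioi ((m:ℕ):ℝ)))^(1/pr) := by ring
        _ ≤ ENNReal.ofReal (1/((K:ℝ)+1)) := rpow_small (by positivity) hΘ hε0 hm.le
    exact norm_le_of_enorm (hKpos K).le hbound
  case neg =>
    have hq1 : 1 ≤ q := hp.trans hpq.le
    have hq0 : q ≠ 0 := by
      intro h
      rw [h] at hq1
      simp at hq1
    set qr := q.toReal with hqrd
    have hqr0 : 0 < qr := ENNReal.toReal_pos hq0 hqt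
    have hprqr : pr < qr := by
      rw [hprd, hqrd]
      exact (ENNReal.toReal_lt_toReal hptop hqt).mpr hpq
    have he1 : (1/pr - 1/qr)/2 = 1/pr - (1/pr + 1/qr)/2 := by ring
    have he1pos : 0 < (1/pr - 1/qr)/2 := by
      have h1 : 1/qr < 1/pr := one_div_lt_one_div_of_lt hpr0 hprqr
      linarith
    have he2pos : 0 < ((1/pr + 1/qr)/2) * qr - 1 := by
      have h1 : ((1/pr + 1/qr)/2) * qr = (qr/pr + 1)/2 := by
        field_simp
      rw [h1]
      have h2 : 1 < qr/pr := (one_lt_div hpr0).mpr hprqr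
      linarith
    have hw1lt : ((2⁻¹:ℝ≥0∞))^((1/pr - 1/qr)/2) < 1 := ENNReal.rpow_lt_one (by norm_num) he1pos
    have hw10 : ((1:ℝ≥0∞) - (2⁻¹:ℝ≥0∞)^((1/pr - 1/qr)/2)) ≠ 0 := by
      rw [Ne, tsub_eq_zero_iff_le]; exact not_le.mpr hw1lt
    have hw2lt : ((2⁻¹:ℝ≥0∞))^(((1/pr + 1/qr)/2) * qr - 1) < 1 :=
      ENNReal.rpow_lt_one (by norm_num) he2pos
    have hw20 : ((1:ℝ≥0∞) - (2⁻¹:ℝ≥0∞)^(((1/pr + 1/qr)/2) * qr - 1)) ≠ 0 := by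
      rw [Ne, tsub_eq_zero_iff_le]; exact not_le.mpr hw2lt
    set aT : ℕ → ℕ → ℝ≥0∞ := fun m j =>
      C' * (nu f pr (Ioi ((m:ℕ):ℝ)))^(1/(2*pr)) * ((2⁻¹:ℝ≥0∞)^((1/pr - 1/qr)/2))^j with haTd
    have haT0 : ∀ m j, aT m j ≠ 0 := fun m j =>
      mul_ne_zero (mul_ne_zero hC'0 (rpow_ne_zero' (hex m) (hfin _) _))
        (pow_ne_zero _ (rpow_ne_zero' (by norm_num) (by norm_num) _))
    set E : ℕ → Set ℝ := fun m =>
      ⋃ (j : ℕ), ⋃ s ∈ Finset.range (2^(j+1) - 1),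
        {l : ℝ | aT m (j+1) ≤ (‖S k f (Tj f pr ((m:ℕ):ℝ) (j+1) (s+1)) l
          - S k f (Tj f pr ((m:ℕ):ℝ) (j+1) s) l‖₊ : ℝ≥0∞)} with hEd
    have hEle : ∀ m : ℕ, volume (E m)
        ≤ ((1:ℝ≥0∞) - (2⁻¹:ℝ≥0∞)^(((1/pr + 1/qr)/2) * qr - 1))⁻¹
          * (nu f pr (Ioi ((m:ℕ):ℝ)))^(qr/(2*pr)) := by
      intro m
      refine (measure_iUnion_le _).trans ?_
      have hj : ∀ j : ℕ, volume (⋃ s ∈ Finset.range (2^(j+1) - 1),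
          {l : ℝ | aT m (j+1) ≤ (‖S k f (Tj f pr ((m:ℕ):ℝ) (j+1) (s+1)) l
            - S k f (Tj f pr ((m:ℕ):ℝ) (j+1) s) l‖₊ : ℝ≥0∞)})
          ≤ (nu f pr (Ioi ((m:ℕ):ℝ)))^(qr/(2*pr))
            * ((2⁻¹:ℝ≥0∞)^((((1/pr + 1/qr)/2)) * qr - 1))^(j+1) := by
        intro j
        refine (measure_biUnion_finset_le _ _).trans ?_
        have hsb : ∀ s ∈ Finset.range (2^(j+1) - 1),
            volume {l : ℝ | aT m (j+1) ≤ (‖S k f (Tj f pr ((m:ℕ):ℝ) (j+1) (s+1)) l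
              - S k f (Tj f pr ((m:ℕ):ℝ) (j+1) s) l‖₊ : ℝ≥0∞)}
            ≤ (nu f pr (Ioi ((m:ℕ):ℝ)))^(qr/(2*pr))
              * ((2⁻¹:ℝ≥0∞)^((((1/pr + 1/qr)/2)) * qr))^(j+1) := by
          intro s hs
          have hsr : s + 1 < 2^(j+1) := by
            have h1 := Finset.mem_range.mp hs
            have h2 : 1 ≤ 2^(j+1) := Nat.one_le_two_pow
            omega
          have hcheb := meas_ge_le_mul_pow_eLpNorm_enorm (μ := volume) hq0 hqt
            ((S_measurable hk hfm (Tj f pr ((m:ℕ):ℝ) (j+1) (s+1))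
              (Tj f pr ((m:ℕ):ℝ) (j+1) s)).aestronglyMeasurable) (haT0 m (j+1)) (by simp)
          refine hcheb.trans ?_
          have h2 : eLpNorm (fun l => S k f (Tj f pr ((m:ℕ):ℝ) (j+1) (s+1)) l
              - S k f (Tj f pr ((m:ℕ):ℝ) (j+1) s) l) q volume ^ q.toReal
              ≤ (C' * (nu f pr (Ioi ((m:ℕ):ℝ)) * (2⁻¹:ℝ≥0∞)^(j+1))^(1/pr)) ^ qr := by
            rw [← hqrd]
            exact ENNReal.rpow_le_rpow (hchunk m (j+1) s hsr) hqr0.le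
          rw [← hqrd]
          refine le_trans (mul_le_mul_right h2 _) (le_of_eq ?_)
          rw [haTd]
          exact cheb_alg hC'0 hC't (hex m) (hfin _) hpr0 hqr0.le he1 (j+1)
        refine (Finset.sum_le_sum hsb).trans ?_
        rw [Finset.sum_const, Finset.card_range, nsmul_eq_mul]
        calc ((2^(j+1) - 1 : ℕ) : ℝ≥0∞)
              * ((nu f pr (Ioi ((m:ℕ):ℝ)))^(qr/(2*pr))
                * ((2⁻¹:ℝ≥0∞)^((((1/pr + 1/qr)/2)) * qr))^(j+1))
            ≤ ((2:ℝ≥0∞))^(j+1)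
              * ((nu f pr (Ioi ((m:ℕ):ℝ)))^(qr/(2*pr))
                * ((2⁻¹:ℝ≥0∞)^((((1/pr + 1/qr)/2)) * qr))^(j+1)) := by
              refine mul_le_mul_left ?_ _
              calc ((2^(j+1) - 1 : ℕ) : ℝ≥0∞) ≤ ((2^(j+1) : ℕ) : ℝ≥0∞) :=
                    Nat.cast_le.mpr (Nat.sub_le _ _)
                _ = (2:ℝ≥0∞)^(j+1) := by push_cast; ring
          _ = (nu f pr (Ioi ((m:ℕ):ℝ)))^(qr/(2*pr))
              * ((2⁻¹:ℝ≥0∞)^((((1/pr + 1/qr)/2)) * qr - 1))^(j+1) := by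
              rw [← two_pow_mul]
              ring
      refine (ENNReal.tsum_le_tsum hj).trans ?_
      rw [ENNReal.tsum_mul_left, mul_comm]
      exact mul_le_mul_left (geom_tail hw2lt.le) _
    have hsub : ∀ i : ℕ, ∃ m : ℕ,
        volume (E m) ≤ (2⁻¹:ℝ≥0∞)^i ∧
        (2 * C' * ((1:ℝ≥0∞) - (2⁻¹:ℝ≥0∞)^((1/pr - 1/qr)/2))⁻¹)
            * (nu f pr (Ioi ((m:ℕ):ℝ)))^(1/(2*pr))
          ≤ ENNReal.ofReal (1/((i:ℝ)+1)) := by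
      intro i
      have hΘa : ((1:ℝ≥0∞) - (2⁻¹:ℝ≥0∞)^(((1/pr + 1/qr)/2) * qr - 1))⁻¹ ≠ ∞ :=
        ENNReal.inv_ne_top.mpr hw20
      have hΘa0 : ((1:ℝ≥0∞) - (2⁻¹:ℝ≥0∞)^(((1/pr + 1/qr)/2) * qr - 1))⁻¹ ≠ 0 :=
        ENNReal.inv_ne_zero.mpr (ne_top_of_le_ne_top ENNReal.one_ne_top tsub_le_self)
      have hΘb : (2 * C' * ((1:ℝ≥0∞) - (2⁻¹:ℝ≥0∞)^((1/pr - 1/qr)/2))⁻¹) ≠ ∞ :=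
        ENNReal.mul_ne_top (ENNReal.mul_ne_top ENNReal.ofNat_ne_top hC't)
          (ENNReal.inv_ne_top.mpr hw10)
      have hΘb0 : (2 * C' * ((1:ℝ≥0∞) - (2⁻¹:ℝ≥0∞)^((1/pr - 1/qr)/2))⁻¹) ≠ 0 :=
        mul_ne_zero (mul_ne_zero two_ne_zero hC'0)
          (ENNReal.inv_ne_zero.mpr (ne_top_of_le_ne_top ENNReal.one_ne_top tsub_le_self))
      have hε1 : ((2⁻¹:ℝ≥0∞))^i ≠ 0 := pow_ne_zero _ (by norm_num)
      have hε2 : ENNReal.ofReal (1/((i:ℝ)+1)) ≠ 0 := by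
        rw [Ne, ENNReal.ofReal_eq_zero, not_le]; exact hKpos i
      have hδ10 : ((((2⁻¹:ℝ≥0∞))^i
          / ((1:ℝ≥0∞) - (2⁻¹:ℝ≥0∞)^(((1/pr + 1/qr)/2) * qr - 1))⁻¹) ^ (1/(qr/(2*pr)))) ≠ 0 := by
        apply rpow_ne_zero'
        · rw [div_eq_mul_inv]
          exact mul_ne_zero hε1 (ENNReal.inv_ne_zero.mpr hΘa)
        · rw [div_eq_mul_inv]
          refine ENNReal.mul_ne_top ?_ (ENNReal.inv_ne_top.mpr hΘa0)
          exact ENNReal.pow_ne_top (by norm_num)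
      have hδ20 : ((ENNReal.ofReal (1/((i:ℝ)+1))
          / (2 * C' * ((1:ℝ≥0∞) - (2⁻¹:ℝ≥0∞)^((1/pr - 1/qr)/2))⁻¹)) ^ (1/(1/(2*pr)))) ≠ 0 := by
        apply rpow_ne_zero'
        · rw [div_eq_mul_inv]
          exact mul_ne_zero hε2 (ENNReal.inv_ne_zero.mpr hΘb)
        · rw [div_eq_mul_inv]
          exact ENNReal.mul_ne_top ENNReal.ofReal_ne_top (ENNReal.inv_ne_top.mpr hΘb0)
      have hmin : 0 < min ((((2⁻¹:ℝ≥0∞))^i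
          / ((1:ℝ≥0∞) - (2⁻¹:ℝ≥0∞)^(((1/pr + 1/qr)/2) * qr - 1))⁻¹) ^ (1/(qr/(2*pr))))
          ((ENNReal.ofReal (1/((i:ℝ)+1))
          / (2 * C' * ((1:ℝ≥0∞) - (2⁻¹:ℝ≥0∞)^((1/pr - 1/qr)/2))⁻¹)) ^ (1/(1/(2*pr)))) :=
        lt_min (pos_iff_ne_zero.mpr hδ10) (pos_iff_ne_zero.mpr hδ20)
      obtain ⟨m, hm⟩ := (htau.eventually_lt_const hmin).exists
      refine ⟨m, ?_, ?_⟩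
      · refine (hEle m).trans ?_
        exact rpow_small (by positivity) hΘa hε1 ((hm.trans_le (min_le_left _ _)).le)
      · exact rpow_small (by positivity) hΘb hε2 ((hm.trans_le (min_le_right _ _)).le)
    choose mseq hms1 hms2 using hsub
    have hBC : volume (Filter.limsup (fun i => E (mseq i)) atTop) = 0 := by
      apply measure_limsup_atTop_eq_zero
      refine ne_top_of_le_ne_top ?_ (ENNReal.tsum_le_tsum hms1)
      rw [ENNReal.tsum_geometric]
      exact ENNReal.inv_ne_top.mpr (by norm_num)
    filter_upwards [measure_eq_zero_iff_ae_notMem.mp hBC] with l hl K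
    have hev : ∀ᶠ i in atTop, l ∉ E (mseq i) := by
      rw [← Filter.not_frequently]
      intro hfreq
      exact hl (mem_limsup_iff_frequently_mem.mpr hfreq)
    obtain ⟨I, hI⟩ := Filter.eventually_atTop.mp hev
    have hnot : l ∉ E (mseq (max I K)) := hI (max I K) (le_max_left _ _)
    refine ⟨mseq (max I K), fun t t' ht ht' => ?_⟩
    have hth : ∀ j s : ℕ, s + 1 < 2^(j+1) →
        (‖S k f (Tj f pr ((mseq (max I K) : ℕ):ℝ) (j+1) (s+1)) l
          - S k f (Tj f pr ((mseq (max I K) : ℕ):ℝ) (j+1) s) l‖₊ : ℝ≥0∞)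
          ≤ aT (mseq (max I K)) (j+1) := by
      intro j s hs
      by_contra hcon
      apply hnot
      rw [hEd]
      simp only [mem_iUnion]
      refine ⟨j, s, ?_, ?_⟩
      · refine Finset.mem_range.mpr ?_
        have h2 : 1 ≤ 2^(j+1) := Nat.one_le_two_pow
        omega
      · exact (not_le.mp hcon).le
    have hMx : ∑' j : ℕ, Mx k f pr ((mseq (max I K) : ℕ):ℝ) (j+1) l
        ≤ C' * (nu f pr (Ioi ((mseq (max I K) : ℕ):ℝ)))^(1/(2*pr))
          * ((1:ℝ≥0∞) - (2⁻¹:ℝ≥0∞)^((1/pr - 1/qr)/2))⁻¹ := by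
      calc ∑' j : ℕ, Mx k f pr ((mseq (max I K) : ℕ):ℝ) (j+1) l
          ≤ ∑' j : ℕ, aT (mseq (max I K)) (j+1) :=
            ENNReal.tsum_le_tsum fun j => Mx_le fun s hs => hth j s hs
        _ = (C' * (nu f pr (Ioi ((mseq (max I K) : ℕ):ℝ)))^(1/(2*pr)))
            * ∑' j : ℕ, ((2⁻¹:ℝ≥0∞)^((1/pr - 1/qr)/2))^(j+1) := by
            rw [haTd, ENNReal.tsum_mul_left]
        _ ≤ _ := mul_le_mul_right (geom_tail hw1lt.le) _
    have hosc := osc_le hk hkB hp hfm hfp (Nat.cast_nonneg _) hfin hpr0 ht ht' (l := l)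
    have hb2 : (‖S k f t l - S k f t' l‖₊:ℝ≥0∞)
        ≤ ENNReal.ofReal (1/((((max I K : ℕ)):ℝ)+1)) := by
      refine hosc.trans ?_
      calc 2 * ∑' j : ℕ, Mx k f pr ((mseq (max I K) : ℕ):ℝ) (j+1) l
          ≤ 2 * (C' * (nu f pr (Ioi ((mseq (max I K) : ℕ):ℝ)))^(1/(2*pr))
            * ((1:ℝ≥0∞) - (2⁻¹:ℝ≥0∞)^((1/pr - 1/qr)/2))⁻¹) := mul_le_mul_right hMx 2
        _ = (2 * C' * ((1:ℝ≥0∞) - (2⁻¹:ℝ≥0∞)^((1/pr - 1/qr)/2))⁻¹)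
            * (nu f pr (Ioi ((mseq (max I K) : ℕ):ℝ)))^(1/(2*pr)) := by ring
        _ ≤ ENNReal.ofReal (1/((((max I K : ℕ)):ℝ)+1)) := hms2 (max I K)
    have hnorm : ‖S k f t l - S k f t' l‖ ≤ 1/((((max I K : ℕ)):ℝ)+1) :=
      norm_le_of_enorm (hKpos (max I K)).le hb2
    refine hnorm.trans ?_
    apply one_div_le_one_div_of_le (by positivity)
    have h3 : (K:ℝ) ≤ (max I K : ℕ) := by exact_mod_cast le_max_right I K
    linarith

end Stmt1

/-- If `K f (λ) = ∫₀^∞ k(λ,x) f(x) dx` is a bounded integral operator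
from `L^p` to `L^q`, `1 ≤ p < q ≤ ∞`, with bounded measurable kernel, then for every
`f ∈ L^p(ℝ⁺)` the truncated integrals `∫₀^N k(λ,x) f(x) dx` converge to a finite
limit as `N → ∞`, for almost every `λ`. -/
theorem stmt1 (p q : ℝ≥0∞) (hp : 1 ≤ p) (hpq : p < q)
    (k : ℝ → ℝ → ℂ) (hk : Measurable (Function.uncurry k))
    (B : ℝ) (hkB : ∀ l x, ‖k l x‖ ≤ B)
    (C : ℝ≥0∞) (hC : C < ⊤)
    (hK : ∀ f : ℝ → ℂ, MemLp f p (volume.restrict (Ioi 0)) →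
      eLpNorm (fun l => ∫ x in Ioi (0:ℝ), k l x * f x) q volume
        ≤ C * eLpNorm f p (volume.restrict (Ioi 0))) :
    ∀ f : ℝ → ℂ, MemLp f p (volume.restrict (Ioi 0)) →
      ∀ᵐ l : ℝ, ∃ L : ℂ,
        Tendsto (fun N : ℝ => ∫ x in Ioc (0:ℝ) N, k l x * f x) atTop (𝓝 L) := by
  intro f hf
  set f' : ℝ → ℂ := hf.1.mk f with hf'd
  have hf'm : StronglyMeasurable f' := hf.1.stronglyMeasurable_mk
  have hff' : f =ᵐ[volume.restrict (Ioi (0:ℝ))] f' := hf.1.ae_eq_mk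
  have hfp' : MemLp f' p (volume.restrict (Ioi (0:ℝ))) := hf.ae_eq hff'
  have hK' : ∀ g : ℝ → ℂ, MemLp g p (volume.restrict (Ioi 0)) →
      eLpNorm (fun l => ∫ x in Ioi (0:ℝ), k l x * g x) q volume
        ≤ C * eLpNorm g p (volume.restrict (Ioi 0)) := hK
  have hSeq : ∀ (N : ℝ) (l : ℝ),
      (∫ x in Ioc (0:ℝ) N, k l x * f x) = Stmt1.S k f' N l := by
    intro N l
    apply integral_congr_ae
    have h1 : f =ᵐ[volume.restrict (Ioc (0:ℝ) N)] f' := by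
      rw [← Stmt1.restrict_Ioc le_rfl]
      exact hff'.restrict
    filter_upwards [h1] with x hx
    rw [hx]
  have main := Stmt1.ae_good hk hkB hp hpq hC hf'm hfp' hK'
  filter_upwards [main] with l hl
  obtain ⟨L, hL⟩ := Stmt1.good_limit hl
  refine ⟨L, ?_⟩
  have heq : (fun N : ℝ => ∫ x in Ioc (0:ℝ) N, k l x * f x) = fun N : ℝ => Stmt1.S k f' N l :=
    funext fun N => hSeq N l
  rw [heq]
  exact hL
end

section
/- Let (X,μ) and (Y,ν) be σ-finite measure spaces, let 1 ≤ p < q ≤ ∞, and let K : L^p(X) → L^q(Y) be a bounded linear operator. For any increasing sequence of measurable sets E_n ⊆ E_{n+1} ⊆ X, the maximal function M_K f(y) = sup_n |K(f·χ_{E_n})(y)| satisfies ‖M_K f‖_{L^q(Y)} ≤ A ‖K‖_{p,q} ‖f‖_{L^p(X)}, where A < ∞ depends only on p and q. -/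
open MeasureTheory Set
open scoped ENNReal NNReal

namespace CKaux

lemma iSup_rpow {ι : Sort*} (f : ι → ℝ≥0∞) {r : ℝ} (hr : 0 < r) :
    (⨆ i, f i) ^ r = ⨆ i, f i ^ r := by
  cases isEmpty_or_nonempty ι
  · simp [iSup_of_empty, ENNReal.zero_rpow_of_pos hr]
  · have h := (ENNReal.orderIsoRpow r hr).map_iSup f
    simp only [ENNReal.orderIsoRpow_apply] at h
    exact h

lemma ofReal_iSup_le (g : ℕ → ℝ) (hg : ∀ n, 0 ≤ g n) :
    ((‖⨆ n, g n‖₊ : ℝ≥0) : ℝ≥0∞) ≤ ⨆ n, ((‖g n‖₊ : ℝ≥0) : ℝ≥0∞) := by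
  have hpt : ∀ x : ℝ, 0 ≤ x → ((‖x‖₊ : ℝ≥0) : ℝ≥0∞) = ENNReal.ofReal x := fun x hx => by
    rw [← enorm_eq_nnnorm, ← ofReal_norm, Real.norm_of_nonneg hx]
  have hsup0 : 0 ≤ ⨆ n, g n := Real.iSup_nonneg hg
  rw [hpt _ hsup0]
  by_cases hbdd : BddAbove (Set.range g)
  · set S := ⨆ n, ((‖g n‖₊ : ℝ≥0) : ℝ≥0∞) with hS
    by_cases hStop : S = ∞
    · exact hStop ▸ le_top
    · have hle : ∀ n, g n ≤ S.toReal := by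
        intro n
        have h1 : ((‖g n‖₊ : ℝ≥0) : ℝ≥0∞) ≤ S := le_iSup (fun n => ((‖g n‖₊ : ℝ≥0) : ℝ≥0∞)) n
        have h2 := ENNReal.toReal_mono hStop h1
        rwa [hpt _ (hg n), ENNReal.toReal_ofReal (hg n)] at h2
      have h3 : (⨆ n, g n) ≤ S.toReal := Real.iSup_le hle ENNReal.toReal_nonneg
      calc ENNReal.ofReal (⨆ n, g n) ≤ ENNReal.ofReal S.toReal := ENNReal.ofReal_le_ofReal h3
        _ = S := ENNReal.ofReal_toReal hStop
  · rw [Real.iSup_of_not_bddAbove hbdd]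
    simp

lemma c_facts {e : ℝ} (he : e < 0) :
    (1 - (2:ℝ≥0∞) ^ e)⁻¹ ≠ ∞ ∧ 1 ≤ (1 - (2:ℝ≥0∞) ^ e)⁻¹ ∧
      1 + (2:ℝ≥0∞) ^ e * (1 - (2:ℝ≥0∞) ^ e)⁻¹ = (1 - (2:ℝ≥0∞) ^ e)⁻¹ := by
  set b := (2:ℝ≥0∞) ^ e with hb
  have hb1 : b < 1 := ENNReal.rpow_lt_one_of_one_lt_of_neg (by norm_num) he
  have h0 : (1:ℝ≥0∞) - b ≠ 0 := by
    simp only [ne_eq, tsub_eq_zero_iff_le]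
    exact fun h => absurd h hb1.not_ge
  have ht : (1:ℝ≥0∞) - b ≠ ∞ := ne_top_of_le_ne_top (by norm_num) tsub_le_self
  refine ⟨ENNReal.inv_ne_top.2 h0, ?_, ?_⟩
  · simpa using ENNReal.inv_le_inv.2 (tsub_le_self : (1:ℝ≥0∞) - b ≤ 1)
  · have hcan : (1 - b) * (1 - b)⁻¹ = 1 := ENNReal.mul_inv_cancel h0 ht
    calc 1 + b * (1-b)⁻¹ = (1-b) * (1-b)⁻¹ + b * (1-b)⁻¹ := by rw [hcan]
      _ = ((1-b) + b) * (1-b)⁻¹ := by rw [add_mul]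
      _ = 1 * (1-b)⁻¹ := by rw [tsub_add_cancel_of_le hb1.le]
      _ = (1-b)⁻¹ := one_mul _

variable {X Y : Type} [MeasurableSpace X] [MeasurableSpace Y]
  {μ : Measure X} {ν : Measure Y} {p q : ℝ≥0∞}

/-- indicator of an Lp function as an Lp element -/
noncomputable def psi [Fact (1 ≤ p)] (s : Set X) (hs : MeasurableSet s) (φ : Lp ℂ p μ) :
    Lp ℂ p μ :=
  MemLp.toLp _ ((Lp.memLp φ).indicator hs)

lemma psi_coe [Fact (1 ≤ p)] (s : Set X) (hs : MeasurableSet s) (φ : Lp ℂ p μ) :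
    (psi s hs φ : X → ℂ) =ᵐ[μ] s.indicator (φ : X → ℂ) :=
  MemLp.coeFn_toLp _

lemma indicator_split {s t : Set X} (hst : s ⊆ t) (f : X → ℂ) :
    t.indicator f = s.indicator f + t.indicator (sᶜ.indicator f) := by
  funext x
  by_cases hs : x ∈ s
  · have ht : x ∈ t := hst hs
    simp [Set.indicator_of_mem, hs, ht, Set.indicator_of_notMem]
  · by_cases ht : x ∈ t <;>
      simp [Set.indicator_of_mem, Set.indicator_of_notMem, hs, ht]

lemma psi_split [Fact (1 ≤ p)] {s t : Set X} (hst : s ⊆ t) (hs : MeasurableSet s)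
    (ht : MeasurableSet t) (φ : Lp ℂ p μ) :
    psi t ht φ = psi s hs φ + psi t ht (psi sᶜ hs.compl φ) := by
  apply Lp.ext
  have h1 := psi_coe t ht φ
  have h2 := psi_coe s hs φ
  have h3 := psi_coe t ht (psi sᶜ hs.compl φ)
  have h4 := psi_coe sᶜ hs.compl φ
  have h5 : (t.indicator ((psi sᶜ hs.compl φ : X → ℂ)) : X → ℂ)
      =ᵐ[μ] t.indicator (sᶜ.indicator (φ : X → ℂ)) := h4.indicator
  filter_upwards [h1, h2, h3.trans h5,
    Lp.coeFn_add (psi s hs φ) (psi t ht (psi sᶜ hs.compl φ))] with x hx1 hx2 hx3 hx4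
  rw [hx1, hx4, Pi.add_apply, hx2, hx3, indicator_split hst]
  rfl

lemma nnnorm_ind_rpow {ρ : ℝ} (hρ : 0 < ρ) (s : Set X) (f : X → ℂ) (x : X) :
    ((‖s.indicator f x‖₊ : ℝ≥0) : ℝ≥0∞) ^ ρ
      = s.indicator (fun x => ((‖f x‖₊ : ℝ≥0) : ℝ≥0∞) ^ ρ) x := by
  by_cases hx : x ∈ s
  · simp [Set.indicator_of_mem hx]
  · simp [Set.indicator_of_notMem hx, ENNReal.zero_rpow_of_pos hρ]

lemma eLpNorm_ind (hp0 : p ≠ 0) (hpt : p ≠ ∞) (s : Set X) (hs : MeasurableSet s) (f : X → ℂ) :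
    eLpNorm (s.indicator f) p μ
      = (∫⁻ x in s, ((‖f x‖₊ : ℝ≥0) : ℝ≥0∞) ^ p.toReal ∂μ) ^ (1 / p.toReal) := by
  rw [eLpNorm_eq_lintegral_rpow_enorm_toReal hp0 hpt, ← lintegral_indicator hs]
  congr 1
  exact lintegral_congr fun x => nnnorm_ind_rpow (ENNReal.toReal_pos hp0 hpt) s f x

lemma eLpNorm_psi [Fact (1 ≤ p)] (hpt : p ≠ ∞) (s : Set X) (hs : MeasurableSet s)
    (φ : Lp ℂ p μ) :
    eLpNorm (psi s hs φ : X → ℂ) p μ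
      = (∫⁻ x in s, ((‖(φ : X → ℂ) x‖₊ : ℝ≥0) : ℝ≥0∞) ^ p.toReal ∂μ) ^ (1 / p.toReal) := by
  have hp0 : p ≠ 0 := by
    have h := (Fact.out : (1:ℝ≥0∞) ≤ p); intro h0; rw [h0] at h; simp at h
  rw [eLpNorm_congr_ae (psi_coe s hs φ), eLpNorm_ind hp0 hpt s hs _]

lemma mass_compl [Fact (1 ≤ p)] {ρ : ℝ} (hρ : 0 < ρ) {s t : Set X} (hs : MeasurableSet s)
    (φ : Lp ℂ p μ) :
    ∫⁻ x in t, ((‖(psi sᶜ hs.compl φ : X → ℂ) x‖₊ : ℝ≥0) : ℝ≥0∞) ^ ρ ∂μ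
      = ∫⁻ x in t \ s, ((‖(φ : X → ℂ) x‖₊ : ℝ≥0) : ℝ≥0∞) ^ ρ ∂μ := by
  have h1 : ∀ᵐ x ∂μ, ((‖(psi sᶜ hs.compl φ : X → ℂ) x‖₊ : ℝ≥0) : ℝ≥0∞) ^ ρ
      = sᶜ.indicator (fun x => ((‖(φ : X → ℂ) x‖₊ : ℝ≥0) : ℝ≥0∞) ^ ρ) x := by
    filter_upwards [psi_coe sᶜ hs.compl φ] with x hx
    rw [hx, nnnorm_ind_rpow hρ]
  rw [lintegral_congr_ae (ae_restrict_of_ae h1), lintegral_indicator hs.compl,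
    Measure.restrict_restrict hs.compl, Set.inter_comm, ← Set.diff_eq]

lemma op_bound [Fact (1 ≤ p)] [Fact (1 ≤ q)] (K : Lp ℂ p μ →L[ℂ] Lp ℂ q ν) (ψ : Lp ℂ p μ) :
    eLpNorm ((K ψ : Lp ℂ q ν) : Y → ℂ) q ν ≤ (‖K‖₊ : ℝ≥0∞) * eLpNorm (ψ : X → ℂ) p μ := by
  rw [← ENNReal.coe_toNNReal (Lp.eLpNorm_ne_top (K ψ)), ← Lp.nnnorm_def,
    ← ENNReal.coe_toNNReal (Lp.eLpNorm_ne_top ψ), ← Lp.nnnorm_def, ← ENNReal.coe_mul,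
    ENNReal.coe_le_coe]
  exact K.le_opNNNorm ψ

lemma aemeas_biSup (s : Finset ℕ) (g : ℕ → Y → ℝ≥0∞) (hg : ∀ n, AEMeasurable (g n) ν) :
    AEMeasurable (fun y => ⨆ n ∈ s, g n y) ν := by
  have h : (fun y => ⨆ n ∈ s, g n y) = fun y => ⨆ n ∈ (↑s : Set ℕ), g n y := by
    simp only [Finset.mem_coe]
  rw [h]
  exact AEMeasurable.biSup _ (s : Set ℕ).to_countable (fun i _ => hg i)

end CKaux

open CKaux

/-- The finite Christ–Kiselev induction. -/
lemma CK_main {X Y : Type} [MeasurableSpace X] [MeasurableSpace Y]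
    {μ : Measure X} {ν : Measure Y} {p q : ℝ≥0∞} [Fact (1 ≤ p)] [Fact (1 ≤ q)]
    (hpq : p < q) (hqt : q ≠ ∞)
    (K : Lp ℂ p μ →L[ℂ] Lp ℂ q ν) (E : ℕ → Set X) (hE : ∀ n, MeasurableSet (E n))
    (hmono : Monotone E) :
    ∀ N : ℕ, ∀ s : Finset ℕ, s.card ≤ N → ∀ φ : Lp ℂ p μ, ∀ δ : ℝ≥0∞,
      (∀ n ∈ s, ∫⁻ x in E n, ((‖(φ : X → ℂ) x‖₊ : ℝ≥0) : ℝ≥0∞) ^ p.toReal ∂μ ≤ δ) →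
      (∫⁻ y, (⨆ n ∈ s, ((‖((K (psi (E n) (hE n) φ) : Lp ℂ q ν) : Y → ℂ) y‖₊ : ℝ≥0)
          : ℝ≥0∞)) ^ q.toReal ∂ν) ^ (1 / q.toReal)
        ≤ (1 - (2:ℝ≥0∞) ^ (1 / q.toReal - 1 / p.toReal))⁻¹ * (‖K‖₊ : ℝ≥0∞)
          * δ ^ (1 / p.toReal) := by
  classical
  have hp1 : (1:ℝ≥0∞) ≤ p := Fact.out
  have hq1 : (1:ℝ≥0∞) ≤ q := Fact.out
  have hp0 : p ≠ 0 := fun h => by rw [h] at hp1; simp at hp1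
  have hq0 : q ≠ 0 := fun h => by rw [h] at hq1; simp at hq1
  have hpt : p ≠ ∞ := (hpq.trans_le le_top).ne
  set ρ := p.toReal with hρ_def
  set r := q.toReal with hr_def
  have hρ0 : 0 < ρ := ENNReal.toReal_pos hp0 hpt
  have hr0 : 0 < r := ENNReal.toReal_pos hq0 hqt
  have hr1 : 1 ≤ r := by
    have h := ENNReal.toReal_mono hqt hq1
    rwa [ENNReal.toReal_one] at h
  have he : 1 / r - 1 / ρ < 0 := by
    have hlt : ρ < r := ENNReal.toReal_strict_mono hqt hpq
    have := one_div_lt_one_div_of_lt hρ0 hlt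
    linarith
  set b := (2:ℝ≥0∞) ^ (1 / r - 1 / ρ) with hb_def
  set c := (1 - b)⁻¹ with hc_def
  obtain ⟨hcT, hc1, hcid⟩ := c_facts he
  -- masses
  set m : ℕ → Lp ℂ p μ → ℝ≥0∞ :=
    fun n ψ => ∫⁻ x in E n, ((‖(ψ : X → ℂ) x‖₊ : ℝ≥0) : ℝ≥0∞) ^ ρ ∂μ with hm_def
  have hm_mono : ∀ (ψ : Lp ℂ p μ) {a b : ℕ}, a ≤ b → m a ψ ≤ m b ψ :=
    fun ψ a b hab => lintegral_mono_set (hmono hab)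
  have hm_top : ∀ (ψ : Lp ℂ p μ) (n : ℕ), m n ψ ≠ ∞ := by
    intro ψ n
    have h1 : m n ψ ≤ ∫⁻ x, ((‖(ψ : X → ℂ) x‖₊ : ℝ≥0) : ℝ≥0∞) ^ ρ ∂μ :=
      setLIntegral_le_lintegral _ _
    have h2 : (∫⁻ x, ((‖(ψ : X → ℂ) x‖₊ : ℝ≥0) : ℝ≥0∞) ^ ρ ∂μ) ≠ ∞ := by
      intro hcon
      have h3 := Lp.eLpNorm_lt_top ψ
      rw [eLpNorm_eq_lintegral_rpow_enorm_toReal hp0 hpt] at h3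
      simp only [enorm_eq_nnnorm] at h3
      rw [hcon] at h3
      rw [ENNReal.top_rpow_of_pos (by positivity)] at h3
      exact (lt_irrefl _ h3).elim
    exact ne_top_of_le_ne_top h2 h1
  have hm_eLp : ∀ (ψ : Lp ℂ p μ) (n : ℕ),
      eLpNorm ((psi (E n) (hE n) ψ : Lp ℂ p μ) : X → ℂ) p μ = (m n ψ) ^ (1/ρ) :=
    fun ψ n => eLpNorm_psi hpt _ _ _
  intro N
  induction N with
  | zero =>
    intro s hs φ δ _
    have hse : s = ∅ := Finset.card_eq_zero.1 (Nat.le_zero.1 hs)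
    subst hse
    have h0 : (fun y => (⨆ n ∈ (∅ : Finset ℕ),
        ((‖((K (psi (E n) (hE n) φ) : Lp ℂ q ν) : Y → ℂ) y‖₊ : ℝ≥0) : ℝ≥0∞)) ^ r)
        = fun _ => 0 := by
      funext y
      simp [ENNReal.zero_rpow_of_pos hr0]
    rw [h0, lintegral_zero, ENNReal.zero_rpow_of_pos (by positivity)]
    exact zero_le
  | succ N ih =>
    intro s hcard φ δ hmass
    rcases Finset.eq_empty_or_nonempty s with hse | hsne
    · subst hse
      exact ih ∅ (by simp) φ δ (by simp)
    -- abbreviations for the sup functions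
    set u : ℕ → Y → ℝ≥0∞ := fun n y =>
      ((‖((K (psi (E n) (hE n) φ) : Lp ℂ q ν) : Y → ℂ) y‖₊ : ℝ≥0) : ℝ≥0∞) with hu_def
    set nmx := s.max' hsne with hnmx_def
    have hnmx_mem : nmx ∈ s := s.max'_mem hsne
    set δ₀ := m nmx φ with hδ₀_def
    have hδ₀top : δ₀ ≠ ∞ := hm_top φ nmx
    have hδ₀δ : δ₀ ≤ δ := hmass nmx hnmx_mem
    have hhalf_top : δ₀ / 2 ≠ ∞ := by
      intro hcon
      exact hδ₀top (by simpa using (ENNReal.div_eq_top.1 hcon))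
    set s₂ := s.filter (fun n => δ₀/2 ≤ m n φ) with hs₂_def
    have hmax2 : nmx ∈ s₂ := Finset.mem_filter.2 ⟨hnmx_mem, ENNReal.half_le_self⟩
    have hs₂ne : s₂.Nonempty := ⟨nmx, hmax2⟩
    set m₀ := s₂.min' hs₂ne with hm₀_def
    have hm₀s₂ : m₀ ∈ s₂ := s₂.min'_mem hs₂ne
    have hm₀s : m₀ ∈ s := (Finset.mem_filter.1 hm₀s₂).1
    have hm₀mass : δ₀/2 ≤ m m₀ φ := (Finset.mem_filter.1 hm₀s₂).2
    have hm₀δ₀ : m m₀ φ ≤ δ₀ := hm_mono φ (s.le_max' m₀ hm₀s)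
    set φ' := psi (E m₀)ᶜ (hE m₀).compl φ with hφ'_def
    set u' : ℕ → Y → ℝ≥0∞ := fun n y =>
      ((‖((K (psi (E n) (hE n) φ') : Lp ℂ q ν) : Y → ℂ) y‖₊ : ℝ≥0) : ℝ≥0∞) with hu'_def
    set s₁ := s.filter (fun n => ¬ δ₀/2 ≤ m n φ) with hs₁_def
    -- cardinalities
    have hs₁sub : s₁ ⊆ s.erase m₀ := by
      intro n hn
      refine Finset.mem_erase.2 ⟨?_, (Finset.mem_filter.1 hn).1⟩
      intro hcon
      exact (Finset.mem_filter.1 hn).2 (hcon ▸ hm₀mass)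
    have herase_card : (s.erase m₀).card ≤ N := by
      rw [Finset.card_erase_of_mem hm₀s]
      omega
    have hs₁card : s₁.card ≤ N := le_trans (Finset.card_le_card hs₁sub) herase_card
    have hs₂card : (s₂.erase m₀).card ≤ N :=
      le_trans (Finset.card_le_card (Finset.erase_subset_erase _ (Finset.filter_subset _ _)))
        herase_card
    -- masses for IH
    have hmass1 : ∀ n ∈ s₁, m n φ ≤ δ₀/2 :=
      fun n hn => (not_le.1 (Finset.mem_filter.1 hn).2).le
    have hmass2 : ∀ n ∈ s₂.erase m₀, m n φ' ≤ δ₀/2 := by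
      intro n hn
      obtain ⟨hne, hn2⟩ := Finset.mem_erase.1 hn
      have hns : n ∈ s := (Finset.mem_filter.1 hn2).1
      have hm₀n : m₀ ≤ n := s₂.min'_le n hn2
      have hsub : E m₀ ⊆ E n := hmono hm₀n
      have h1 : m n φ' = ∫⁻ x in E n \ E m₀, ((‖(φ : X → ℂ) x‖₊ : ℝ≥0) : ℝ≥0∞) ^ ρ ∂μ :=
        mass_compl hρ0 (hE m₀) φ
      have h2 : m m₀ φ + m n φ' = m n φ := by
        rw [h1]
        calc m m₀ φ + ∫⁻ x in E n \ E m₀, ((‖(φ : X → ℂ) x‖₊ : ℝ≥0) : ℝ≥0∞) ^ ρ ∂μ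
            = ∫⁻ x in E m₀ ∪ (E n \ E m₀), ((‖(φ : X → ℂ) x‖₊ : ℝ≥0) : ℝ≥0∞) ^ ρ ∂μ :=
              (lintegral_union ((hE n).diff (hE m₀)) disjoint_sdiff_self_right).symm
          _ = m n φ := by rw [Set.union_diff_cancel hsub]
      have h3 : m n φ ≤ δ₀ := hm_mono φ (s.le_max' n hns)
      have h4 : δ₀/2 + m n φ' ≤ δ₀/2 + δ₀/2 := by
        calc δ₀/2 + m n φ' ≤ m m₀ φ + m n φ' := add_le_add_left hm₀mass _
          _ = m n φ := h2
          _ ≤ δ₀ := h3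
          _ = δ₀/2 + δ₀/2 := (ENNReal.add_halves δ₀).symm
      exact (ENNReal.add_le_add_iff_left hhalf_top).1 h4
    -- splitting identity
    have hsplit : ∀ n ∈ s₂, K (psi (E n) (hE n) φ)
        = K (psi (E m₀) (hE m₀) φ) + K (psi (E n) (hE n) φ') := by
      intro n hn
      rw [← map_add]
      exact congrArg K (psi_split (hmono (s₂.min'_le n hn)) (hE m₀) (hE n) φ)
    -- the sup functions
    set w : Y → ℝ≥0∞ := u m₀ with hw_def
    set S₁ : Y → ℝ≥0∞ := fun y => ⨆ n ∈ s₁, u n y with hS₁_def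
    set S₂ : Y → ℝ≥0∞ := fun y => ⨆ n ∈ s₂.erase m₀, u' n y with hS₂_def
    have hu : ∀ n, AEMeasurable (u n) ν := fun n => AEStronglyMeasurable.enorm (Lp.aestronglyMeasurable (K (psi (E n) (hE n) φ)))
    have hu' : ∀ n, AEMeasurable (u' n) ν := fun n => AEStronglyMeasurable.enorm (Lp.aestronglyMeasurable (K (psi (E n) (hE n) φ')))
    have hw_meas : AEMeasurable w ν := hu m₀
    have hS₁_meas : AEMeasurable S₁ ν := aemeas_biSup _ _ hu
    have hS₂_meas : AEMeasurable S₂ ν := aemeas_biSup _ _ hu'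
    have hS_meas : AEMeasurable (fun y => S₁ y ⊔ S₂ y) ν := hS₁_meas.sup hS₂_meas
    -- the a.e. pointwise bound
    have hae : ∀ᵐ y ∂ν, (⨆ n ∈ s, u n y) ≤ w y + (S₁ y ⊔ S₂ y) := by
      have hadd : ∀ n, n ∈ s₂ → ((K (psi (E n) (hE n) φ) : Lp ℂ q ν) : Y → ℂ) =ᵐ[ν]
          fun y => ((K (psi (E m₀) (hE m₀) φ) : Lp ℂ q ν) : Y → ℂ) y
            + ((K (psi (E n) (hE n) φ') : Lp ℂ q ν) : Y → ℂ) y := by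
        intro n hn
        rw [hsplit n hn]
        exact Lp.coeFn_add _ _
      have hael : ∀ᵐ y ∂ν, ∀ n, n ∈ s₂ →
          ((K (psi (E n) (hE n) φ) : Lp ℂ q ν) : Y → ℂ) y
            = ((K (psi (E m₀) (hE m₀) φ) : Lp ℂ q ν) : Y → ℂ) y
              + ((K (psi (E n) (hE n) φ') : Lp ℂ q ν) : Y → ℂ) y := by
        rw [ae_all_iff]
        intro n
        by_cases hn : n ∈ s₂
        · exact (hadd n hn).mono fun y hy _ => hy
        · exact Filter.Eventually.of_forall fun y hn' => absurd hn' hn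
      filter_upwards [hael] with y hy
      refine iSup₂_le fun n hn => ?_
      by_cases hn2 : n ∈ s₂
      · rcases eq_or_ne n m₀ with rfl | hne
        · exact le_add_of_le_of_nonneg le_rfl (zero_le)
        · have heq := hy n hn2
          calc u n y = ((‖((K (psi (E m₀) (hE m₀) φ) : Lp ℂ q ν) : Y → ℂ) y
                + ((K (psi (E n) (hE n) φ') : Lp ℂ q ν) : Y → ℂ) y‖₊ : ℝ≥0) : ℝ≥0∞) := by
                rw [hu_def]; simp only []; rw [heq]
            _ ≤ w y + u' n y := by
                have h2 : ((‖((K (psi (E m₀) (hE m₀) φ) : Lp ℂ q ν) : Y → ℂ) y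
                    + ((K (psi (E n) (hE n) φ') : Lp ℂ q ν) : Y → ℂ) y‖₊ : ℝ≥0) : ℝ≥0∞)
                    ≤ ((‖((K (psi (E m₀) (hE m₀) φ) : Lp ℂ q ν) : Y → ℂ) y‖₊ : ℝ≥0) : ℝ≥0∞)
                      + ((‖((K (psi (E n) (hE n) φ') : Lp ℂ q ν) : Y → ℂ) y‖₊ : ℝ≥0) : ℝ≥0∞) := by
                  exact_mod_cast nnnorm_add_le _ _
                exact h2
            _ ≤ w y + S₂ y := by
                refine add_le_add_right ?_ _
                exact le_iSup₂ (f := fun n (_ : n ∈ s₂.erase m₀) => u' n y) n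
                  (Finset.mem_erase.2 ⟨hne, hn2⟩)
            _ ≤ w y + (S₁ y ⊔ S₂ y) := add_le_add_right le_sup_right _
      · have hn1 : n ∈ s₁ := Finset.mem_filter.2
          ⟨hn, fun h => hn2 (Finset.mem_filter.2 ⟨hn, h⟩)⟩
        calc u n y ≤ S₁ y := le_iSup₂ (f := fun n (_ : n ∈ s₁) => u n y) n hn1
          _ ≤ S₁ y ⊔ S₂ y := le_sup_left
          _ ≤ w y + (S₁ y ⊔ S₂ y) := le_add_self
    -- main chain
    have step1 : (∫⁻ y, (⨆ n ∈ s, u n y) ^ r ∂ν) ^ (1/r)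
        ≤ (∫⁻ y, (w y + (S₁ y ⊔ S₂ y)) ^ r ∂ν) ^ (1/r) := by
      refine ENNReal.rpow_le_rpow ?_ (by positivity)
      refine lintegral_mono_ae (hae.mono fun y hy => ?_)
      exact ENNReal.rpow_le_rpow hy hr0.le
    have step2 : (∫⁻ y, (w y + (S₁ y ⊔ S₂ y)) ^ r ∂ν) ^ (1/r)
        ≤ (∫⁻ y, w y ^ r ∂ν) ^ (1/r) + (∫⁻ y, (S₁ y ⊔ S₂ y) ^ r ∂ν) ^ (1/r) := by
      have h := ENNReal.lintegral_Lp_add_le hw_meas hS_meas hr1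
      simpa only [Pi.add_apply] using h
    have hT1 : (∫⁻ y, w y ^ r ∂ν) ^ (1/r) ≤ (‖K‖₊ : ℝ≥0∞) * δ₀ ^ (1/ρ) := by
      have h1 : (∫⁻ y, w y ^ r ∂ν) ^ (1/r)
          = eLpNorm ((K (psi (E m₀) (hE m₀) φ) : Lp ℂ q ν) : Y → ℂ) q ν :=
        (eLpNorm_eq_lintegral_rpow_enorm_toReal hq0 hqt (f := ((K (psi (E m₀) (hE m₀) φ) : Lp ℂ q ν) : Y → ℂ))).symm
      rw [h1]
      calc eLpNorm ((K (psi (E m₀) (hE m₀) φ) : Lp ℂ q ν) : Y → ℂ) q ν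
          ≤ (‖K‖₊ : ℝ≥0∞) * eLpNorm ((psi (E m₀) (hE m₀) φ : Lp ℂ p μ) : X → ℂ) p μ :=
            op_bound K _
        _ = (‖K‖₊ : ℝ≥0∞) * (m m₀ φ) ^ (1/ρ) := by rw [hm_eLp φ m₀]
        _ ≤ (‖K‖₊ : ℝ≥0∞) * δ₀ ^ (1/ρ) := by
            exact mul_le_mul_right (ENNReal.rpow_le_rpow hm₀δ₀ (by positivity)) _
    set D := c * (‖K‖₊ : ℝ≥0∞) * (δ₀/2) ^ (1/ρ) with hD_def
    have hIH1 : (∫⁻ y, S₁ y ^ r ∂ν) ^ (1/r) ≤ D := ih s₁ hs₁card φ (δ₀/2) hmass1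
    have hIH2 : (∫⁻ y, S₂ y ^ r ∂ν) ^ (1/r) ≤ D := ih (s₂.erase m₀) hs₂card φ' (δ₀/2) hmass2
    have hD_top : D ≠ ∞ := by
      refine ENNReal.mul_ne_top (ENNReal.mul_ne_top hcT ENNReal.coe_ne_top) ?_
      exact ENNReal.rpow_ne_top_of_nonneg (by positivity)
        (by simpa using hhalf_top)
    have hrinv : ∀ x : ℝ≥0∞, (x ^ (1/r)) ^ r = x := by
      intro x
      rw [← ENNReal.rpow_mul, one_div_mul_cancel hr0.ne', ENNReal.rpow_one]
    have hI1 : ∫⁻ y, S₁ y ^ r ∂ν ≤ D ^ r := by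
      have h := ENNReal.rpow_le_rpow hIH1 hr0.le
      rwa [hrinv] at h
    have hI2 : ∫⁻ y, S₂ y ^ r ∂ν ≤ D ^ r := by
      have h := ENNReal.rpow_le_rpow hIH2 hr0.le
      rwa [hrinv] at h
    have hT2 : (∫⁻ y, (S₁ y ⊔ S₂ y) ^ r ∂ν) ^ (1/r) ≤ (2:ℝ≥0∞) ^ (1/r) * D := by
      have hpw : ∀ y, (S₁ y ⊔ S₂ y) ^ r ≤ S₁ y ^ r + S₂ y ^ r := by
        intro y
        rcases le_total (S₁ y) (S₂ y) with h | h
        · rw [sup_eq_right.2 h]; exact le_add_self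
        · rw [sup_eq_left.2 h]; exact self_le_add_right _ _
      have h2 : ∫⁻ y, (S₁ y ⊔ S₂ y) ^ r ∂ν ≤ (∫⁻ y, S₁ y ^ r ∂ν) + ∫⁻ y, S₂ y ^ r ∂ν := by
        calc ∫⁻ y, (S₁ y ⊔ S₂ y) ^ r ∂ν ≤ ∫⁻ y, (S₁ y ^ r + S₂ y ^ r) ∂ν :=
              lintegral_mono hpw
          _ = (∫⁻ y, S₁ y ^ r ∂ν) + ∫⁻ y, S₂ y ^ r ∂ν :=
              lintegral_add_left' (hS₁_meas.pow_const r) _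
      calc (∫⁻ y, (S₁ y ⊔ S₂ y) ^ r ∂ν) ^ (1/r)
          ≤ (D ^ r + D ^ r) ^ (1/r) :=
            ENNReal.rpow_le_rpow (h2.trans (add_le_add hI1 hI2)) (by positivity)
        _ = ((2:ℝ≥0∞) * D ^ r) ^ (1/r) := by rw [two_mul]
        _ = (2:ℝ≥0∞) ^ (1/r) * (D ^ r) ^ (1/r) :=
            ENNReal.mul_rpow_of_ne_top (by norm_num)
              (ENNReal.rpow_ne_top_of_nonneg hr0.le hD_top) _
        _ = (2:ℝ≥0∞) ^ (1/r) * D := by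
            rw [← ENNReal.rpow_mul, mul_one_div, div_self hr0.ne', ENNReal.rpow_one]
    -- final arithmetic
    have hhalf_rpow : (δ₀/2) ^ (1/ρ) = δ₀ ^ (1/ρ) * ((2:ℝ≥0∞) ^ (1/ρ))⁻¹ := by
      rw [div_eq_mul_inv, ENNReal.mul_rpow_of_ne_top hδ₀top (by simp), ← ENNReal.rpow_neg,
        ← ENNReal.rpow_neg_one, ← ENNReal.rpow_mul]
      norm_num
    have hb_eq : (2:ℝ≥0∞) ^ (1/r) * ((2:ℝ≥0∞) ^ (1/ρ))⁻¹ = b := by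
      rw [hb_def, sub_eq_add_neg, ENNReal.rpow_add _ _ (by norm_num) (by norm_num),
        ENNReal.rpow_neg]
    have harith : (‖K‖₊ : ℝ≥0∞) * δ₀ ^ (1/ρ) + (2:ℝ≥0∞) ^ (1/r) * D
        ≤ c * (‖K‖₊ : ℝ≥0∞) * δ ^ (1/ρ) := by
      have h1 : (‖K‖₊ : ℝ≥0∞) * δ₀ ^ (1/ρ) + (2:ℝ≥0∞) ^ (1/r) * D
          = (1 + b * c) * ((‖K‖₊ : ℝ≥0∞) * δ₀ ^ (1/ρ)) := by
        rw [hD_def, hhalf_rpow, ← hb_eq]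
        ring
      rw [h1, hcid]
      calc c * ((‖K‖₊ : ℝ≥0∞) * δ₀ ^ (1/ρ)) = c * (‖K‖₊ : ℝ≥0∞) * δ₀ ^ (1/ρ) := by ring
        _ ≤ c * (‖K‖₊ : ℝ≥0∞) * δ ^ (1/ρ) :=
            mul_le_mul_right (ENNReal.rpow_le_rpow hδ₀δ (by positivity)) _
    calc (∫⁻ y, (⨆ n ∈ s, u n y) ^ r ∂ν) ^ (1/r)
        ≤ (∫⁻ y, w y ^ r ∂ν) ^ (1/r) + (∫⁻ y, (S₁ y ⊔ S₂ y) ^ r ∂ν) ^ (1/r) :=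
          step1.trans step2
      _ ≤ (‖K‖₊ : ℝ≥0∞) * δ₀ ^ (1/ρ) + (2:ℝ≥0∞) ^ (1/r) * D := add_le_add hT1 hT2
      _ ≤ c * (‖K‖₊ : ℝ≥0∞) * δ ^ (1/ρ) := harith

/-- For σ-finite measure spaces `(X,μ)`, `(Y,ν)`, exponents
`1 ≤ p < q ≤ ∞`, any bounded linear operator `K : L^p(X) → L^q(Y)`, and any
increasing sequence of measurable sets `E_n`, the maximal function
`M_K f (y) = sup_n |K(f·χ_{E_n})(y)|` satisfies
`‖M_K f‖_q ≤ A ‖K‖ ‖f‖_p`, where `A < ∞` depends only on `p` and `q`. -/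
theorem stmt2 (p q : ℝ≥0∞) [Fact (1 ≤ p)] [Fact (1 ≤ q)] (hpq : p < q) :
    ∃ A : ℝ, 0 ≤ A ∧
      ∀ (X Y : Type) (_ : MeasurableSpace X) (_ : MeasurableSpace Y)
        (μ : Measure X) (ν : Measure Y), SigmaFinite μ → SigmaFinite ν →
        ∀ K : Lp ℂ p μ →L[ℂ] Lp ℂ q ν,
        ∀ E : ℕ → Set X, ∀ hE : ∀ n, MeasurableSet (E n),
        (∀ n, E n ⊆ E (n + 1)) →
        ∀ f : Lp ℂ p μ,
          eLpNorm
            (fun y => ⨆ n : ℕ,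
              ‖(K (MemLp.toLp _ ((Lp.memLp f).indicator (hE n))) : Y → ℂ) y‖)
            q ν
          ≤ ENNReal.ofReal (A * ‖K‖ * ‖f‖) := by
  classical
  have hp1 : (1:ℝ≥0∞) ≤ p := Fact.out
  have hq1 : (1:ℝ≥0∞) ≤ q := Fact.out
  have hp0 : p ≠ 0 := fun h => by rw [h] at hp1; simp at hp1
  have hq0 : q ≠ 0 := fun h => by rw [h] at hq1; simp at hq1
  have hpt : p ≠ ∞ := (hpq.trans_le le_top).ne
  have hρ0 : 0 < p.toReal := ENNReal.toReal_pos hp0 hpt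
  have he : 1 / q.toReal - 1 / p.toReal < 0 := by
    rcases eq_or_ne q ∞ with hq | hq
    · rw [hq]
      simp only [ENNReal.toReal_top, div_zero, zero_sub, neg_neg, neg_lt, neg_zero]
      positivity
    · have hr0 : 0 < q.toReal := ENNReal.toReal_pos hq0 hq
      have hlt : p.toReal < q.toReal := ENNReal.toReal_strict_mono hq hpq
      have := one_div_lt_one_div_of_lt hρ0 hlt
      linarith
  set c : ℝ≥0∞ := (1 - (2:ℝ≥0∞) ^ (1 / q.toReal - 1 / p.toReal))⁻¹ with hc_def
  obtain ⟨hcT, hc1, _⟩ := c_facts he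
  refine ⟨c.toReal, ENNReal.toReal_nonneg, ?_⟩
  intro X Y mX mY μ ν _ _ K E hE hEsub f
  have hmono : Monotone E := monotone_nat_of_le_succ hEsub
  have hRHS : ENNReal.ofReal (c.toReal * ‖K‖ * ‖f‖)
      = c * (‖K‖₊ : ℝ≥0∞) * eLpNorm (f : X → ℂ) p μ := by
    rw [ENNReal.ofReal_mul (by positivity), ENNReal.ofReal_mul ENNReal.toReal_nonneg,
      ENNReal.ofReal_toReal hcT, ofReal_norm, ofReal_norm, enorm_eq_nnnorm, enorm_eq_nnnorm]
    congr 1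
    rw [Lp.nnnorm_def, ENNReal.coe_toNNReal (Lp.eLpNorm_ne_top f)]
  refine le_of_le_of_eq ?_ hRHS.symm
  -- identify the maximal family
  have hgdef : ∀ n, (MemLp.toLp _ ((Lp.memLp f).indicator (hE n)) : Lp ℂ p μ)
      = psi (E n) (hE n) f := fun n => rfl
  have hind_le : ∀ n, eLpNorm ((psi (E n) (hE n) f : Lp ℂ p μ) : X → ℂ) p μ
      ≤ eLpNorm (f : X → ℂ) p μ := by
    intro n
    calc eLpNorm ((psi (E n) (hE n) f : Lp ℂ p μ) : X → ℂ) p μ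
        = eLpNorm ((E n).indicator (f : X → ℂ)) p μ := eLpNorm_congr_ae (psi_coe _ _ _)
      _ ≤ eLpNorm (f : X → ℂ) p μ := eLpNorm_indicator_le _
  rcases eq_or_ne q ∞ with hqT | hqT
  · -- q = ∞ : direct estimate
    subst hqT
    set B := (‖K‖₊ : ℝ≥0∞) * eLpNorm (f : X → ℂ) p μ with hB_def
    have hb : ∀ n : ℕ, ∀ᵐ y ∂ν,
        ((‖((K (psi (E n) (hE n) f) : Lp ℂ ∞ ν) : Y → ℂ) y‖₊ : ℝ≥0) : ℝ≥0∞) ≤ B := by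
      intro n
      have h1 : eLpNorm ((K (psi (E n) (hE n) f) : Lp ℂ ∞ ν) : Y → ℂ) ∞ ν ≤ B :=
        (op_bound K _).trans (mul_le_mul_right (hind_le n) _)
      rw [eLpNorm_exponent_top] at h1
      have h2 := ENNReal.ae_le_essSup
        (fun y => ((‖((K (psi (E n) (hE n) f) : Lp ℂ ∞ ν) : Y → ℂ) y‖₊ : ℝ≥0) : ℝ≥0∞))
        (μ := ν)
      exact h2.mono fun y hy => hy.trans h1
    have hball : ∀ᵐ y ∂ν, ∀ n : ℕ,
        ((‖((K (psi (E n) (hE n) f) : Lp ℂ ∞ ν) : Y → ℂ) y‖₊ : ℝ≥0) : ℝ≥0∞) ≤ B :=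
      ae_all_iff.2 hb
    rw [eLpNorm_exponent_top]
    have hess : eLpNormEssSup
        (fun y => ⨆ n : ℕ, ‖((K (psi (E n) (hE n) f) : Lp ℂ ∞ ν) : Y → ℂ) y‖) ν ≤ B := by
      refine essSup_le_of_ae_le _ ?_
      filter_upwards [hball] with y hy
      calc ((‖⨆ n : ℕ, ‖((K (psi (E n) (hE n) f) : Lp ℂ ∞ ν) : Y → ℂ) y‖‖₊ : ℝ≥0) : ℝ≥0∞)
          ≤ ⨆ n : ℕ, ((‖‖((K (psi (E n) (hE n) f) : Lp ℂ ∞ ν) : Y → ℂ) y‖‖₊ : ℝ≥0) : ℝ≥0∞) :=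
            ofReal_iSup_le _ fun n => norm_nonneg _
        _ ≤ B := iSup_le fun n => by rw [nnnorm_norm]; exact hy n
    refine hess.trans ?_
    rw [mul_assoc]
    exact le_mul_of_one_le_left (zero_le) hc1
  · -- q < ∞
    have hr0 : 0 < q.toReal := ENNReal.toReal_pos hq0 hqT
    set r := q.toReal with hr_def
    set u : ℕ → Y → ℝ≥0∞ := fun n y =>
      ((‖((K (psi (E n) (hE n) f) : Lp ℂ q ν) : Y → ℂ) y‖₊ : ℝ≥0) : ℝ≥0∞) with hu_def
    have hu : ∀ n, AEMeasurable (u n) ν := fun n => AEStronglyMeasurable.enorm (Lp.aestronglyMeasurable (K (psi (E n) (hE n) f)))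
    set v : ℕ → Y → ℝ≥0∞ := fun N y => ⨆ n ∈ Finset.range (N+1), u n y with hv_def
    have hv_meas : ∀ N, AEMeasurable (fun y => v N y ^ r) ν :=
      fun N => (aemeas_biSup _ _ hu).pow_const r
    have hv_mono : ∀ y, Monotone fun N => v N y ^ r := by
      intro y N M hNM
      refine ENNReal.rpow_le_rpow ?_ hr0.le
      refine iSup₂_le fun n hn => ?_
      refine le_iSup₂_of_le n ?_ le_rfl
      exact Finset.mem_range.2 (lt_of_lt_of_le (Finset.mem_range.1 hn) (by omega))
    have hpoint : ∀ y, ((‖(fun y => ⨆ n : ℕ,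
        ‖((K (psi (E n) (hE n) f) : Lp ℂ q ν) : Y → ℂ) y‖) y‖₊ : ℝ≥0) : ℝ≥0∞) ^ r
        ≤ ⨆ N : ℕ, v N y ^ r := by
      intro y
      have h1 : ((‖⨆ n : ℕ, ‖((K (psi (E n) (hE n) f) : Lp ℂ q ν) : Y → ℂ) y‖‖₊ : ℝ≥0) : ℝ≥0∞)
          ≤ ⨆ n : ℕ, u n y := by
        refine le_trans (ofReal_iSup_le _ fun n => norm_nonneg _) ?_
        refine iSup_mono fun n => ?_
        rw [nnnorm_norm]
      have h2 : (⨆ n : ℕ, u n y) = ⨆ N : ℕ, v N y := by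
        apply le_antisymm
        · refine iSup_le fun n => le_iSup_of_le n ?_
          exact le_iSup₂_of_le n (Finset.mem_range.2 (by omega)) le_rfl
        · exact iSup_le fun N => iSup₂_le fun n _ => le_iSup (fun k => u k y) n
      calc ((‖⨆ n : ℕ, ‖((K (psi (E n) (hE n) f) : Lp ℂ q ν) : Y → ℂ) y‖‖₊ : ℝ≥0) : ℝ≥0∞) ^ r
          ≤ (⨆ n : ℕ, u n y) ^ r := ENNReal.rpow_le_rpow h1 hr0.le
        _ = (⨆ N : ℕ, v N y) ^ r := by rw [h2]
        _ = ⨆ N : ℕ, v N y ^ r := iSup_rpow _ hr0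
    set T := c * (‖K‖₊ : ℝ≥0∞) * eLpNorm (f : X → ℂ) p μ with hT_def
    set δf := ∫⁻ x, ((‖(f : X → ℂ) x‖₊ : ℝ≥0) : ℝ≥0∞) ^ p.toReal ∂μ with hδf_def
    have hδf_eq : δf ^ (1 / p.toReal) = eLpNorm (f : X → ℂ) p μ :=
      (eLpNorm_eq_lintegral_rpow_enorm_toReal hp0 hpt (f := (f : X → ℂ))).symm
    have hbound : ∀ N : ℕ, (∫⁻ y, v N y ^ r ∂ν) ^ (1/r) ≤ T := by
      intro N
      have h := CK_main hpq hqT K E hE hmono (N+1) (Finset.range (N+1))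
        (by simp) f δf (fun n _ => setLIntegral_le_lintegral _ _)
      rw [hδf_eq] at h
      exact h
    have hbound' : ∀ N : ℕ, ∫⁻ y, v N y ^ r ∂ν ≤ T ^ r := by
      intro N
      have h := ENNReal.rpow_le_rpow (hbound N) hr0.le
      rwa [← ENNReal.rpow_mul, one_div_mul_cancel hr0.ne', ENNReal.rpow_one] at h
    rw [eLpNorm_eq_lintegral_rpow_enorm_toReal hq0 hqT]
    calc (∫⁻ y, ((‖(fun y => ⨆ n : ℕ,
          ‖((K (psi (E n) (hE n) f) : Lp ℂ q ν) : Y → ℂ) y‖) y‖₊ : ℝ≥0) : ℝ≥0∞) ^ r ∂ν) ^ (1/r)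
        ≤ (∫⁻ y, ⨆ N : ℕ, v N y ^ r ∂ν) ^ (1/r) :=
          ENNReal.rpow_le_rpow (lintegral_mono hpoint) (by positivity)
      _ = (⨆ N : ℕ, ∫⁻ y, v N y ^ r ∂ν) ^ (1/r) := by
          rw [lintegral_iSup' hv_meas (Filter.Eventually.of_forall hv_mono)]
      _ ≤ (T ^ r) ^ (1/r) :=
          ENNReal.rpow_le_rpow (iSup_le hbound') (by positivity)
      _ = T := by rw [← ENNReal.rpow_mul, mul_one_div, div_self hr0.ne', ENNReal.rpow_one]
end

section
/- Let f ∈ L^p(ℝ⁺), 1 ≤ p < ∞, with ‖f‖_p^p = 1, and let {E(m,l)} be a dyadic decomposition of ℝ⁺ adapted to |f|^p dx (disjoint ordered intervals of each generation m with ‖f χ_{E(m,l)}‖_p^p = 2^{-m}, each interval splitting into two of the next generation). Then for almost every (x₁,x₂) ∈ ℝ⁺ × ℝ⁺, χ_{(0,∞)}(x₂ - x₁) f(x₁) f(x₂) = (∑_{m=1}^∞ ∑_{l odd, 1 ≤ l ≤ 2^m} χ_{E(m,l)}(x₁) χ_{E(m,l+1)}(x₂)) f(x₁) f(x₂), where the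 sets E(m,l) × E(m,l+1) with l odd appearing in the sum are pairwise disjoint. -/
open MeasureTheory Set
open scoped ENNReal NNReal

namespace Stmt4Aux

/-- parent index -/
def pf (j : ℕ) : ℕ := (j + 1) / 2

lemma child_subset (E : ℕ → ℕ → Set ℝ)
    (hsplit : ∀ m, 1 ≤ m → ∀ l, 1 ≤ l → l ≤ 2 ^ m →
      E (m + 1) (2 * l - 1) ∪ E (m + 1) (2 * l) = E m l)
    (m : ℕ) (hm : 1 ≤ m) (j : ℕ) (hj1 : 1 ≤ j) (hj2 : j ≤ 2 ^ (m + 1)) :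
    E (m + 1) j ⊆ E m (pf j) := by
  have hpow : (2:ℕ) ^ (m + 1) = 2 * 2 ^ m := by rw [pow_succ]; ring
  have hk1 : 1 ≤ pf j := by unfold pf; omega
  have hk2 : pf j ≤ 2 ^ m := by unfold pf; omega
  have hsp := hsplit m hm (pf j) hk1 hk2
  have hcases : j = 2 * pf j - 1 ∨ j = 2 * pf j := by unfold pf; omega
  rcases hcases with h | h
  · rw [← hsp]; exact h ▸ subset_union_left
  · rw [← hsp]; exact h ▸ subset_union_right

lemma anc_subset (E : ℕ → ℕ → Set ℝ)
    (hsplit : ∀ m, 1 ≤ m → ∀ l, 1 ≤ l → l ≤ 2 ^ m →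
      E (m + 1) (2 * l - 1) ∪ E (m + 1) (2 * l) = E m l)
    (m : ℕ) (hm : 1 ≤ m) :
    ∀ k j, 1 ≤ j → j ≤ 2 ^ (m + k) →
      E (m + k) j ⊆ E m (pf^[k] j) ∧ 1 ≤ pf^[k] j ∧ pf^[k] j ≤ 2 ^ m := by
  intro k
  induction k with
  | zero => intro j h1 h2; simpa using ⟨h1, h2⟩
  | succ k ih =>
    intro j h1 h2
    have hpow : (2:ℕ) ^ (m + (k + 1)) = 2 * 2 ^ (m + k) := by rw [← Nat.add_assoc, pow_succ]; ring
    have hsub : E (m + k + 1) j ⊆ E (m + k) (pf j) :=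
      child_subset E hsplit (m + k) (le_trans hm (Nat.le_add_right m k)) j h1
        (by omega)
    have hpf1 : 1 ≤ pf j := by unfold pf; omega
    have hpf2 : pf j ≤ 2 ^ (m + k) := by unfold pf; omega
    have := ih (pf j) hpf1 hpf2
    refine ⟨?_, ?_, ?_⟩
    · rw [Function.iterate_succ_apply]
      exact fun x hx => this.1 (hsub (by rwa [show m + (k+1) = m + k + 1 by omega] at hx))
    · rw [Function.iterate_succ_apply]; exact this.2.1
    · rw [Function.iterate_succ_apply]; exact this.2.2

lemma pf_iter_odd (k : ℕ) (hk : 1 ≤ k) (l : ℕ) (hl : Odd l) :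
    pf^[k] l = pf^[k] (l + 1) := by
  obtain ⟨k, rfl⟩ := Nat.exists_eq_add_of_le hk
  rw [add_comm, Function.iterate_succ_apply, Function.iterate_succ_apply]
  congr 1
  rw [Nat.odd_iff] at hl
  unfold pf; omega

end Stmt4Aux

namespace Stmt4Aux

lemma rect_disjoint (E : ℕ → ℕ → Set ℝ)
    (hdisj : ∀ m, 1 ≤ m → ∀ l i, 1 ≤ l → l < i → i ≤ 2 ^ m → Disjoint (E m l) (E m i))
    (hsplit : ∀ m, 1 ≤ m → ∀ l, 1 ≤ l → l ≤ 2 ^ m →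
      E (m + 1) (2 * l - 1) ∪ E (m + 1) (2 * l) = E m l) :
    ∀ m m' l l', 1 ≤ m → 1 ≤ m' → Odd l → Odd l' →
      1 ≤ l → l + 1 ≤ 2 ^ m → 1 ≤ l' → l' + 1 ≤ 2 ^ m' → (m, l) ≠ (m', l') →
      Disjoint (E m l ×ˢ E m (l + 1)) (E m' l' ×ˢ E m' (l' + 1)) := by
  have hgen : ∀ m, 1 ≤ m → ∀ a b, 1 ≤ a → a ≤ 2 ^ m → 1 ≤ b → b ≤ 2 ^ m → a ≠ b →
      Disjoint (E m a) (E m b) := by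
    intro m hm a b ha1 ha2 hb1 hb2 hab
    rcases lt_or_gt_of_ne hab with h | h
    · exact hdisj m hm a b ha1 h hb2
    · exact (hdisj m hm b a hb1 h ha2).symm
  have key : ∀ m m' l l', 1 ≤ m → Odd l' →
      1 ≤ l → l + 1 ≤ 2 ^ m → 1 ≤ l' → l' + 1 ≤ 2 ^ m' → m < m' →
      Disjoint (E m l ×ˢ E m (l + 1)) (E m' l' ×ˢ E m' (l' + 1)) := by
    intro m m' l l' hm hol' hl1 hl2 hl'1 hl'2 hmm
    obtain ⟨k, rfl⟩ : ∃ k, m' = m + (k + 1) := ⟨m' - m - 1, by omega⟩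
    rw [Set.disjoint_left]
    rintro ⟨x, y⟩ ⟨hx1, hy1⟩ ⟨hx2, hy2⟩
    simp only at hx1 hy1 hx2 hy2
    have h1 := anc_subset E hsplit m hm (k + 1) l' hl'1 (by omega)
    have h2 := anc_subset E hsplit m hm (k + 1) (l' + 1) (by omega) hl'2
    have hxl : pf^[k+1] l' = l := by
      by_contra hne
      exact Set.disjoint_left.mp
        (hgen m hm (pf^[k+1] l') l h1.2.1 h1.2.2 hl1 (by omega) hne) (h1.1 hx2) hx1
    have hyl : pf^[k+1] (l' + 1) = l + 1 := by
      by_contra hne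
      exact Set.disjoint_left.mp
        (hgen m hm (pf^[k+1] (l' + 1)) (l + 1) h2.2.1 h2.2.2 (by omega) hl2 hne)
        (h2.1 hy2) hy1
    rw [pf_iter_odd (k + 1) (by omega) l' hol'] at hxl
    omega
  intro m m' l l' hm hm' hol hol' hl1 hl2 hl'1 hl'2 hne
  rcases Nat.lt_trichotomy m m' with h | h | h
  · exact key m m' l l' hm hol' hl1 hl2 hl'1 hl'2 h
  · subst h
    have hll' : l ≠ l' := by simpa using hne
    exact Set.Disjoint.set_prod_left (hgen m hm l l' hl1 (by omega) hl'1 (by omega) hll') _ _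
  · exact (key m' m l' l hm' hol hl'1 hl'2 hl1 hl2 h).symm

end Stmt4Aux


/-- decomposition of the diagonal indicator. Given an adapted dyadic
family `E(m,l)` for `f` (generations partition `ℝ⁺` into ordered intervals of equal
`L^p`-mass `2^{-m}`, each splitting into two of the next generation), one has, for
almost every `(x₁,x₂) ∈ ℝ⁺ × ℝ⁺`,
`χ_{(0,∞)}(x₂-x₁) f(x₁) f(x₂) = (∑_{m≥1} ∑_{l odd} χ_{E(m,l)}(x₁) χ_{E(m,l+1)}(x₂)) f(x₁) f(x₂)`,
and the rectangles `E(m,l) × E(m,l+1)` (`l` odd) appearing in the sum are pairwise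
disjoint. -/
theorem stmt4 (p : ℝ) (hp : 1 ≤ p) (f : ℝ → ℂ)
    (hf : IntegrableOn (fun x => ‖f x‖ ^ p) (Ioi 0))
    (hf1 : ∫ x in Ioi (0:ℝ), ‖f x‖ ^ p = 1)
    (E : ℕ → ℕ → Set ℝ)
    (hmeas : ∀ m l, MeasurableSet (E m l))
    (hconn : ∀ m l, OrdConnected (E m l))
    (hdisj : ∀ m, 1 ≤ m → ∀ l i, 1 ≤ l → l < i → i ≤ 2 ^ m → Disjoint (E m l) (E m i))
    (hcover : ∀ m, 1 ≤ m → (⋃ l ∈ Finset.Icc 1 (2 ^ m), E m l) = Ioi (0:ℝ))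
    (horder : ∀ m, 1 ≤ m → ∀ l i, 1 ≤ l → l < i → i ≤ 2 ^ m →
      ∀ x ∈ E m l, ∀ y ∈ E m i, x ≤ y)
    (hmass : ∀ m, 1 ≤ m → ∀ l, 1 ≤ l → l ≤ 2 ^ m →
      ∫ x in E m l, ‖f x‖ ^ p = (2:ℝ)⁻¹ ^ m)
    (hsplit : ∀ m, 1 ≤ m → ∀ l, 1 ≤ l → l ≤ 2 ^ m →
      E (m + 1) (2 * l - 1) ∪ E (m + 1) (2 * l) = E m l) :
    (∀ᵐ z : ℝ × ℝ ∂((volume.restrict (Ioi 0)).prod (volume.restrict (Ioi 0))),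
      (if z.1 < z.2 then (1:ℂ) else 0) * f z.1 * f z.2 =
        (∑' m : ℕ, ∑ l ∈ (Finset.Icc 1 (2 ^ (m + 1))).filter (fun l => Odd l),
            (indicator (E (m + 1) l) (fun _ => (1:ℂ)) z.1) *
              (indicator (E (m + 1) (l + 1)) (fun _ => (1:ℂ)) z.2)) *
          f z.1 * f z.2) ∧
    (∀ m m' l l', 1 ≤ m → 1 ≤ m' → Odd l → Odd l' →
      1 ≤ l → l + 1 ≤ 2 ^ m → 1 ≤ l' → l' + 1 ≤ 2 ^ m' → (m, l) ≠ (m', l') →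
      Disjoint (E m l ×ˢ E m (l + 1)) (E m' l' ×ˢ E m' (l' + 1))) := by
  classical
  have hpart2 := Stmt4Aux.rect_disjoint E hdisj hsplit
  refine ⟨?_, hpart2⟩
  set μ := volume.restrict (Ioi (0:ℝ)) with hμ_def
  set g : ℝ → ℝ := fun x => ‖f x‖ ^ p with hg_def
  have hg0 : ∀ x, 0 ≤ g x := fun x => Real.rpow_nonneg (norm_nonneg _) p
  have hgne : ∀ x, f x ≠ 0 → g x ≠ 0 := by
    intro x hx
    exact ne_of_gt (Real.rpow_pos_of_pos (norm_pos_iff.mpr hx) p)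
  have hfint : IntegrableOn g (Ioi (0:ℝ)) := hf
  have hgsm : AEStronglyMeasurable g μ := hfint.aestronglyMeasurable
  set g₀ : ℝ → ℝ := hgsm.mk g with hg₀_def
  have hg₀ : g =ᵐ[μ] g₀ := hgsm.ae_eq_mk
  set F : ℝ → ℝ := fun x => ∫ t in Ioc 0 x, g t with hF_def
  have hFmono : Monotone F := by
    intro a b hab
    simp only [hF_def]
    exact setIntegral_mono_set (hfint.mono_set Ioc_subset_Ioi_self)
      (ae_of_all _ fun x => hg0 x)
      (HasSubset.Subset.eventuallyLE (Ioc_subset_Ioc_right hab))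
  have hFdiff : ∀ a b : ℝ, 0 < a → a ≤ b → F b - F a = ∫ t in Ioc a b, g t := by
    intro a b ha hab
    have hd : Disjoint (Ioc 0 a) (Ioc a b) := Set.Ioc_disjoint_Ioc_of_le le_rfl
    have hu : Ioc 0 a ∪ Ioc a b = Ioc 0 b := Ioc_union_Ioc_eq_Ioc (le_of_lt ha) hab
    have h1 : IntegrableOn g (Ioc 0 a) := hfint.mono_set Ioc_subset_Ioi_self
    have h2 : IntegrableOn g (Ioc a b) := hfint.mono_set (fun x hx => lt_trans ha hx.1)
    have hsum := setIntegral_union hd measurableSet_Ioc h1 h2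
    rw [hu] at hsum
    simp only [hF_def]
    rw [hsum]; ring
  -- the key null sets
  have hLnull : ∀ q : ℝ, volume {x : ℝ | 0 < x ∧ x < q ∧ F x = F q ∧ g₀ x ≠ 0} = 0 := by
    intro q
    set L := {x : ℝ | 0 < x ∧ x < q ∧ F x = F q ∧ g₀ x ≠ 0} with hL_def
    rcases eq_empty_or_nonempty L with h | h
    · simp [h]
    · have hbdd : BddBelow L := ⟨0, fun x hx => le_of_lt hx.1⟩
      obtain ⟨u, -, hu_t, hu_mem⟩ := exists_seq_tendsto_sInf h hbdd
      have hnull : ∀ k, volume ({x : ℝ | g₀ x ≠ 0} ∩ Ioc (u k) q) = 0 := by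
        intro k
        obtain ⟨hu0, huq, hFu, -⟩ := hu_mem k
        have hIocSub : Ioc (u k) q ⊆ Ioi (0:ℝ) := fun x hx => lt_trans hu0 hx.1
        have hInt : IntegrableOn g (Ioc (u k) q) := hfint.mono_set hIocSub
        have hzero : ∫ t in Ioc (u k) q, g t = 0 := by
          have := hFdiff (u k) q hu0 (le_of_lt huq)
          rw [hFu] at this
          linarith
        have hae : g =ᵐ[volume.restrict (Ioc (u k) q)] 0 :=
          (integral_eq_zero_iff_of_nonneg_ae (ae_of_all _ fun x => hg0 x) hInt).mp hzero
        have hae₀ : g₀ =ᵐ[volume.restrict (Ioc (u k) q)] 0 :=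
          ((hg₀.filter_mono (ae_mono (Measure.restrict_mono hIocSub le_rfl))).symm).trans hae
        have := ae_iff.mp hae₀
        rw [Measure.restrict_apply' measurableSet_Ioc] at this
        convert this using 2
        rfl
      have hsub : L ⊆ {sInf L} ∪ ⋃ k, ({x : ℝ | g₀ x ≠ 0} ∩ Ioc (u k) q) := by
        intro x hx
        rcases eq_or_lt_of_le (csInf_le hbdd hx) with hc | hc
        · exact Or.inl (by simp [← hc])
        · refine Or.inr ?_
          obtain ⟨k, hk⟩ := (hu_t.eventually_lt_const hc).exists
          exact mem_iUnion.mpr ⟨k, hx.2.2.2, hk, le_of_lt hx.2.1⟩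
      exact measure_mono_null hsub
        (measure_union_null (measure_singleton _) (measure_iUnion_null hnull))
  set Bad : Set (ℝ × ℝ) :=
    ⋃ q : ℚ, {x : ℝ | 0 < x ∧ x < (q:ℝ) ∧ F x = F (q:ℝ) ∧ g₀ x ≠ 0} ×ˢ (univ : Set ℝ)
    with hBad_def
  have hBadNull : (μ.prod μ) Bad = 0 := by
    refine measure_iUnion_null fun q => ?_
    rw [Measure.prod_prod]
    have h1 : μ {x : ℝ | 0 < x ∧ x < (q:ℝ) ∧ F x = F (q:ℝ) ∧ g₀ x ≠ 0} = 0 :=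
      le_antisymm (le_trans (Measure.le_iff'.mp Measure.restrict_le_self _)
        (le_of_eq (hLnull q))) (zero_le)
    rw [h1, zero_mul]
  -- index existence
  have hidx : ∀ m, 1 ≤ m → ∀ x : ℝ, x ∈ Ioi (0:ℝ) → ∃ l, 1 ≤ l ∧ l ≤ 2 ^ m ∧ x ∈ E m l := by
    intro m hm x hx
    rw [← hcover m hm] at hx
    simp only [mem_iUnion, Finset.mem_Icc, exists_prop] at hx
    obtain ⟨l, ⟨h1, h2⟩, hxl⟩ := hx
    exact ⟨l, h1, h2, hxl⟩
  have hEsub : ∀ m, 1 ≤ m → ∀ k, 1 ≤ k → k ≤ 2 ^ m → E m k ⊆ Ioi (0:ℝ) := by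
    intro m hm k hk1 hk2
    rw [← hcover m hm]
    exact subset_biUnion_of_mem (Finset.mem_Icc.mpr ⟨hk1, hk2⟩)
  -- a.e. facts
  have hae1 : ∀ᵐ z : ℝ × ℝ ∂μ.prod μ, z ∉ Bad := measure_eq_zero_iff_ae_notMem.mp hBadNull
  have haefst : ∀ᵐ z : ℝ × ℝ ∂μ.prod μ, z.1 ∈ Ioi (0:ℝ) ∧ g z.1 = g₀ z.1 :=
    Measure.quasiMeasurePreserving_fst.ae ((ae_restrict_mem measurableSet_Ioi).and hg₀)
  have haesnd : ∀ᵐ z : ℝ × ℝ ∂μ.prod μ, z.2 ∈ Ioi (0:ℝ) ∧ g z.2 = g₀ z.2 :=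
    Measure.quasiMeasurePreserving_snd.ae ((ae_restrict_mem measurableSet_Ioi).and hg₀)
  filter_upwards [hae1, haefst, haesnd] with z hnb hz1 hz2
  obtain ⟨hx₁, hgx₁⟩ := hz1
  obtain ⟨hx₂, hgx₂⟩ := hz2
  -- P m l : the pair (z.1, z.2) sits in the (m+1)-generation adjacent rectangle at l
  set P : ℕ → ℕ → Prop := fun m l =>
    Odd l ∧ 1 ≤ l ∧ l ≤ 2 ^ (m + 1) ∧ z.1 ∈ E (m + 1) l ∧ z.2 ∈ E (m + 1) (l + 1)
    with hP_def
  have hsucc : ∀ m : ℕ, ∀ l, Odd l → l ≤ 2 ^ (m + 1) → l + 1 ≤ 2 ^ (m + 1) := by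
    intro m l ho hl
    have hpow : (2:ℕ) ^ (m + 1) = 2 * 2 ^ m := by rw [pow_succ]; ring
    rw [Nat.odd_iff] at ho
    omega
  have hPuniq : ∀ m l m' l', P m l → P m' l' → m = m' ∧ l = l' := by
    intro m l m' l' h h'
    obtain ⟨ho, h1, h2, hm1, hm2⟩ := h
    obtain ⟨ho', h1', h2', hm1', hm2'⟩ := h'
    by_contra hc
    have hne : ((m + 1 : ℕ), l) ≠ ((m' + 1 : ℕ), l') := by
      intro h
      obtain ⟨ha, hb⟩ := Prod.ext_iff.mp h
      exact hc ⟨by omega, hb⟩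
    have hd := hpart2 (m + 1) (m' + 1) l l' (by omega) (by omega) ho ho' h1
      (hsucc m l ho h2) h1' (hsucc m' l' ho' h2') hne
    exact Set.disjoint_left.mp hd (mem_prod.mpr ⟨hm1, hm2⟩) (mem_prod.mpr ⟨hm1', hm2'⟩)
  have hterm : ∀ m l,
      (indicator (E (m + 1) l) (fun _ => (1:ℂ)) z.1) *
        (indicator (E (m + 1) (l + 1)) (fun _ => (1:ℂ)) z.2) =
      if z.1 ∈ E (m + 1) l ∧ z.2 ∈ E (m + 1) (l + 1) then 1 else 0 := by
    intro m l
    by_cases h1 : z.1 ∈ E (m + 1) l <;> by_cases h2 : z.2 ∈ E (m + 1) (l + 1) <;>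
      simp [h1, h2]
  have hinner_zero : ∀ m, (∀ l, ¬ P m l) →
      (∑ l ∈ (Finset.Icc 1 (2 ^ (m + 1))).filter (fun l => Odd l),
        (indicator (E (m + 1) l) (fun _ => (1:ℂ)) z.1) *
          (indicator (E (m + 1) (l + 1)) (fun _ => (1:ℂ)) z.2)) = 0 := by
    intro m hm
    refine Finset.sum_eq_zero fun l hl => ?_
    simp only [Finset.mem_filter, Finset.mem_Icc] at hl
    rw [hterm m l, if_neg]
    rintro ⟨ha, hb⟩
    exact hm l ⟨hl.2, hl.1.1, hl.1.2, ha, hb⟩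
  have hinner_one : ∀ m l₀, P m l₀ →
      (∑ l ∈ (Finset.Icc 1 (2 ^ (m + 1))).filter (fun l => Odd l),
        (indicator (E (m + 1) l) (fun _ => (1:ℂ)) z.1) *
          (indicator (E (m + 1) (l + 1)) (fun _ => (1:ℂ)) z.2)) = 1 := by
    intro m l₀ hP0
    obtain ⟨ho, h1, h2, hm1, hm2⟩ := hP0
    rw [Finset.sum_eq_single_of_mem l₀
        (Finset.mem_filter.mpr ⟨Finset.mem_Icc.mpr ⟨h1, h2⟩, ho⟩)]
    · rw [hterm m l₀, if_pos ⟨hm1, hm2⟩]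
    · intro l hl hne
      simp only [Finset.mem_filter, Finset.mem_Icc] at hl
      rw [hterm m l, if_neg]
      rintro ⟨ha, hb⟩
      exact hne (hPuniq m l m l₀ ⟨hl.2, hl.1.1, hl.1.2, ha, hb⟩
        ⟨ho, h1, h2, hm1, hm2⟩).2
  by_cases hlt : z.1 < z.2
  · by_cases hPex : ∃ m l, P m l
    · obtain ⟨m₀, l₀, hP0⟩ := hPex
      have hts : (∑' m : ℕ, ∑ l ∈ (Finset.Icc 1 (2 ^ (m + 1))).filter (fun l => Odd l),
          (indicator (E (m + 1) l) (fun _ => (1:ℂ)) z.1) *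
            (indicator (E (m + 1) (l + 1)) (fun _ => (1:ℂ)) z.2)) = 1 := by
        rw [tsum_eq_single m₀ ?_]
        · exact hinner_one m₀ l₀ hP0
        · intro m hm
          refine hinner_zero m fun l hl => hm ?_
          exact (hPuniq m l m₀ l₀ hl hP0).1
      rw [hts, if_pos hlt]
    · push_neg at hPex
      have hts : (∑' m : ℕ, ∑ l ∈ (Finset.Icc 1 (2 ^ (m + 1))).filter (fun l => Odd l),
          (indicator (E (m + 1) l) (fun _ => (1:ℂ)) z.1) *
            (indicator (E (m + 1) (l + 1)) (fun _ => (1:ℂ)) z.2)) = 0 :=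
        (tsum_congr fun m => hinner_zero m (hPex m)).trans tsum_zero
      rw [hts, if_pos hlt]
      rcases eq_or_ne (f z.1) 0 with hz | hz
      · rw [hz]; ring
      rcases eq_or_ne (f z.2) 0 with hz' | hz'
      · rw [hz']; ring
      exfalso
      -- never-separate
      have hsame : ∀ m, 1 ≤ m → ∃ k, 1 ≤ k ∧ k ≤ 2 ^ m ∧ z.1 ∈ E m k ∧ z.2 ∈ E m k := by
        intro m hm
        induction m, hm using Nat.le_induction with
        | base =>
          obtain ⟨a, ha1, ha2, hxa⟩ := hidx 1 le_rfl z.1 hx₁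
          obtain ⟨b, hb1, hb2, hxb⟩ := hidx 1 le_rfl z.2 hx₂
          rcases lt_trichotomy a b with h | h | h
          · exfalso
            have ha : a = 1 := by norm_num at ha2 hb2 ⊢; omega
            have hb : b = 2 := by norm_num at ha2 hb2 ⊢; omega
            subst ha; subst hb
            exact hPex 0 1 ⟨odd_one, le_rfl, by norm_num, hxa, hxb⟩
          · exact ⟨a, ha1, ha2, hxa, h ▸ hxb⟩
          · exfalso
            have := horder 1 le_rfl b a hb1 h ha2 z.2 hxb z.1 hxa
            linarith
        | succ m hm ih =>
          obtain ⟨k, hk1, hk2, h1k, h2k⟩ := ih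
          have hpow : (2:ℕ) ^ (m + 1) = 2 * 2 ^ m := by rw [pow_succ]; ring
          have hsp := hsplit m hm k hk1 hk2
          rw [← hsp] at h1k h2k
          have hodd : Odd (2 * k - 1) := by rw [Nat.odd_iff]; omega
          have h2k1 : 2 * k - 1 + 1 = 2 * k := by omega
          rcases h1k with ha | ha <;> rcases h2k with hb | hb
          · exact ⟨2 * k - 1, by omega, by omega, ha, hb⟩
          · exfalso
            exact hPex m (2 * k - 1) ⟨hodd, by omega, by omega, ha, by rw [h2k1]; exact hb⟩
          · exfalso
            have := horder (m + 1) (by omega) (2 * k - 1) (2 * k) (by omega) (by omega)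
              (by omega) z.2 hb z.1 ha
            linarith
          · exact ⟨2 * k, by omega, by omega, ha, hb⟩
      have hFle : ∀ m, 1 ≤ m → F z.2 - F z.1 ≤ (2:ℝ)⁻¹ ^ m := by
        intro m hm
        obtain ⟨k, hk1, hk2, h1k, h2k⟩ := hsame m hm
        have hIcc : Icc z.1 z.2 ⊆ E m k := (hconn m k).out h1k h2k
        have hsubE : E m k ⊆ Ioi (0:ℝ) := hEsub m hm k hk1 hk2
        have hint : IntegrableOn g (E m k) := hfint.mono_set hsubE
        have hle : ∫ t in Ioc z.1 z.2, g t ≤ ∫ t in E m k, g t :=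
          setIntegral_mono_set hint (ae_of_all _ fun x => hg0 x)
            (HasSubset.Subset.eventuallyLE (Ioc_subset_Icc_self.trans hIcc))
        have hmk : ∫ t in E m k, g t = (2:ℝ)⁻¹ ^ m := hmass m hm k hk1 hk2
        have hdiffeq := hFdiff z.1 z.2 hx₁ (le_of_lt hlt)
        linarith
      have hF12 : F z.1 = F z.2 := by
        have h1 : F z.1 ≤ F z.2 := hFmono (le_of_lt hlt)
        have htend : Filter.Tendsto (fun m : ℕ => (2:ℝ)⁻¹ ^ m) Filter.atTop (nhds 0) :=
          tendsto_pow_atTop_nhds_zero_of_lt_one (by norm_num) (by norm_num)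
        have h2 : F z.2 - F z.1 ≤ 0 :=
          ge_of_tendsto htend (Filter.eventually_atTop.mpr ⟨1, hFle⟩)
        linarith
      obtain ⟨q, hq1, hq2⟩ := exists_rat_btwn hlt
      apply hnb
      refine mem_iUnion.mpr ⟨q, mem_prod.mpr ⟨⟨hx₁, hq1, ?_, ?_⟩, mem_univ _⟩⟩
      · have ha := hFmono (le_of_lt hq1)
        have hb := hFmono (le_of_lt hq2)
        linarith
      · rw [← hgx₁]
        exact hgne z.1 hz
  · have hts : (∑' m : ℕ, ∑ l ∈ (Finset.Icc 1 (2 ^ (m + 1))).filter (fun l => Odd l),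
        (indicator (E (m + 1) l) (fun _ => (1:ℂ)) z.1) *
          (indicator (E (m + 1) (l + 1)) (fun _ => (1:ℂ)) z.2)) = 0 := by
      refine (tsum_congr fun m => hinner_zero m fun l hl => ?_).trans tsum_zero
      obtain ⟨ho, h1, h2, hm1, hm2⟩ := hl
      have hle2 : l + 1 ≤ 2 ^ (m + 1) := hsucc m l ho h2
      have hxy := horder (m + 1) (by omega) l (l + 1) h1 (by omega) hle2 z.1 hm1 z.2 hm2
      have heq : z.1 = z.2 := le_antisymm hxy (not_lt.mp hlt)
      exact Set.disjoint_left.mp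
        (hdisj (m + 1) (by omega) l (l + 1) h1 (by omega) hle2) hm1 (heq ▸ hm2)
    rw [hts, if_neg hlt]
end
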